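/- arXiv:2109.13569 — 6 statements merged into one kernel-verified Lean document; each statement's English description precedes it below -/
import Mathlib

section
/- Let Y be a real Hilbert space, let 𝒴 ⊆ Y be nonempty, open and convex, let L_f ∈ (0,∞), and let f : 𝒴 → ℝ be convex and continuous. Then the following are equivalent: (i) f is Gâteaux differentiable on 𝒴 and its gradient f' : 𝒴 → Y is Lipschitz continuous on 𝒴 with constant L_f; (ii) f is Gâteaux differentiable on 𝒴 and f' is 1/L_f-cocoercive, i.e. ⟨f'(y₂) − f'(y₁), y₂ − y₁⟩ ≥ (1/L_f)·‖f'(y₂) − f'(y₁)‖² for all y₁, y₂ ∈ 𝒴; (iii) the map y ↦ (L_f/2)·‖y‖² − f(y) is convex on 𝒴. -/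
open Filter Topology Metric Set
open scoped RealInnerProductSpace

/-- `f` is Gâteaux differentiable on `𝒴` with gradient `f'`. -/
def GateauxGradOn {Y : Type*} [NormedAddCommGroup Y] [InnerProductSpace ℝ Y]
    (f : Y → ℝ) (f' : Y → Y) (𝒴 : Set Y) : Prop :=
  ∀ y ∈ 𝒴, ∀ v : Y,
    Tendsto (fun t : ℝ => (f (y + t • v) - f y) / t) (𝓝[≠] 0) (𝓝 ⟪f' y, v⟫)

section Aux

variable {Y : Type*} [NormedAddCommGroup Y] [InnerProductSpace ℝ Y]
variable {𝒴 : Set Y} {f g : Y → ℝ} {f' g' : Y → Y} {Lf : ℝ}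

lemma mem_tube (h𝒴open : IsOpen 𝒴) {y : Y} (hy : y ∈ 𝒴) (v : Y) :
    ∃ τ > (0:ℝ), ∀ t : ℝ, |t| ≤ τ → y + t • v ∈ 𝒴 := by
  obtain ⟨ε, hε, hball⟩ := Metric.isOpen_iff.1 h𝒴open y hy
  refine ⟨ε / (2 * (‖v‖ + 1)), by positivity, fun t ht => ?_⟩
  apply hball
  rw [mem_ball, dist_eq_norm, add_sub_cancel_left, norm_smul, Real.norm_eq_abs]
  calc |t| * ‖v‖ ≤ ε / (2 * (‖v‖ + 1)) * ‖v‖ := by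
        apply mul_le_mul_of_nonneg_right ht (norm_nonneg v)
    _ < ε := by
        rw [div_mul_eq_mul_div, div_lt_iff₀ (by positivity)]
        nlinarith [norm_nonneg v]

lemma line_hasDerivAt (hgrad : GateauxGradOn f f' 𝒴) {y : Y} {v : Y} {t₀ : ℝ}
    (hz : y + t₀ • v ∈ 𝒴) :
    HasDerivAt (fun t : ℝ => f (y + t • v)) ⟪f' (y + t₀ • v), v⟫ t₀ := by
  rw [hasDerivAt_iff_tendsto_slope_zero]
  exact (hgrad _ hz v).congr fun t => by
    rw [smul_eq_mul, inv_mul_eq_div, add_smul, ← add_assoc]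

/-- combination identity -/
lemma combo_eq (y z : Y) (t : ℝ) : y + t • (z - y) = (1 - t) • y + t • z := by
  rw [smul_sub, sub_smul, one_smul]; abel

/-- tangent-plane inequality for a convex Gâteaux-differentiable function -/
lemma tangent_le (hgrad : GateauxGradOn f f' 𝒴) (hconv : ConvexOn ℝ 𝒴 f)
    {y z : Y} (hy : y ∈ 𝒴) (hz : z ∈ 𝒴) :
    f y + ⟪f' y, z - y⟫ ≤ f z := by
  have h := (hgrad y hy (z - y)).mono_left
    (nhdsWithin_mono 0 (fun t (ht : t ∈ Ioi 0) => ne_of_gt ht))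
  have hb : ∀ᶠ t : ℝ in 𝓝[>] 0, (f (y + t • (z - y)) - f y) / t ≤ f z - f y := by
    filter_upwards [Ioo_mem_nhdsGT_of_mem (Set.left_mem_Ico.2 zero_lt_one)] with t ht
    rw [div_le_iff₀ ht.1]
    have hcomb := hconv.2 hy hz (show (0:ℝ) ≤ 1 - t by linarith [ht.2]) ht.1.le
      (by ring : (1 - t) + t = 1)
    rw [← combo_eq] at hcomb
    simp only [smul_eq_mul] at hcomb
    nlinarith [ht.1]
  have := le_of_tendsto h hb
  linarith

/-- the Gâteaux gradient of `g = L/2 ‖·‖² - f` -/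
lemma grad_sub_quad (hgrad : GateauxGradOn f f' 𝒴) (L : ℝ) :
    GateauxGradOn (fun y => L / 2 * ‖y‖ ^ 2 - f y) (fun y => L • y - f' y) 𝒴 := by
  intro y hy v
  have hq : Tendsto (fun t : ℝ => (L / 2 * ‖y + t • v‖ ^ 2 - L / 2 * ‖y‖ ^ 2) / t)
      (𝓝[≠] 0) (𝓝 (L * ⟪y, v⟫)) := by
    have hev : ∀ᶠ t : ℝ in 𝓝[≠] 0,
        L * ⟪y, v⟫ + L / 2 * t * ‖v‖ ^ 2
          = (L / 2 * ‖y + t • v‖ ^ 2 - L / 2 * ‖y‖ ^ 2) / t := by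
      filter_upwards [self_mem_nhdsWithin] with t (ht : t ≠ 0)
      have hexp : ‖y + t • v‖ ^ 2 = ‖y‖ ^ 2 + 2 * (t * ⟪y, v⟫) + t ^ 2 * ‖v‖ ^ 2 := by
        rw [← real_inner_self_eq_norm_sq, ← real_inner_self_eq_norm_sq,
          ← real_inner_self_eq_norm_sq]
        rw [inner_add_add_self, real_inner_smul_left, real_inner_smul_right,
          real_inner_smul_left, real_inner_smul_right, real_inner_comm v y]
        ring
      rw [hexp]; field_simp; ring
    refine Tendsto.congr' hev ?_
    have hc : Continuous (fun t : ℝ => L * ⟪y, v⟫ + L / 2 * t * ‖v‖ ^ 2) := by fun_prop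
    have := hc.tendsto' 0 (L * ⟪y, v⟫) (by ring)
    exact this.mono_left nhdsWithin_le_nhds
  have := hq.sub (hgrad y hy v)
  have heq : ⟪L • y - f' y, v⟫ = L * ⟪y, v⟫ - ⟪f' y, v⟫ := by
    rw [inner_sub_left, real_inner_smul_left]
  rw [heq]
  refine this.congr fun t => ?_
  ring


/-- descent lemma, from convexity of `L/2 ‖·‖² - f` -/
lemma descent_le (hgrad : GateauxGradOn f f' 𝒴)
    (h3 : ConvexOn ℝ 𝒴 (fun y => Lf / 2 * ‖y‖ ^ 2 - f y))
    {y z : Y} (hy : y ∈ 𝒴) (hz : z ∈ 𝒴) :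
    f z ≤ f y + ⟪f' y, z - y⟫ + Lf / 2 * ‖z - y‖ ^ 2 := by
  have hg := tangent_le (grad_sub_quad hgrad Lf) h3 hy hz
  simp only [inner_sub_left, real_inner_smul_left] at hg
  have e1 : ⟪y, z - y⟫ = ⟪y, z⟫ - ‖y‖ ^ 2 := by
    rw [inner_sub_right, real_inner_self_eq_norm_sq]
  have e2 : ‖z - y‖ ^ 2 = ‖z‖ ^ 2 - 2 * ⟪y, z⟫ + ‖y‖ ^ 2 := by
    rw [norm_sub_sq_real, real_inner_comm]
    try ring
  rw [e1] at hg
  rw [e2]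
  ring_nf
  ring_nf at hg
  linarith

/-- local Lipschitz estimate -/
lemma local_lip (hgrad : GateauxGradOn f f' 𝒴) (hconv : ConvexOn ℝ 𝒴 f)
    (h3 : ConvexOn ℝ 𝒴 (fun y => Lf / 2 * ‖y‖ ^ 2 - f y)) (hLf : 0 < Lf)
    {p q : Y} (hp : p ∈ 𝒴) (hq : q ∈ 𝒴)
    (hball : closedBall q ‖p - q‖ ⊆ 𝒴) :
    ‖f' p - f' q‖ ≤ Lf * ‖p - q‖ := by
  by_cases hpq : p = q
  · subst hpq; simp
  by_cases hw0 : f' q - f' p = 0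
  · have h0 : f' p - f' q = 0 := by rw [← neg_sub, hw0, neg_zero]
    rw [h0, norm_zero]
    exact mul_nonneg hLf.le (norm_nonneg _)
  have hwn : ‖f' q - f' p‖ ≠ 0 := norm_ne_zero_iff.2 hw0
  set w := f' q - f' p with hw
  set t := ‖p - q‖ with htdef
  have ht : 0 < t := by rw [htdef, norm_pos_iff]; exact sub_ne_zero_of_ne hpq
  set u := ‖w‖⁻¹ • w with hu
  have hnu : ‖u‖ = 1 := by
    rw [hu, norm_smul, norm_inv, norm_norm, inv_mul_cancel₀ (norm_ne_zero_iff.2 hw0)]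
  set ζ := q - t • u with hζdef
  have hζq : ζ - q = -(t • u) := by rw [hζdef]; abel
  have hnζq : ‖ζ - q‖ = t := by
    rw [hζq, norm_neg, norm_smul, Real.norm_eq_abs, abs_of_pos ht, hnu, mul_one]
  have hζ : ζ ∈ 𝒴 := hball (by rw [mem_closedBall, dist_eq_norm, hnζq])
  have htan := tangent_le hgrad hconv hp hζ
  have hdes1 := descent_le hgrad h3 hq hζ
  have hdes2 := descent_le hgrad h3 hp hq
  have hsplit : ⟪f' p, ζ - p⟫ = ⟪f' p, ζ - q⟫ + ⟪f' p, q - p⟫ := by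
    rw [← inner_add_right]; congr 1; abel
  have hkey : ⟪f' p - f' q, ζ - q⟫ ≤ Lf / 2 * ‖ζ - q‖ ^ 2 + Lf / 2 * ‖q - p‖ ^ 2 := by
    rw [inner_sub_left]
    rw [hsplit] at htan
    linarith
  have hlhs : ⟪f' p - f' q, ζ - q⟫ = t * ‖w‖ := by
    have : f' p - f' q = -w := by rw [hw]; abel
    rw [this, hζq, inner_neg_neg, real_inner_smul_right, hu, real_inner_smul_right,
      real_inner_self_eq_norm_sq, sq]
    try field_simp
  have hqp : ‖q - p‖ = t := by rw [htdef, norm_sub_rev]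
  rw [hlhs, hnζq, hqp] at hkey
  have hwle : ‖w‖ ≤ Lf * t := by
    have h2 : t * ‖w‖ ≤ Lf * t ^ 2 := by nlinarith
    nlinarith
  calc ‖f' p - f' q‖ = ‖w‖ := by rw [hw, norm_sub_rev]
    _ ≤ Lf * t := hwle

/-- local interpolation estimate (needs global Lipschitz bound) -/
lemma local_interp (hgrad : GateauxGradOn f f' 𝒴) (hconv : ConvexOn ℝ 𝒴 f)
    (h3 : ConvexOn ℝ 𝒴 (fun y => Lf / 2 * ‖y‖ ^ 2 - f y)) (hLf : 0 < Lf)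
    (hLip : ∀ y₁ ∈ 𝒴, ∀ y₂ ∈ 𝒴, ‖f' y₂ - f' y₁‖ ≤ Lf * ‖y₂ - y₁‖)
    {p q : Y} (hp : p ∈ 𝒴) (hq : q ∈ 𝒴)
    (hball : closedBall q ‖p - q‖ ⊆ 𝒴) :
    ‖f' q - f' p‖ ^ 2 / (2 * Lf) ≤ f q - f p - ⟪f' p, q - p⟫ := by
  set w := f' q - f' p with hw
  set ζ := q - Lf⁻¹ • w with hζdef
  have hζq : ζ - q = -(Lf⁻¹ • w) := by rw [hζdef]; abel
  have hnζq : ‖ζ - q‖ = ‖w‖ / Lf := by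
    rw [hζq, norm_neg, norm_smul, norm_inv, Real.norm_eq_abs, abs_of_pos hLf,
      inv_mul_eq_div]
  have hζ : ζ ∈ 𝒴 := by
    apply hball
    rw [mem_closedBall, dist_eq_norm, hnζq, div_le_iff₀ hLf]
    calc ‖w‖ ≤ Lf * ‖q - p‖ := hLip p hp q hq
      _ = Lf * ‖p - q‖ := by rw [norm_sub_rev]
      _ = ‖p - q‖ * Lf := by ring
  have htan := tangent_le hgrad hconv hp hζ
  have hdes := descent_le hgrad h3 hq hζ
  have hsplit : ⟪f' p, ζ - p⟫ = ⟪f' p, ζ - q⟫ + ⟪f' p, q - p⟫ := by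
    rw [← inner_add_right]; congr 1; abel
  have hkey : ⟪f' q - f' p, ζ - q⟫ + Lf / 2 * ‖ζ - q‖ ^ 2 ≥ ⟪f' p, q - p⟫ - (f q - f p) := by
    rw [inner_sub_left]
    rw [hsplit] at htan
    linarith
  have hlhs : ⟪f' q - f' p, ζ - q⟫ = -(‖w‖ ^ 2 / Lf) := by
    rw [← hw, hζq, inner_neg_right, real_inner_smul_right, real_inner_self_eq_norm_sq]
    field_simp
  rw [hlhs, hnζq] at hkey
  have hLf2 : Lf / 2 * (‖w‖ / Lf) ^ 2 = ‖w‖ ^ 2 / (2 * Lf) := by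
    field_simp
  rw [hLf2] at hkey
  have : -(‖w‖ ^ 2 / Lf) + ‖w‖ ^ 2 / (2 * Lf) = -(‖w‖ ^ 2 / (2 * Lf)) := by
    field_simp
    try ring
  linarith [hkey, this.symm.le]

/-- uniform closed-ball tube around a segment inside an open convex set -/
lemma segment_tube (h𝒴open : IsOpen 𝒴) (h𝒴cvx : Convex ℝ 𝒴) {x y : Y}
    (hx : x ∈ 𝒴) (hy : y ∈ 𝒴) :
    ∃ ρ > (0:ℝ), ∀ t ∈ Icc (0:ℝ) 1, closedBall (y + t • (x - y)) ρ ⊆ 𝒴 := by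
  set K := (fun t : ℝ => y + t • (x - y)) '' Icc 0 1 with hK
  have hKcomp : IsCompact K := isCompact_Icc.image (by fun_prop)
  have hK𝒴 : K ⊆ 𝒴 := by
    rintro - ⟨t, ht, rfl⟩
    simp only
    rw [combo_eq]
    exact h𝒴cvx hy hx (by linarith [ht.2]) ht.1 (by ring)
  obtain ⟨ρ, hρ, hsub⟩ := hKcomp.exists_cthickening_subset_open h𝒴open hK𝒴
  exact ⟨ρ, hρ, fun t ht =>
    (closedBall_subset_cthickening (Set.mem_image_of_mem _ ht) ρ).trans hsub⟩

/-- global Lipschitz bound for the gradient, given convexity of `f` and of `L/2‖·‖²-f` -/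
lemma global_lip (h𝒴open : IsOpen 𝒴) (h𝒴cvx : Convex ℝ 𝒴)
    (hgrad : GateauxGradOn f f' 𝒴) (hconv : ConvexOn ℝ 𝒴 f)
    (h3 : ConvexOn ℝ 𝒴 (fun y => Lf / 2 * ‖y‖ ^ 2 - f y)) (hLf : 0 < Lf) :
    ∀ y₁ ∈ 𝒴, ∀ y₂ ∈ 𝒴, ‖f' y₂ - f' y₁‖ ≤ Lf * ‖y₂ - y₁‖ := by
  intro y hy x hx
  obtain ⟨ρ, hρ, htube⟩ := segment_tube h𝒴open h𝒴cvx hx hy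
  obtain ⟨n, hn1, hnρ⟩ : ∃ n : ℕ, 0 < n ∧ ‖x - y‖ / n ≤ ρ := by
    refine ⟨max 1 ⌈‖x - y‖ / ρ⌉₊, lt_of_lt_of_le one_pos (le_max_left _ _), ?_⟩
    rw [div_le_iff₀ (by positivity : (0:ℝ) < (max 1 ⌈‖x - y‖ / ρ⌉₊ : ℕ))]
    calc ‖x - y‖ = (‖x - y‖ / ρ) * ρ := by field_simp
      _ ≤ (⌈‖x - y‖ / ρ⌉₊ : ℝ) * ρ := by
          apply mul_le_mul_of_nonneg_right (Nat.le_ceil _) hρ.le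
      _ ≤ ((max 1 ⌈‖x - y‖ / ρ⌉₊ : ℕ) : ℝ) * ρ := by
          apply mul_le_mul_of_nonneg_right _ hρ.le
          exact_mod_cast Nat.le_max_right 1 _
      _ = ρ * ((max 1 ⌈‖x - y‖ / ρ⌉₊ : ℕ) : ℝ) := by ring
  set z : ℕ → Y := fun i => y + ((i : ℝ) / n) • (x - y) with hz
  have hnR : (0:ℝ) < n := by exact_mod_cast hn1
  have hzmem : ∀ i : ℕ, i ≤ n → (i : ℝ) / n ∈ Icc (0:ℝ) 1 := by
    intro i hi
    constructor
    · positivity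
    · rw [div_le_one hnR]; exact_mod_cast hi
  have hz𝒴 : ∀ i : ℕ, i ≤ n → z i ∈ 𝒴 := fun i hi =>
    htube _ (hzmem i hi) (mem_closedBall_self hρ.le)
  have hstep : ∀ i : ℕ, z (i + 1) - z i = ((1:ℝ) / n) • (x - y) := by
    intro i
    rw [hz]
    simp only
    rw [add_sub_add_left_eq_sub, ← sub_smul]
    congr 1
    push_cast
    field_simp
    ring
  have hstepnorm : ∀ i : ℕ, ‖z (i + 1) - z i‖ = ‖x - y‖ / n := by
    intro i
    rw [hstep i, norm_smul, Real.norm_eq_abs, abs_of_pos (by positivity), one_div,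
      inv_mul_eq_div]
  have hloc : ∀ i : ℕ, i < n → ‖f' (z (i + 1)) - f' (z i)‖ ≤ Lf * (‖x - y‖ / n) := by
    intro i hi
    have h1 : z i ∈ 𝒴 := hz𝒴 i hi.le
    have h2 : z (i + 1) ∈ 𝒴 := hz𝒴 (i + 1) hi
    have hball : closedBall (z i) ‖z (i + 1) - z i‖ ⊆ 𝒴 := by
      refine (closedBall_subset_closedBall ?_).trans (htube _ (hzmem i hi.le))
      rw [hstepnorm i]; exact hnρ
    have := local_lip hgrad hconv h3 hLf h2 h1 hball
    rw [hstepnorm i] at this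
    exact this
  have htel : f' x - f' y = ∑ i ∈ Finset.range n, (f' (z (i + 1)) - f' (z i)) := by
    rw [Finset.sum_range_sub (fun i => f' (z i))]
    have e1 : z n = x := by
      rw [hz]; simp only
      rw [div_self hnR.ne', one_smul]; abel
    have e2 : z 0 = y := by
      rw [hz]; simp
    rw [e1, e2]
  calc ‖f' x - f' y‖ = ‖∑ i ∈ Finset.range n, (f' (z (i + 1)) - f' (z i))‖ := by rw [htel]
    _ ≤ ∑ i ∈ Finset.range n, ‖f' (z (i + 1)) - f' (z i)‖ := norm_sum_le _ _
    _ ≤ ∑ _i ∈ Finset.range n, Lf * (‖x - y‖ / n) := by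
        apply Finset.sum_le_sum
        intro i hi
        exact hloc i (Finset.mem_range.1 hi)
    _ = n * (Lf * (‖x - y‖ / n)) := by rw [Finset.sum_const, Finset.card_range]; ring
    _ = Lf * ‖x - y‖ := by field_simp

/-- global cocoercivity, given convexity of `f` and of `L/2‖·‖²-f` and Lipschitz gradient -/
lemma global_coco (h𝒴open : IsOpen 𝒴) (h𝒴cvx : Convex ℝ 𝒴)
    (hgrad : GateauxGradOn f f' 𝒴) (hconv : ConvexOn ℝ 𝒴 f)
    (h3 : ConvexOn ℝ 𝒴 (fun y => Lf / 2 * ‖y‖ ^ 2 - f y)) (hLf : 0 < Lf)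
    (hLip : ∀ y₁ ∈ 𝒴, ∀ y₂ ∈ 𝒴, ‖f' y₂ - f' y₁‖ ≤ Lf * ‖y₂ - y₁‖) :
    ∀ y₁ ∈ 𝒴, ∀ y₂ ∈ 𝒴,
      (1 / Lf) * ‖f' y₂ - f' y₁‖ ^ 2 ≤ ⟪f' y₂ - f' y₁, y₂ - y₁⟫ := by
  intro y hy x hx
  by_cases ha0 : f' x - f' y = 0
  · rw [ha0]; simp
  set a := f' x - f' y with hadef
  have hapos : (0:ℝ) < ‖a‖ := norm_pos_iff.2 ha0
  obtain ⟨ρ, hρ, htube⟩ := segment_tube h𝒴open h𝒴cvx hx hy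
  obtain ⟨n, hn1, hnρ⟩ : ∃ n : ℕ, 0 < n ∧ ‖x - y‖ / n ≤ ρ := by
    refine ⟨max 1 ⌈‖x - y‖ / ρ⌉₊, lt_of_lt_of_le one_pos (le_max_left _ _), ?_⟩
    rw [div_le_iff₀ (by positivity : (0:ℝ) < (max 1 ⌈‖x - y‖ / ρ⌉₊ : ℕ))]
    calc ‖x - y‖ = (‖x - y‖ / ρ) * ρ := by field_simp
      _ ≤ (⌈‖x - y‖ / ρ⌉₊ : ℝ) * ρ := by
          apply mul_le_mul_of_nonneg_right (Nat.le_ceil _) hρ.le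
      _ ≤ ((max 1 ⌈‖x - y‖ / ρ⌉₊ : ℕ) : ℝ) * ρ := by
          apply mul_le_mul_of_nonneg_right _ hρ.le
          exact_mod_cast Nat.le_max_right 1 _
      _ = ρ * ((max 1 ⌈‖x - y‖ / ρ⌉₊ : ℕ) : ℝ) := by ring
  set z : ℕ → Y := fun i => y + ((i : ℝ) / n) • (x - y) with hz
  have hnR : (0:ℝ) < n := by exact_mod_cast hn1
  have hzmem : ∀ i : ℕ, i ≤ n → (i : ℝ) / n ∈ Icc (0:ℝ) 1 := by
    intro i hi
    constructor
    · positivity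
    · rw [div_le_one hnR]; exact_mod_cast hi
  have hz𝒴 : ∀ i : ℕ, i ≤ n → z i ∈ 𝒴 := fun i hi =>
    htube _ (hzmem i hi) (mem_closedBall_self hρ.le)
  have hstep : ∀ i : ℕ, z (i + 1) - z i = ((1:ℝ) / n) • (x - y) := by
    intro i
    rw [hz]
    simp only
    rw [add_sub_add_left_eq_sub, ← sub_smul]
    congr 1
    push_cast
    field_simp
    ring
  have hstepnorm : ∀ i : ℕ, ‖z (i + 1) - z i‖ = ‖x - y‖ / n := by
    intro i
    rw [hstep i, norm_smul, Real.norm_eq_abs, abs_of_pos (by positivity), one_div,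
      inv_mul_eq_div]
  set D : ℕ → Y := fun i => f' (z (i + 1)) - f' (z i) with hD
  set c : ℕ → ℝ := fun i => ⟪D i, z (i + 1) - z i⟫ with hc
  -- local cocoercivity
  have hlocco : ∀ i : ℕ, i < n → ‖D i‖ ^ 2 ≤ Lf * c i := by
    intro i hi
    have h1 : z i ∈ 𝒴 := hz𝒴 i hi.le
    have h2 : z (i + 1) ∈ 𝒴 := hz𝒴 (i + 1) hi
    have hball1 : closedBall (z (i + 1)) ‖z i - z (i + 1)‖ ⊆ 𝒴 := by
      refine (closedBall_subset_closedBall ?_).trans (htube _ (hzmem (i + 1) hi))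
      rw [norm_sub_rev, hstepnorm i]; exact hnρ
    have hball2 : closedBall (z i) ‖z (i + 1) - z i‖ ⊆ 𝒴 := by
      refine (closedBall_subset_closedBall ?_).trans (htube _ (hzmem i hi.le))
      rw [hstepnorm i]; exact hnρ
    have hq1 := local_interp hgrad hconv h3 hLf hLip h1 h2 hball1
    have hq2 := local_interp hgrad hconv h3 hLf hLip h2 h1 hball2
    simp only [hD, hc]
    have hD2 : ‖f' (z i) - f' (z (i + 1))‖ = ‖f' (z (i + 1)) - f' (z i)‖ := norm_sub_rev _ _
    rw [hD2] at hq2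
    have hD3 : ⟪f' (z (i + 1)), z i - z (i + 1)⟫ = - ⟪f' (z (i + 1)), z (i + 1) - z i⟫ := by
      rw [← inner_neg_right]; congr 1; abel
    rw [hD3] at hq2
    have hci : ⟪f' (z (i + 1)) - f' (z i), z (i + 1) - z i⟫
        = ⟪f' (z (i + 1)), z (i + 1) - z i⟫ - ⟪f' (z i), z (i + 1) - z i⟫ :=
      inner_sub_left _ _ _
    rw [hci]
    set A := ‖f' (z (i + 1)) - f' (z i)‖ ^ 2 with hA
    have hsum : A / (2 * Lf) + A / (2 * Lf) ≤
        ⟪f' (z (i + 1)), z (i + 1) - z i⟫ - ⟪f' (z i), z (i + 1) - z i⟫ := by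
      linarith
    have h2' : A / (2 * Lf) + A / (2 * Lf) = A / Lf := by
      field_simp
      ring
    rw [h2', div_le_iff₀ hLf] at hsum
    linarith
  have hcnn : ∀ i : ℕ, i < n → 0 ≤ c i := by
    intro i hi
    have := hlocco i hi
    nlinarith [sq_nonneg ‖D i‖]
  -- telescoping
  have htel : a = ∑ i ∈ Finset.range n, D i := by
    rw [hD, Finset.sum_range_sub (fun i => f' (z i)), hadef]
    have e1 : z n = x := by
      rw [hz]; simp only
      rw [div_self hnR.ne', one_smul]; abel
    have e2 : z 0 = y := by rw [hz]; simp
    rw [e1, e2]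
  have hsumc : ∑ i ∈ Finset.range n, c i = (1 / n) * ⟪a, x - y⟫ := by
    have hstep2 : ∀ i ∈ Finset.range n, c i = ⟪D i, ((1:ℝ) / n) • (x - y)⟫ := by
      intro i _
      simp only [hc, hstep i]
    rw [Finset.sum_congr rfl hstep2, ← sum_inner, ← htel, real_inner_smul_right]
  -- Cauchy–Schwarz style summation
  have hbound : ‖a‖ ^ 2 ≤ ‖a‖ * ∑ i ∈ Finset.range n, Real.sqrt (Lf * c i) := by
    have h1 : (‖a‖ : ℝ) ^ 2 = ∑ i ∈ Finset.range n, ⟪D i, a⟫ := by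
      rw [← sum_inner, ← htel]
      exact (real_inner_self_eq_norm_sq a).symm
    rw [h1]
    calc ∑ i ∈ Finset.range n, ⟪D i, a⟫
        ≤ ∑ i ∈ Finset.range n, Real.sqrt (Lf * c i) * ‖a‖ := by
          apply Finset.sum_le_sum
          intro i hi
          have hi' := Finset.mem_range.1 hi
          calc ⟪D i, a⟫ ≤ ‖D i‖ * ‖a‖ := real_inner_le_norm _ _
            _ ≤ Real.sqrt (Lf * c i) * ‖a‖ := by
                apply mul_le_mul_of_nonneg_right _ (norm_nonneg a)
                rw [show ‖D i‖ = Real.sqrt (‖D i‖ ^ 2) by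
                  rw [Real.sqrt_sq (norm_nonneg _)]]
                exact Real.sqrt_le_sqrt (hlocco i hi')
      _ = ‖a‖ * ∑ i ∈ Finset.range n, Real.sqrt (Lf * c i) := by
          rw [← Finset.sum_mul]; ring
  have hS : (∑ i ∈ Finset.range n, Real.sqrt (Lf * c i)) ^ 2 ≤ Lf * ⟪a, x - y⟫ := by
    calc (∑ i ∈ Finset.range n, Real.sqrt (Lf * c i)) ^ 2
        ≤ (Finset.range n).card * ∑ i ∈ Finset.range n, Real.sqrt (Lf * c i) ^ 2 :=
          sq_sum_le_card_mul_sum_sq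
      _ = n * ∑ i ∈ Finset.range n, Real.sqrt (Lf * c i) ^ 2 := by
          rw [Finset.card_range]
      _ = n * ∑ i ∈ Finset.range n, Lf * c i := by
          congr 1
          apply Finset.sum_congr rfl
          intro i hi
          rw [Real.sq_sqrt (mul_nonneg hLf.le (hcnn i (Finset.mem_range.1 hi)))]
      _ = n * (Lf * ((1 / n) * ⟪a, x - y⟫)) := by
          rw [← Finset.mul_sum, hsumc]
      _ = Lf * ⟪a, x - y⟫ := by field_simp
  have hSnn : 0 ≤ ∑ i ∈ Finset.range n, Real.sqrt (Lf * c i) :=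
    Finset.sum_nonneg fun i _ => Real.sqrt_nonneg _
  -- combine
  have h4 : ‖a‖ ^ 4 ≤ ‖a‖ ^ 2 * (Lf * ⟪a, x - y⟫) := by
    nlinarith [hbound, hS, hSnn, sq_nonneg ‖a‖]
  have h5 : ‖a‖ ^ 2 ≤ Lf * ⟪a, x - y⟫ := by
    nlinarith [hapos]
  rw [one_div]
  rw [inv_mul_le_iff₀ hLf]
  linarith

lemma quad_line_hasDerivAt (Lf : ℝ) (x v : Y) (t₀ : ℝ) :
    HasDerivAt (fun t : ℝ => Lf / 2 * ‖x + t • v‖ ^ 2) (Lf * ⟪x + t₀ • v, v⟫) t₀ := by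
  have hline : HasDerivAt (fun t : ℝ => x + t • v) v t₀ := by
    simpa using ((hasDerivAt_id t₀).smul_const v).const_add x
  have hinner := (hline.inner ℝ hline).const_mul (Lf / 2)
  have hfun : (fun t : ℝ => Lf / 2 * ‖x + t • v‖ ^ 2)
      = fun t : ℝ => Lf / 2 * ⟪x + t • v, x + t • v⟫ := by
    funext t; rw [real_inner_self_eq_norm_sq]
  rw [hfun]
  refine hinner.congr_deriv ?_
  rw [real_inner_comm v (x + t₀ • v)]
  ring

/-- (i) ⇒ (iii): Lipschitz gradient gives convexity of `L/2‖·‖² - f`. -/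
lemma lip_convex (h𝒴cvx : Convex ℝ 𝒴)
    (hgrad : GateauxGradOn f f' 𝒴) (hcont : ContinuousOn f 𝒴) (hLf : 0 < Lf)
    (hLip : ∀ y₁ ∈ 𝒴, ∀ y₂ ∈ 𝒴, ‖f' y₂ - f' y₁‖ ≤ Lf * ‖y₂ - y₁‖) :
    ConvexOn ℝ 𝒴 (fun y => Lf / 2 * ‖y‖ ^ 2 - f y) := by
  refine ⟨h𝒴cvx, ?_⟩
  intro x hx w hw aa bb ha hb hab
  set v := w - x with hv
  set φ : ℝ → ℝ := fun t => Lf / 2 * ‖x + t • v‖ ^ 2 - f (x + t • v) with hφ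
  have hmem : ∀ t ∈ Icc (0:ℝ) 1, x + t • v ∈ 𝒴 := by
    intro t ht
    rw [hv, combo_eq]
    exact h𝒴cvx hx hw (by linarith [ht.2]) ht.1 (by ring)
  have hD : ∀ t ∈ Icc (0:ℝ) 1,
      HasDerivAt φ (Lf * ⟪x + t • v, v⟫ - ⟪f' (x + t • v), v⟫) t := by
    intro t ht
    exact (quad_line_hasDerivAt Lf x v t).sub (line_hasDerivAt hgrad (hmem t ht))
  have hcontφ : ContinuousOn φ (Icc (0:ℝ) 1) := by
    apply ContinuousOn.sub
    · fun_prop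
    · exact hcont.comp (by fun_prop) hmem
  have hdiff : DifferentiableOn ℝ φ (interior (Icc (0:ℝ) 1)) := by
    rw [interior_Icc]
    intro t ht
    exact ((hD t (Ioo_subset_Icc_self ht)).differentiableAt).differentiableWithinAt
  have hmono : MonotoneOn (deriv φ) (interior (Icc (0:ℝ) 1)) := by
    rw [interior_Icc]
    intro s hs t ht hst
    rw [(hD s (Ioo_subset_Icc_self hs)).deriv, (hD t (Ioo_subset_Icc_self ht)).deriv]
    have hms : x + s • v ∈ 𝒴 := hmem s (Ioo_subset_Icc_self hs)
    have hmt : x + t • v ∈ 𝒴 := hmem t (Ioo_subset_Icc_self ht)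
    have hlip := hLip _ hms _ hmt
    have hd : (x + t • v) - (x + s • v) = (t - s) • v := by
      rw [add_sub_add_left_eq_sub, ← sub_smul]
    rw [hd, norm_smul, Real.norm_eq_abs, abs_of_nonneg (by linarith : (0:ℝ) ≤ t - s)] at hlip
    have hinner : ⟪f' (x + t • v) - f' (x + s • v), v⟫ ≤ Lf * ((t - s) * ‖v‖) * ‖v‖ := by
      calc ⟪f' (x + t • v) - f' (x + s • v), v⟫
          ≤ ‖f' (x + t • v) - f' (x + s • v)‖ * ‖v‖ := real_inner_le_norm _ _
        _ ≤ Lf * ((t - s) * ‖v‖) * ‖v‖ := mul_le_mul_of_nonneg_right hlip (norm_nonneg v)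
    rw [inner_sub_left] at hinner
    have hq : Lf * ⟪x + t • v, v⟫ - Lf * ⟪x + s • v, v⟫ = Lf * ((t - s) * ‖v‖ ^ 2) := by
      rw [← mul_sub]
      congr 1
      rw [← inner_sub_left, add_sub_add_left_eq_sub, ← sub_smul, real_inner_smul_left,
        real_inner_self_eq_norm_sq]
    nlinarith [hinner, hq]
  have hφconv : ConvexOn ℝ (Icc (0:ℝ) 1) φ :=
    hmono.convexOn_of_deriv (convex_Icc 0 1) hcontφ hdiff
  have h01 : (0:ℝ) ∈ Icc (0:ℝ) 1 := by constructor <;> norm_num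
  have h11 : (1:ℝ) ∈ Icc (0:ℝ) 1 := by constructor <;> norm_num
  have := hφconv.2 h01 h11 ha hb hab
  simp only [smul_eq_mul, mul_zero, mul_one, zero_add] at this
  have hφbb : φ bb = Lf / 2 * ‖aa • x + bb • w‖ ^ 2 - f (aa • x + bb • w) := by
    rw [hφ]
    simp only
    rw [hv, combo_eq]
    have : 1 - bb = aa := by linarith
    rw [this]
  have hφ0 : φ 0 = Lf / 2 * ‖x‖ ^ 2 - f x := by
    rw [hφ]; simp
  have hφ1 : φ 1 = Lf / 2 * ‖w‖ ^ 2 - f w := by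
    rw [hφ]; simp only [one_smul, hv]
    rw [show x + (w - x) = w by abel]
  rw [hφbb, hφ0, hφ1] at this
  simpa using this

/-- slope monotonicity for convex functions along a line -/
lemma slope_mono {u : Y → ℝ} (hu : ConvexOn ℝ 𝒴 u) (y : Y) (v : Y) {τ : ℝ}
    (hmem : ∀ t : ℝ, |t| ≤ τ → y + t • v ∈ 𝒴)
    {t₁ t₂ : ℝ} (h1 : |t₁| ≤ τ) (h2 : |t₂| ≤ τ) (h1n : t₁ ≠ 0) (h2n : t₂ ≠ 0)
    (h12 : t₁ ≤ t₂) :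
    (u (y + t₁ • v) - u y) / t₁ ≤ (u (y + t₂ • v) - u y) / t₂ := by
  set A : ℝ →ᵃ[ℝ] Y := AffineMap.lineMap y (y + v) with hAdef
  have hA : ∀ t : ℝ, A t = y + t • v := by
    intro t
    rw [hAdef, AffineMap.lineMap_apply]
    simp [vsub_eq_sub, vadd_eq_add]
    abel
  have hτ0 : 0 ≤ τ := le_trans (abs_nonneg t₁) h1
  have hφ2 : ConvexOn ℝ (Icc (-τ) τ) (u ∘ A) :=
    (hu.comp_affineMap A).subset
      (fun t ht => by rw [mem_preimage, hA]; exact hmem t (abs_le.2 ht))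
      (convex_Icc _ _)
  have h0m : (0:ℝ) ∈ Icc (-τ) τ := by constructor <;> linarith
  have h1m : t₁ ∈ Icc (-τ) τ := abs_le.1 h1
  have h2m : t₂ ∈ Icc (-τ) τ := abs_le.1 h2
  have := hφ2.secant_mono h0m h1m h2m h1n h2n h12
  simpa [Function.comp, hA, zero_smul] using this

/-- existence of the right-sided limit of slopes for a convex function -/
lemma exists_rlim {u : Y → ℝ} (h𝒴open : IsOpen 𝒴) (hu : ConvexOn ℝ 𝒴 u)
    {y : Y} (hy : y ∈ 𝒴) (v : Y) :
    ∃ B : ℝ, Tendsto (fun t : ℝ => (u (y + t • v) - u y) / t) (𝓝[>] 0) (𝓝 B) := by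
  obtain ⟨τ, hτ, hmem⟩ := mem_tube h𝒴open hy v
  set S : ℝ → ℝ := fun t => (u (y + t • v) - u y) / t with hS
  have habs : ∀ t : ℝ, t ∈ Ioo (0:ℝ) τ → |t| ≤ τ := fun t ht => by
    rw [abs_of_pos ht.1]; exact ht.2.le
  have hmono : MonotoneOn S (Ioo 0 τ) := by
    intro t₁ h₁ t₂ h₂ h12
    exact slope_mono hu y v hmem (habs t₁ h₁) (habs t₂ h₂) h₁.1.ne' h₂.1.ne' h12
  have hbdd : BddBelow (S '' Ioo 0 τ) := by
    refine ⟨S (-τ), ?_⟩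
    rintro - ⟨t, ht, rfl⟩
    apply slope_mono hu y v hmem _ (habs t ht) (by simpa using hτ.ne') ht.1.ne'
      (by linarith [ht.1])
    rw [abs_neg, abs_of_pos hτ]
  exact ⟨_, MonotoneOn.tendsto_nhdsWithin_Ioo_right
    ⟨τ/2, by constructor <;> linarith⟩ hmono hbdd⟩

/-- the quadratic slope limit -/
lemma quad_slope_tendsto (L : ℝ) (y v : Y) :
    Tendsto (fun t : ℝ => (L / 2 * ‖y + t • v‖ ^ 2 - L / 2 * ‖y‖ ^ 2) / t)
      (𝓝[≠] 0) (𝓝 (L * ⟪y, v⟫)) := by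
  have hev : ∀ᶠ t : ℝ in 𝓝[≠] 0,
      L * ⟪y, v⟫ + L / 2 * t * ‖v‖ ^ 2
        = (L / 2 * ‖y + t • v‖ ^ 2 - L / 2 * ‖y‖ ^ 2) / t := by
    filter_upwards [self_mem_nhdsWithin] with t (ht : t ≠ 0)
    have hexp : ‖y + t • v‖ ^ 2 = ‖y‖ ^ 2 + 2 * (t * ⟪y, v⟫) + t ^ 2 * ‖v‖ ^ 2 := by
      rw [← real_inner_self_eq_norm_sq, ← real_inner_self_eq_norm_sq,
        ← real_inner_self_eq_norm_sq]
      rw [inner_add_add_self, real_inner_smul_left, real_inner_smul_right,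
        real_inner_smul_left, real_inner_smul_right, real_inner_comm v y]
      ring
    rw [hexp]; field_simp; ring
  refine Tendsto.congr' hev ?_
  have hc : Continuous (fun t : ℝ => L * ⟪y, v⟫ + L / 2 * t * ‖v‖ ^ 2) := by fun_prop
  exact (hc.tendsto' 0 (L * ⟪y, v⟫) (by ring)).mono_left nhdsWithin_le_nhds

/-- Existence of the Gâteaux gradient from convexity of `f` and of `L/2‖·‖²-f`. -/
lemma exists_gradient [CompleteSpace Y] (h𝒴open : IsOpen 𝒴)
    (hconv : ConvexOn ℝ 𝒴 f) (hcont : ContinuousOn f 𝒴) (hLf : 0 < Lf)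
    (h3 : ConvexOn ℝ 𝒴 (fun w => Lf / 2 * ‖w‖ ^ 2 - f w)) :
    ∃ f' : Y → Y, GateauxGradOn f f' 𝒴 := by
  classical
  have hmain : ∀ y ∈ 𝒴, ∃ z : Y, ∀ v : Y,
      Tendsto (fun t : ℝ => (f (y + t • v) - f y) / t) (𝓝[≠] 0) (𝓝 ⟪z, v⟫) := by
    intro y hy
    set g : Y → ℝ := fun w => Lf / 2 * ‖w‖ ^ 2 - f w with hg
    choose Bf hBf using fun v => exists_rlim h𝒴open hconv hy v
    choose Bg hBg using fun v => exists_rlim h𝒴open h3 hy v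
    have hin : 𝓝[>] (0:ℝ) ≤ 𝓝[≠] (0:ℝ) :=
      nhdsWithin_mono 0 (fun t (ht : t ∈ Ioi 0) => ne_of_gt ht)
    -- F1 : Bf v + Bg v = Lf ⟪y, v⟫
    have hfg : ∀ v : Y, Bf v + Bg v = Lf * ⟪y, v⟫ := by
      intro v
      have h1 := (hBf v).add (hBg v)
      have h2 : (fun t : ℝ => (f (y + t • v) - f y) / t + (g (y + t • v) - g y) / t)
          = fun t : ℝ => (Lf / 2 * ‖y + t • v‖ ^ 2 - Lf / 2 * ‖y‖ ^ 2) / t := by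
        funext t
        rw [← add_div]
        congr 1
        simp only [hg]
        ring
      rw [h2] at h1
      exact tendsto_nhds_unique h1 ((quad_slope_tendsto Lf y v).mono_left hin)
    -- F2 : for convex u, Bu v + Bu (-v) ≥ 0
    have key : ∀ u : Y → ℝ, ConvexOn ℝ 𝒴 u → ∀ Bu : Y → ℝ,
        (∀ v : Y, Tendsto (fun t : ℝ => (u (y + t • v) - u y) / t) (𝓝[>] 0) (𝓝 (Bu v))) →
        ∀ v : Y, 0 ≤ Bu v + Bu (-v) := by
      intro u hu Bu hBu v
      obtain ⟨τ, hτ, hmem⟩ := mem_tube h𝒴open hy v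
      have hev : ∀ᶠ t : ℝ in 𝓝[>] 0,
          0 ≤ (u (y + t • v) - u y) / t + (u (y + t • (-v)) - u y) / t := by
        filter_upwards [Ioo_mem_nhdsGT_of_mem (Set.left_mem_Ico.2 hτ)] with t ht
        have h1 : (u (y + (-t) • v) - u y) / (-t) ≤ (u (y + t • v) - u y) / t := by
          apply slope_mono hu y v hmem _ _ (neg_ne_zero.2 ht.1.ne') ht.1.ne' (by linarith [ht.1])
          · rw [abs_neg, abs_of_pos ht.1]; exact ht.2.le
          · rw [abs_of_pos ht.1]; exact ht.2.le
        have h2 : (u (y + t • (-v)) - u y) / t = -((u (y + (-t) • v) - u y) / (-t)) := by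
          rw [smul_neg, ← neg_smul, div_neg, neg_neg]
        rw [h2]
        linarith
      exact ge_of_tendsto ((hBu v).add (hBu (-v))) hev
    -- F3 : Bf is odd
    have hodd : ∀ v : Y, Bf (-v) = -(Bf v) := by
      intro v
      have h1 := key f hconv Bf hBf v
      have h2 := key g h3 Bg hBg v
      have e1 := hfg v
      have e2 := hfg (-v)
      have e3 : Lf * ⟪y, -v⟫ = -(Lf * ⟪y, v⟫) := by rw [inner_neg_right]; ring
      linarith
    -- F4 : two-sided limit
    have htwo : ∀ v : Y, Tendsto (fun t : ℝ => (f (y + t • v) - f y) / t)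
        (𝓝[≠] 0) (𝓝 (Bf v)) := by
      intro v
      have hneg : Tendsto (fun t : ℝ => -t) (𝓝[<] (0:ℝ)) (𝓝[>] (0:ℝ)) := by
        apply tendsto_nhdsWithin_of_tendsto_nhds_of_eventually_within
        · have := continuous_neg.tendsto (0:ℝ)
          rw [neg_zero] at this
          exact this.mono_left nhdsWithin_le_nhds
        · filter_upwards [self_mem_nhdsWithin] with t (ht : t < 0)
          exact mem_Ioi.2 (neg_pos.2 ht)
      have hleft : Tendsto (fun t : ℝ => (f (y + t • v) - f y) / t)
          (𝓝[<] 0) (𝓝 (Bf v)) := by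
        have hcomp := ((hBf (-v)).comp hneg).neg
        rw [hodd v, neg_neg] at hcomp
        refine hcomp.congr fun t => ?_
        show -((f (y + (-t) • (-v)) - f y) / (-t)) = _
        rw [neg_smul, smul_neg, neg_neg, div_neg, neg_neg]
      have hcompl : (𝓝[≠] (0:ℝ)) = (𝓝[<] (0:ℝ)) ⊔ (𝓝[>] (0:ℝ)) := by
        rw [← nhdsWithin_union, Iio_union_Ioi]
      rw [hcompl]
      exact tendsto_sup.2 ⟨hleft, hBf v⟩
    -- F6 : homogeneity
    have hzero : Bf 0 = 0 := by
      refine tendsto_nhds_unique (hBf 0) ?_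
      have : (fun t : ℝ => (f (y + t • (0:Y)) - f y) / t) = fun _ : ℝ => (0:ℝ) := by
        funext t; rw [smul_zero, add_zero, sub_self, zero_div]
      rw [this]
      exact tendsto_const_nhds
    have hsmul : ∀ (c : ℝ) (v : Y), Bf (c • v) = c * Bf v := by
      intro c v
      rcases eq_or_ne c 0 with rfl | hc
      · rw [zero_smul, hzero, zero_mul]
      · have hmap : Tendsto (fun t : ℝ => c * t) (𝓝[≠] (0:ℝ)) (𝓝[≠] (0:ℝ)) := by
          apply tendsto_nhdsWithin_of_tendsto_nhds_of_eventually_within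
          · have hcm : Continuous (fun t : ℝ => c * t) := by fun_prop
            have := hcm.tendsto (0:ℝ)
            rw [mul_zero] at this
            exact this.mono_left nhdsWithin_le_nhds
          · filter_upwards [self_mem_nhdsWithin] with t (ht : t ≠ 0)
            exact mul_ne_zero hc ht
        have h2 := (((htwo v).comp hmap).const_mul c)
        refine tendsto_nhds_unique (htwo (c • v)) (h2.congr fun t => ?_)
        show c * ((f (y + (c * t) • v) - f y) / (c * t)) = (f (y + t • (c • v)) - f y) / t
        rw [smul_smul, mul_comm c t, mul_div_assoc',
          mul_comm c (f (y + (t * c) • v) - f y), mul_div_mul_right _ _ hc]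
    -- F5/F7 : additivity
    have hsubadd : ∀ a b : Y, Bf (a + b) ≤ Bf a + Bf b := by
      intro a b
      obtain ⟨τ₁, hτ₁, hm₁⟩ := mem_tube h𝒴open hy a
      obtain ⟨τ₂, hτ₂, hm₂⟩ := mem_tube h𝒴open hy b
      have h2map : Tendsto (fun t : ℝ => 2 * t) (𝓝[>] (0:ℝ)) (𝓝[>] (0:ℝ)) := by
        apply tendsto_nhdsWithin_of_tendsto_nhds_of_eventually_within
        · have hcm : Continuous (fun t : ℝ => 2 * t) := by fun_prop
          have := hcm.tendsto (0:ℝ)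
          rw [mul_zero] at this
          exact this.mono_left nhdsWithin_le_nhds
        · filter_upwards [self_mem_nhdsWithin] with t (ht : (0:ℝ) < t)
          exact mem_Ioi.2 (by linarith)
      have hrhs : Tendsto
          (fun t : ℝ => (f (y + (2*t) • a) - f y) / (2*t) + (f (y + (2*t) • b) - f y) / (2*t))
          (𝓝[>] 0) (𝓝 (Bf a + Bf b)) :=
        (((hBf a).comp h2map)).add (((hBf b).comp h2map))
      refine le_of_tendsto_of_tendsto (hBf (a + b)) hrhs ?_
      have hτmin : (0:ℝ) < min τ₁ τ₂ / 2 := by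
        have := lt_min hτ₁ hτ₂
        linarith
      filter_upwards [Ioo_mem_nhdsGT_of_mem (Set.left_mem_Ico.2 hτmin)] with t ht
      have h2t1 : |2 * t| ≤ τ₁ := by
        rw [abs_of_pos (by linarith [ht.1])]
        have := ht.2
        have h := min_le_left τ₁ τ₂
        linarith
      have h2t2 : |2 * t| ≤ τ₂ := by
        rw [abs_of_pos (by linarith [ht.1])]
        have := ht.2
        have h := min_le_right τ₁ τ₂
        linarith
      have hma : y + (2*t) • a ∈ 𝒴 := hm₁ _ h2t1
      have hmb : y + (2*t) • b ∈ 𝒴 := hm₂ _ h2t2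
      have hmid : y + t • (a + b)
          = (1/2 : ℝ) • (y + (2*t) • a) + (1/2 : ℝ) • (y + (2*t) • b) := by
        module
      have hc := hconv.2 hma hmb (by norm_num : (0:ℝ) ≤ 1/2) (by norm_num : (0:ℝ) ≤ 1/2)
        (by norm_num : (1/2:ℝ) + 1/2 = 1)
      rw [← hmid] at hc
      simp only [smul_eq_mul] at hc
      have ht0 : 0 < t := ht.1
      rw [← add_div, div_le_div_iff₀ ht0 (by linarith : (0:ℝ) < 2*t)]
      nlinarith [hc]
    have hadd : ∀ a b : Y, Bf (a + b) = Bf a + Bf b := by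
      intro a b
      refine le_antisymm (hsubadd a b) ?_
      have h1 := hsubadd (-a) (-b)
      rw [hodd, hodd, ← neg_add, hodd] at h1
      linarith
    -- F8 : boundedness
    have hca : ContinuousAt f y := hcont.continuousAt (h𝒴open.mem_nhds hy)
    have hev : ∀ᶠ z in 𝓝 y, |f z - f y| < 1 ∧ z ∈ 𝒴 := by
      have h1 : ∀ᶠ z in 𝓝 y, |f z - f y| < 1 := by
        have h2 := Metric.tendsto_nhds.1 hca 1 one_pos
        filter_upwards [h2] with z hz
        rwa [Real.dist_eq] at hz
      exact h1.and (h𝒴open.eventually_mem hy)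
    obtain ⟨δ, hδ, hδf⟩ := Metric.eventually_nhds_iff.1 hev
    have hballbd : ∀ v : Y, ‖v‖ ≤ 1 → Bf v ≤ 4 / δ := by
      intro v hv
      have hm : ∀ t : ℝ, |t| ≤ δ/2 → y + t • v ∈ 𝒴 := by
        intro t ht
        refine (hδf ?_).2
        rw [dist_eq_norm, add_sub_cancel_left, norm_smul, Real.norm_eq_abs]
        calc |t| * ‖v‖ ≤ (δ/2) * 1 := by
              apply mul_le_mul ht hv (norm_nonneg v) (by linarith)
          _ < δ := by linarith
      have hevle : ∀ᶠ t : ℝ in 𝓝[>] 0,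
          (f (y + t • v) - f y) / t ≤ (f (y + (δ/2) • v) - f y) / (δ/2) := by
        filter_upwards [Ioo_mem_nhdsGT_of_mem (Set.left_mem_Ico.2 (by linarith : (0:ℝ) < δ/2))]
          with t ht
        apply slope_mono hconv y v hm _ _ ht.1.ne' (by linarith : δ/2 ≠ 0) ht.2.le
        · rw [abs_of_pos ht.1]; exact ht.2.le
        · rw [abs_of_pos (by linarith : (0:ℝ) < δ/2)]
      have h1 : Bf v ≤ (f (y + (δ/2) • v) - f y) / (δ/2) := le_of_tendsto (hBf v) hevle
      have hmemδ : y + (δ/2) • v ∈ 𝒴 ∧ |f (y + (δ/2) • v) - f y| < 1 := by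
        have := hδf (show dist (y + (δ/2) • v) y < δ by
          rw [dist_eq_norm, add_sub_cancel_left, norm_smul, Real.norm_eq_abs,
            abs_of_pos (by linarith : (0:ℝ) < δ/2)]
          calc (δ/2) * ‖v‖ ≤ (δ/2) * 1 := by
                apply mul_le_mul_of_nonneg_left hv (by linarith)
            _ < δ := by linarith)
        exact ⟨this.2, this.1⟩
      have h2 : (f (y + (δ/2) • v) - f y) / (δ/2) ≤ 1 / (δ/2) := by
        rw [div_le_div_iff_of_pos_right (by linarith : (0:ℝ) < δ/2)]
        exact le_of_lt (lt_of_abs_lt hmemδ.2)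
      have h3 : (1:ℝ) / (δ/2) = 2/δ := by rw [one_div_div]
      have h4 : (2:ℝ)/δ ≤ 4/δ := by
        rw [div_le_div_iff_of_pos_right hδ]; norm_num
      rw [h3] at h2
      linarith
    -- scaling to all vectors
    have habs : ∀ v : Y, |Bf v| ≤ (4/δ) * ‖v‖ := by
      intro v
      rcases eq_or_ne v 0 with rfl | hv
      · rw [hzero, norm_zero, mul_zero, abs_zero]
      · have hnv : (0:ℝ) < ‖v‖ := norm_pos_iff.2 hv
        have hu1 : ‖(‖v‖⁻¹ • v : Y)‖ = 1 := by
          rw [norm_smul, norm_inv, norm_norm, inv_mul_cancel₀ hnv.ne']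
        have hup : Bf (‖v‖⁻¹ • v) ≤ 4/δ := hballbd _ hu1.le
        have hun : -(4/δ) ≤ Bf (‖v‖⁻¹ • v) := by
          have h5 : Bf (-(‖v‖⁻¹ • v)) ≤ 4/δ := by
            apply hballbd
            rw [norm_neg, hu1]
          rw [hodd] at h5
          linarith
        have hdecomp : Bf v = ‖v‖ * Bf (‖v‖⁻¹ • v) := by
          rw [← hsmul, smul_smul, mul_inv_cancel₀ hnv.ne', one_smul]
        rw [hdecomp, abs_mul, abs_of_pos hnv, mul_comm]
        apply mul_le_mul_of_nonneg_right _ hnv.le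
        exact abs_le.2 ⟨hun, hup⟩
    -- Riesz representation
    let E : Y →ₗ[ℝ] ℝ :=
      { toFun := Bf
        map_add' := hadd
        map_smul' := fun c v => by simp only [hsmul c v, RingHom.id_apply, smul_eq_mul]}
    let F : Y →L[ℝ] ℝ := E.mkContinuous (4/δ) (fun v => by
      rw [Real.norm_eq_abs]
      exact habs v)
    refine ⟨(InnerProductSpace.toDual ℝ Y).symm F, fun v => ?_⟩
    have hFv : ⟪(InnerProductSpace.toDual ℝ Y).symm F, v⟫ = F v :=
      InnerProductSpace.toDual_symm_apply
    rw [hFv]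
    exact htwo v
  refine ⟨fun y => if h : y ∈ 𝒴 then (hmain y h).choose else 0, ?_⟩
  intro y hy v
  simp only [dif_pos hy]
  exact (hmain y hy).choose_spec v

end Aux

/-- Theorem 2.1 / `thm:cvx_lipschitz`.
For `𝒴 ⊆ Y` nonempty, open, convex, `L_f ∈ (0,∞)` and `f : 𝒴 → ℝ` convex and continuous,
the following are equivalent:
(i) `f` is Gâteaux differentiable on `𝒴` with `L_f`-Lipschitz gradient;
(ii) `f` is Gâteaux differentiable on `𝒴` with `1/L_f`-cocoercive gradient;
(iii) `y ↦ (L_f/2)‖y‖² − f(y)` is convex on `𝒴`. -/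
theorem stmt_0
    {Y : Type*} [NormedAddCommGroup Y] [InnerProductSpace ℝ Y] [CompleteSpace Y]
    (𝒴 : Set Y) (h𝒴ne : 𝒴.Nonempty) (h𝒴open : IsOpen 𝒴) (h𝒴cvx : Convex ℝ 𝒴)
    (Lf : ℝ) (hLf : 0 < Lf)
    (f : Y → ℝ) (hconv : ConvexOn ℝ 𝒴 f) (hcont : ContinuousOn f 𝒴) :
    List.TFAE
      [ (∃ f' : Y → Y, GateauxGradOn f f' 𝒴 ∧
          ∀ y₁ ∈ 𝒴, ∀ y₂ ∈ 𝒴, ‖f' y₂ - f' y₁‖ ≤ Lf * ‖y₂ - y₁‖),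
        (∃ f' : Y → Y, GateauxGradOn f f' 𝒴 ∧
          ∀ y₁ ∈ 𝒴, ∀ y₂ ∈ 𝒴,
            (1 / Lf) * ‖f' y₂ - f' y₁‖ ^ 2 ≤ ⟪f' y₂ - f' y₁, y₂ - y₁⟫),
        ConvexOn ℝ 𝒴 (fun y => Lf / 2 * ‖y‖ ^ 2 - f y) ] := by
  tfae_have 1 → 3 := fun ⟨f', hgrad, hLip⟩ => lip_convex h𝒴cvx hgrad hcont hLf hLip
  tfae_have 1 → 2 := fun ⟨f', hgrad, hLip⟩ =>
    ⟨f', hgrad, global_coco h𝒴open h𝒴cvx hgrad hconv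
      (lip_convex h𝒴cvx hgrad hcont hLf hLip) hLf hLip⟩
  tfae_have 2 → 1 := by
    rintro ⟨f', hgrad, hco⟩
    refine ⟨f', hgrad, fun y₁ h₁ y₂ h₂ => ?_⟩
    have h1 := hco y₁ h₁ y₂ h₂
    have h2 : ⟪f' y₂ - f' y₁, y₂ - y₁⟫ ≤ ‖f' y₂ - f' y₁‖ * ‖y₂ - y₁‖ :=
      real_inner_le_norm _ _
    rcases eq_or_ne (f' y₂ - f' y₁) 0 with h0 | h0
    · rw [h0, norm_zero]
      exact mul_nonneg hLf.le (norm_nonneg _)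
    · have hpos : (0:ℝ) < ‖f' y₂ - f' y₁‖ := norm_pos_iff.2 h0
      have h3 : ‖f' y₂ - f' y₁‖ ^ 2 ≤ Lf * (‖f' y₂ - f' y₁‖ * ‖y₂ - y₁‖) := by
        have h4 : (1 / Lf) * ‖f' y₂ - f' y₁‖ ^ 2 ≤ ‖f' y₂ - f' y₁‖ * ‖y₂ - y₁‖ :=
          le_trans h1 h2
        rw [one_div, inv_mul_le_iff₀ hLf] at h4
        exact h4
      rw [sq] at h3
      nlinarith [hpos, hLf]
  tfae_have 3 → 1 := by
    intro h3
    obtain ⟨f', hgrad⟩ := exists_gradient h𝒴open hconv hcont hLf h3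
    exact ⟨f', hgrad, global_lip h𝒴open h𝒴cvx hgrad hconv h3 hLf⟩
  tfae_finish
end

section
/- Let B : Y × 𝒰 ⇉ Y be a parametrized maximally monotone operator (𝒰 ⊆ U a neighborhood of u*) and suppose the resolvent J_B is directionally differentiable at (q*, u*) ∈ Y × 𝒰; set y* := J_B(q*, u*). Define the set-valued map DB : Y × U ⇉ Y by DB(δ, h) := { k − δ : k ∈ Y, δ = J_B'(q*, u*; k, h) }. Then for every h ∈ U the operator DB(·, h) : Y ⇉ Y is maximally monotone, and J_B'(q*, u*; ·, h) is its resolvent; that is, for all k ∈ Y, δ = J_B'(q*, u*; k, h) holds if and only if k − δ ∈ DB(δ, h). -/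
open Filter Topology Metric Set
open scoped RealInnerProductSpace

/-- A set-valued operator `T : Y ⇉ Y` is maximally monotone. -/
def IsMaxMonotone {Y : Type*} [NormedAddCommGroup Y] [InnerProductSpace ℝ Y]
    (T : Y → Set Y) : Prop :=
  (∀ ⦃y₁ y₂ ξ₁ ξ₂⦄, ξ₁ ∈ T y₁ → ξ₂ ∈ T y₂ → 0 ≤ ⟪ξ₂ - ξ₁, y₂ - y₁⟫) ∧
  (∀ y ξ, (∀ y' ξ', ξ' ∈ T y' → 0 ≤ ⟪ξ - ξ', y - y'⟫) → ξ ∈ T y)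

/-- Lemma 3.6 / `lem:max_mon_dif_dep`.
If the resolvent `J_B` is directionally differentiable at `(q*, u*)` with derivative `J'`,
then `DB(δ, h) := {k − δ : k ∈ Y, δ = J'(k, h)}` is maximally monotone in `δ` for every
`h ∈ U`, and `J'(·, h)` is its resolvent: `δ = J'(k, h) ↔ k − δ ∈ DB(δ, h)`. -/
theorem stmt_5
    {Y : Type*} [NormedAddCommGroup Y] [InnerProductSpace ℝ Y] [CompleteSpace Y]
    {U : Type*} [NormedAddCommGroup U] [NormedSpace ℝ U] [CompleteSpace U]
    (B : Y → U → Set Y) (𝒰 : Set U) (ustar : U)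
    (h𝒰 : 𝒰 ∈ 𝓝 ustar) (hustar : ustar ∈ 𝒰)
    (hB : ∀ u ∈ 𝒰, IsMaxMonotone (fun y => B y u))
    -- the resolvent J_B : `J q u` is the unique `y` with `q − y ∈ B(y,u)`
    (J : Y → U → Y)
    (hJ : ∀ q : Y, ∀ u ∈ 𝒰, q - J q u ∈ B (J q u) u)
    (qstar : Y) (ystar : Y) (hystar : ystar = J qstar ustar)
    -- directional differentiability of J_B at (q*, u*) with directional derivative J'
    (J' : Y → U → Y)
    (hJ' : ∀ (k : Y) (h : U),
      Tendsto (fun t : ℝ => t⁻¹ • (J (qstar + t • k) (ustar + t • h) - J qstar ustar))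
        (𝓝[>] 0) (𝓝 (J' k h)))
    -- the derivative operator DB
    (DB : Y → U → Set Y)
    (hDB : ∀ (δ : Y) (h : U), DB δ h = {w : Y | ∃ k : Y, w = k - δ ∧ δ = J' k h}) :
    ∀ h : U,
      IsMaxMonotone (fun δ => DB δ h) ∧
      ∀ k δ : Y, δ = J' k h ↔ k - δ ∈ DB δ h := by

  intro h
  have key : ∀ k₁ k₂ : Y, 0 ≤ ⟪(k₂ - k₁) - (J' k₂ h - J' k₁ h), J' k₂ h - J' k₁ h⟫ := by
    intro k₁ k₂
    set D : Y → ℝ → Y := fun k t =>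
      t⁻¹ • (J (qstar + t • k) (ustar + t • h) - J qstar ustar) with hD
    have hlim : Tendsto
        (fun t : ℝ => ⟪(k₂ - k₁) - (D k₂ t - D k₁ t), D k₂ t - D k₁ t⟫)
        (𝓝[>] (0:ℝ)) (𝓝 ⟪(k₂ - k₁) - (J' k₂ h - J' k₁ h), J' k₂ h - J' k₁ h⟫) := by
      have h1 := hJ' k₁ h
      have h2 := hJ' k₂ h
      exact (Tendsto.sub tendsto_const_nhds (h2.sub h1)).inner (h2.sub h1)
    have hu : ∀ᶠ t : ℝ in 𝓝[>] (0:ℝ), ustar + t • h ∈ 𝒰 := by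
      have hc : Tendsto (fun t : ℝ => ustar + t • h) (𝓝[>] (0:ℝ)) (𝓝 ustar) := by
        have h0 : Tendsto (fun t : ℝ => ustar + t • h) (𝓝 (0:ℝ))
            (𝓝 (ustar + (0:ℝ) • h)) :=
          ((continuous_const.add ((continuous_id).smul continuous_const)).tendsto 0)
        simpa using h0.mono_left nhdsWithin_le_nhds
      exact hc h𝒰
    have hev : ∀ᶠ t : ℝ in 𝓝[>] (0:ℝ),
        0 ≤ ⟪(k₂ - k₁) - (D k₂ t - D k₁ t), D k₂ t - D k₁ t⟫ := by
      filter_upwards [hu, self_mem_nhdsWithin] with t ht (htpos : 0 < t)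
      have mono := (hB _ ht).1 (hJ (qstar + t • k₁) _ ht) (hJ (qstar + t • k₂) _ ht)
      simp only [hD]
      set y₁ := J (qstar + t • k₁) (ustar + t • h) with hy₁
      set y₂ := J (qstar + t • k₂) (ustar + t • h) with hy₂
      have e1 : t⁻¹ • (y₂ - J qstar ustar) - t⁻¹ • (y₁ - J qstar ustar)
          = t⁻¹ • (y₂ - y₁) := by
        rw [smul_sub, smul_sub, smul_sub]; abel
      have e2 : (k₂ - k₁) - t⁻¹ • (y₂ - y₁)
          = t⁻¹ • (((qstar + t • k₂) - y₂) - ((qstar + t • k₁) - y₁)) := by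
        have e3 : (((qstar + t • k₂) - y₂) - ((qstar + t • k₁) - y₁))
            = t • (k₂ - k₁) - (y₂ - y₁) := by module
        rw [e3, smul_sub t⁻¹ (t • (k₂ - k₁)), smul_smul,
          inv_mul_cancel₀ htpos.ne', one_smul]
      rw [e1, e2, real_inner_smul_left, real_inner_smul_right]
      have ht0 : (0:ℝ) ≤ t⁻¹ := le_of_lt (inv_pos.mpr htpos)
      exact mul_nonneg ht0 (mul_nonneg ht0 mono)
    exact ge_of_tendsto hlim hev
  have resolvent : ∀ k δ : Y, δ = J' k h ↔ k - δ ∈ DB δ h := by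
    intro k δ
    rw [hDB]
    constructor
    · intro hδ; exact ⟨k, rfl, hδ⟩
    · rintro ⟨k', hk', hδ⟩
      have hkk : k = k' := by
        have h5 : k - δ + δ = k' - δ + δ := by rw [hk']
        simpa using h5
      rwa [hkk]
  refine ⟨⟨?_, ?_⟩, resolvent⟩
  · intro δ₁ δ₂ ξ₁ ξ₂ h1 h2
    have h1' : ξ₁ ∈ DB δ₁ h := h1
    have h2' : ξ₂ ∈ DB δ₂ h := h2
    rw [hDB] at h1' h2'
    obtain ⟨k₁, rfl, hk₁⟩ := h1'
    obtain ⟨k₂, rfl, hk₂⟩ := h2'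
    rw [hk₁, hk₂]
    have e4 : k₂ - J' k₂ h - (k₁ - J' k₁ h) = (k₂ - k₁) - (J' k₂ h - J' k₁ h) := by abel
    rw [e4]
    exact key k₁ k₂
  · intro δ ξ hyp
    show ξ ∈ DB δ h
    rw [hDB]
    set δ'' := J' (δ + ξ) h with hδ''
    have hmem : (δ + ξ) - δ'' ∈ (fun δ => DB δ h) δ'' := by
      show _ ∈ DB δ'' h
      rw [hDB]; exact ⟨δ + ξ, rfl, rfl⟩
    have h0 := hyp δ'' ((δ + ξ) - δ'') hmem
    have e : ξ - ((δ + ξ) - δ'') = δ'' - δ := by abel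
    rw [e] at h0
    have h1 : ⟪δ'' - δ, δ - δ''⟫ = -⟪δ - δ'', δ - δ''⟫ := by
      rw [← neg_sub δ δ'', inner_neg_left]
    have h2 : ⟪δ - δ'', δ - δ''⟫ ≤ 0 := by rw [h1] at h0; linarith
    have h3 : δ - δ'' = 0 :=
      (re_inner_self_nonpos (𝕜 := ℝ) (x := δ - δ'')).mp h2
    have hδeq : δ = δ'' := by rwa [sub_eq_zero] at h3
    exact ⟨δ + ξ, by abel, hδeq.trans hδ''⟩
end

section
/- Let (y*, u*) solve the generalized equation 0 ∈ A(y,u) + B(y,u) under the standing assumptions with constants ε, μ_A, L_A. Assume additionally: A is directionally differentiable at (y*, u*); the resolvent J_B is directionally differentiable at (q*, u*), where q* := y* − A(y*, u*); and for every v ∈ Y and h ∈ U the map t ↦ J_B(v, u* + t h) is right-continuous at t = 0. Then for every h ∈ U there exists t₀ > 0 such that for every t ∈ [0, t₀] the equation −A(y, u* + t h) ∈ B(y, u* + t h) has a unique solution y_t ∈ B_ε(y*) (with y_0 = y*), and (y_t − y*)/t converges strongly in Y as t ↓ 0 to the unique solution δ ∈ Y of −A'(y*, u*; δ, h) ∈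 DB(δ, h), where DB(δ, h) := { k − δ : k ∈ Y, δ = J_B'(q*, u*; k, h) } is the (maximally monotone in δ) derivative operator of B. -/
set_option maxHeartbeats 4000000


open Filter Topology Metric Set
open scoped RealInnerProductSpace

section Aux
variable {Y : Type*} [NormedAddCommGroup Y] [InnerProductSpace ℝ Y]

/-- Firm nonexpansiveness inequality for resolvents of monotone operators. -/
lemma aux_firm {γ : ℝ} (hγ : 0 ≤ γ) {y₁ y₂ x₁ x₂ q₁ q₂ : Y}
    (hm : 0 ≤ ⟪x₂ - x₁, y₂ - y₁⟫) (h₁ : q₁ - y₁ = γ • x₁) (h₂ : q₂ - y₂ = γ • x₂) :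
    ‖y₂ - y₁‖ ^ 2 ≤ ⟪q₂ - q₁, y₂ - y₁⟫ := by
  have hq : q₂ - q₁ = (y₂ - y₁) + γ • (x₂ - x₁) := by
    rw [smul_sub, ← h₁, ← h₂]; abel
  rw [hq, inner_add_left, real_inner_smul_left, real_inner_self_eq_norm_sq]
  nlinarith

lemma aux_nonexp_of_firm {a b : Y} (h : ‖a‖ ^ 2 ≤ ⟪b, a⟫) : ‖a‖ ≤ ‖b‖ := by
  rcases (norm_nonneg a).eq_or_lt with h0 | h0
  · rw [← h0]; exact norm_nonneg b
  · nlinarith [real_inner_le_norm b a]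

lemma aux_div_firm {t : ℝ} (ht : 0 < t) {P Q D E : Y}
    (hP : P = t • D) (hQ : Q = t • E) (h : ‖P‖ ^ 2 ≤ ⟪Q, P⟫) :
    ‖D‖ ^ 2 ≤ ⟪E, D⟫ := by
  rw [hP, hQ, real_inner_smul_left, real_inner_smul_right, norm_smul, Real.norm_eq_abs,
    abs_of_pos ht, mul_pow] at h
  nlinarith [h, mul_pos ht ht]

lemma aux_res_unique {T : Y → Set Y}
    (mono : ∀ ⦃y₁ y₂ ξ₁ ξ₂ : Y⦄, ξ₁ ∈ T y₁ → ξ₂ ∈ T y₂ → 0 ≤ ⟪ξ₂ - ξ₁, y₂ - y₁⟫)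
    {γ : ℝ} (hγ : 0 ≤ γ) {q y y' : Y}
    (hy : ∃ x ∈ T y, q - y = γ • x) (hy' : ∃ x ∈ T y', q - y' = γ • x) : y = y' := by
  obtain ⟨x, hx, hqx⟩ := hy
  obtain ⟨x', hx', hqx'⟩ := hy'
  have := aux_firm hγ (mono hx hx') hqx hqx'
  have h0 : ⟪q - q, y' - y⟫ = 0 := by simp
  have : ‖y' - y‖ ^ 2 ≤ 0 := by rw [← h0]; exact this
  have : ‖y' - y‖ = 0 := by nlinarith [norm_nonneg (y' - y)]
  exact (sub_eq_zero.mp (norm_eq_zero.mp this)).symm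

end Aux

section Aux2
variable {Y : Type*} [NormedAddCommGroup Y] [InnerProductSpace ℝ Y]

lemma aux_contraction_est {μ L : ℝ} (hμ : 0 < μ) (hμL : μ ≤ L) {d e : Y}
    (hm : μ * ‖d‖ ^ 2 ≤ ⟪e, d⟫) (hl : ‖e‖ ≤ L * ‖d‖) :
    ‖d - (μ / L ^ 2) • e‖ ≤ Real.sqrt (1 - μ ^ 2 / L ^ 2) * ‖d‖ := by
  have hL : 0 < L := lt_of_lt_of_le hμ hμL
  have hL2 : 0 < L ^ 2 := by positivity
  have key : ‖d - (μ / L ^ 2) • e‖ ^ 2 ≤ (1 - μ ^ 2 / L ^ 2) * ‖d‖ ^ 2 := by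
    rw [norm_sub_sq_real, norm_smul, real_inner_smul_right, Real.norm_eq_abs,
      abs_of_pos (by positivity : (0:ℝ) < μ / L ^ 2)]
    have hcomm : ⟪d, e⟫ = ⟪e, d⟫ := real_inner_comm e d
    have he2 : ‖e‖ ^ 2 ≤ L ^ 2 * ‖d‖ ^ 2 := by nlinarith [norm_nonneg e, norm_nonneg d]
    have hdiv : 0 < μ / L ^ 2 := by positivity
    rw [hcomm, mul_pow]
    have expand : ‖d‖ ^ 2 - 2 * (μ / L ^ 2) * ⟪e, d⟫ + (μ / L ^ 2) ^ 2 * ‖e‖ ^ 2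
        ≤ (1 - μ ^ 2 / L ^ 2) * ‖d‖ ^ 2 := by
      have h1 : 2 * (μ / L ^ 2) * (μ * ‖d‖ ^ 2) ≤ 2 * (μ / L ^ 2) * ⟪e, d⟫ := by
        apply mul_le_mul_of_nonneg_left hm (by positivity)
      have h2 : (μ / L ^ 2) ^ 2 * ‖e‖ ^ 2 ≤ (μ / L ^ 2) ^ 2 * (L ^ 2 * ‖d‖ ^ 2) :=
        mul_le_mul_of_nonneg_left he2 (by positivity)
      have h3 : (μ / L ^ 2) ^ 2 * (L ^ 2 * ‖d‖ ^ 2) = (μ ^ 2 / L ^ 2) * ‖d‖ ^ 2 := by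
        field_simp
      have h4 : 2 * (μ / L ^ 2) * (μ * ‖d‖ ^ 2) = 2 * (μ ^ 2 / L ^ 2) * ‖d‖ ^ 2 := by
        field_simp
      nlinarith
    linarith [expand]
  have hnn : 0 ≤ 1 - μ ^ 2 / L ^ 2 := by
    rw [sub_nonneg, div_le_one hL2]; nlinarith
  calc ‖d - (μ / L ^ 2) • e‖ = Real.sqrt (‖d - (μ / L ^ 2) • e‖ ^ 2) :=
        (Real.sqrt_sq (norm_nonneg _)).symm
    _ ≤ Real.sqrt ((1 - μ ^ 2 / L ^ 2) * ‖d‖ ^ 2) := Real.sqrt_le_sqrt key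
    _ = Real.sqrt (1 - μ ^ 2 / L ^ 2) * ‖d‖ := by
        rw [Real.sqrt_mul hnn, Real.sqrt_sq (norm_nonneg _)]

omit [InnerProductSpace ℝ Y] in
/-- Banach fixed point on a closed invariant set. -/
lemma aux_exists_fixedPt [CompleteSpace Y] {c : ℝ} (hc0 : 0 ≤ c) (hc1 : c < 1)
    {s : Set Y} (hs : IsClosed s) {y₀ : Y} (hy₀ : y₀ ∈ s) (F : Y → Y)
    (hmaps : MapsTo F s s) (hlip : ∀ x ∈ s, ∀ y ∈ s, dist (F x) (F y) ≤ c * dist x y) :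
    ∃ y ∈ s, F y = y := by
  set K : NNReal := ⟨c, hc0⟩ with hK
  have hK1 : K < 1 := by
    rw [← NNReal.coe_lt_coe]; exact hc1
  have hlip' : LipschitzWith K (hmaps.restrict F s s) := by
    apply LipschitzWith.of_dist_le_mul
    intro x y
    rw [Subtype.dist_eq, Subtype.dist_eq]
    exact hlip x x.2 y y.2
  have hcw : ContractingWith K (hmaps.restrict F s s) := ⟨hK1, hlip'⟩
  obtain ⟨y, hys, hfix, -, -⟩ :=
    hcw.exists_fixedPoint' (hs.isComplete) hmaps hy₀ (edist_ne_top _ _)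
  exact ⟨y, hys, hfix⟩

end Aux2

section Cascade
variable {Y : Type*} [NormedAddCommGroup Y] [InnerProductSpace ℝ Y]

/-- `R` is a (total, single-valued choice of) resolvent family for `γ • T t`. -/
def ResProp (T : ℝ → Y → Set Y) (t₁ γ : ℝ) (R : ℝ → Y → Y) : Prop :=
  ∀ t ∈ Icc (0:ℝ) t₁, ∀ q : Y, ∃ x ∈ T t (R t q), q - R t q = γ • x

/-- Pointwise right-continuity at `t = 0`. -/
def ContProp (R : ℝ → Y → Y) : Prop :=
  ∀ q : Y, Tendsto (fun t => R t q) (𝓝[>] (0:ℝ)) (𝓝 (R 0 q))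

lemma ResProp.nonexp {T : ℝ → Y → Set Y} {t₁ γ : ℝ} {R : ℝ → Y → Y}
    (hR : ResProp T t₁ γ R) (hγ : 0 ≤ γ)
    (mono : ∀ t ∈ Icc (0:ℝ) t₁, ∀ ⦃y₁ y₂ ξ₁ ξ₂ : Y⦄,
      ξ₁ ∈ T t y₁ → ξ₂ ∈ T t y₂ → 0 ≤ ⟪ξ₂ - ξ₁, y₂ - y₁⟫)
    {t : ℝ} (ht : t ∈ Icc (0:ℝ) t₁) (q q' : Y) :
    ‖R t q' - R t q‖ ≤ ‖q' - q‖ := by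
  obtain ⟨x, hx, hqx⟩ := hR t ht q
  obtain ⟨x', hx', hqx'⟩ := hR t ht q'
  exact aux_nonexp_of_firm (aux_firm hγ (mono t ht hx hx') hqx hqx')

lemma cascade_step [CompleteSpace Y] (T : ℝ → Y → Set Y) (t₁ : ℝ) (ht₁ : 0 < t₁)
    (mono : ∀ t ∈ Icc (0:ℝ) t₁, ∀ ⦃y₁ y₂ ξ₁ ξ₂ : Y⦄,
      ξ₁ ∈ T t y₁ → ξ₂ ∈ T t y₂ → 0 ≤ ⟪ξ₂ - ξ₁, y₂ - y₁⟫)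
    {γ₀ γ : ℝ} (hγ₀ : 0 < γ₀) (hγ : 0 < γ) (hhalf : γ₀ / 2 < γ)
    {R : ℝ → Y → Y} (hR : ResProp T t₁ γ₀ R) (hRc : ContProp R) :
    ∃ Rg : ℝ → Y → Y, ResProp T t₁ γ Rg ∧ ContProp Rg := by
  classical
  set c : ℝ := |1 - γ₀ / γ| with hc
  have hratio : 0 < γ₀ / γ := div_pos hγ₀ hγ
  have hratio2 : γ₀ / γ < 2 := by
    rw [div_lt_iff₀ hγ]; linarith
  have hc0 : 0 ≤ c := abs_nonneg _
  have hc1 : c < 1 := by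
    rw [hc, abs_lt]; constructor <;> linarith
  -- the contraction map for parameters (t, q)
  set F : ℝ → Y → Y → Y := fun t q y => R t ((1 - γ₀ / γ) • y + (γ₀ / γ) • q) with hF
  have hFlip : ∀ t ∈ Icc (0:ℝ) t₁, ∀ q y y',
      dist (F t q y) (F t q y') ≤ c * dist y y' := by
    intro t ht q y y'
    have h1 := hR.nonexp hγ₀.le mono ht
      ((1 - γ₀ / γ) • y' + (γ₀ / γ) • q) ((1 - γ₀ / γ) • y + (γ₀ / γ) • q)
    have h2 : ((1 - γ₀ / γ) • y + (γ₀ / γ) • q) - ((1 - γ₀ / γ) • y' + (γ₀ / γ) • q)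
        = (1 - γ₀ / γ) • (y - y') := by rw [smul_sub]; abel
    rw [dist_eq_norm, dist_eq_norm]
    calc ‖F t q y - F t q y'‖ ≤ ‖((1 - γ₀ / γ) • y + (γ₀ / γ) • q)
          - ((1 - γ₀ / γ) • y' + (γ₀ / γ) • q)‖ := h1
      _ = c * ‖y - y'‖ := by rw [h2, norm_smul, Real.norm_eq_abs]
  -- fixed points of `F t q` are `γ`-resolvents, and conversely
  have hfix_res : ∀ t ∈ Icc (0:ℝ) t₁, ∀ q y, F t q y = y →
      ∃ x ∈ T t y, q - y = γ • x := by
    intro t ht q y hy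
    obtain ⟨x, hx, hqx⟩ := hR t ht ((1 - γ₀ / γ) • y + (γ₀ / γ) • q)
    have hy' : R t ((1 - γ₀ / γ) • y + (γ₀ / γ) • q) = y := hy
    rw [hy'] at hqx hx
    refine ⟨x, hx, ?_⟩
    have h2 : ((1 - γ₀ / γ) • y + (γ₀ / γ) • q) - y = (γ₀ / γ) • (q - y) := by
      rw [smul_sub]
      have h5 : (1 - γ₀ / γ) • y = y - (γ₀ / γ) • y := by rw [sub_smul, one_smul]
      rw [h5]; abel
    rw [h2] at hqx
    have h4 := congrArg (fun z : Y => (γ / γ₀) • z) hqx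
    simp only [smul_smul] at h4
    rw [show γ / γ₀ * (γ₀ / γ) = 1 by field_simp, one_smul,
      show γ / γ₀ * γ₀ = γ by field_simp] at h4
    exact h4
  have hres_fix : ∀ t ∈ Icc (0:ℝ) t₁, ∀ q y, (∃ x ∈ T t y, q - y = γ • x) →
      F t q y = y := by
    intro t ht q y ⟨x, hx, hqx⟩
    have h2 : ((1 - γ₀ / γ) • y + (γ₀ / γ) • q) - y = (γ₀ / γ) • (q - y) := by
      rw [smul_sub]
      have : (1 - γ₀ / γ) • y = y - (γ₀ / γ) • y := by rw [sub_smul, one_smul]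
      rw [this]; abel
    have h3 : ((1 - γ₀ / γ) • y + (γ₀ / γ) • q) - y = γ₀ • x := by
      rw [h2, hqx, smul_smul, div_mul_cancel₀ _ hγ.ne']
    -- y is the γ₀-resolvent of the shifted point; R t gives the same by uniqueness
    obtain ⟨x', hx', hqx'⟩ := hR t ht ((1 - γ₀ / γ) • y + (γ₀ / γ) • q)
    exact aux_res_unique (mono t ht) hγ₀.le ⟨x', hx', hqx'⟩ ⟨x, hx, h3⟩
  -- existence of fixed points
  have hex : ∀ t ∈ Icc (0:ℝ) t₁, ∀ q : Y, ∃ y, F t q y = y := by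
    intro t ht q
    obtain ⟨y, -, hy⟩ := aux_exists_fixedPt hc0 hc1 isClosed_univ (mem_univ (0:Y))
      (F t q) (mapsTo_univ _ _) (fun x _ y _ => hFlip t ht q x y)
    exact ⟨y, hy⟩
  set Rg : ℝ → Y → Y := fun t q =>
    if ht : t ∈ Icc (0:ℝ) t₁ then (hex t ht q).choose else q with hRg
  have hRgfix : ∀ t (ht : t ∈ Icc (0:ℝ) t₁), ∀ q, F t q (Rg t q) = Rg t q := by
    intro t ht q
    rw [hRg]; simp only [dif_pos ht]
    exact (hex t ht q).choose_spec
  have hRgres : ResProp T t₁ γ Rg := fun t ht q => hfix_res t ht q _ (hRgfix t ht q)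
  refine ⟨Rg, hRgres, ?_⟩
  -- continuity
  intro q
  have h0mem : (0:ℝ) ∈ Icc (0:ℝ) t₁ := ⟨le_refl _, ht₁.le⟩
  set z₀ : Y := (1 - γ₀ / γ) • Rg 0 q + (γ₀ / γ) • q with hz₀
  have hkey : ∀ t ∈ Icc (0:ℝ) t₁,
      dist (Rg t q) (Rg 0 q) ≤ (1 - c)⁻¹ * dist (R t z₀) (R 0 z₀) := by
    intro t ht
    have hfixt := hRgfix t ht q
    have hfix0 := hRgfix 0 h0mem q
    have e1 : dist (Rg t q) (Rg 0 q) ≤ dist (Rg t q) (F t q (Rg 0 q))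
        + dist (F t q (Rg 0 q)) (Rg 0 q) := dist_triangle _ _ _
    have e2 : dist (Rg t q) (F t q (Rg 0 q)) ≤ c * dist (Rg t q) (Rg 0 q) := by
      calc dist (Rg t q) (F t q (Rg 0 q)) = dist (F t q (Rg t q)) (F t q (Rg 0 q)) := by
            rw [hfixt]
        _ ≤ c * dist (Rg t q) (Rg 0 q) := hFlip t ht q _ _
    have e3 : F t q (Rg 0 q) = R t z₀ := rfl
    have e4 : Rg 0 q = R 0 z₀ := hfix0.symm
    have e5 : dist (F t q (Rg 0 q)) (Rg 0 q) = dist (R t z₀) (R 0 z₀) := by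
      rw [e3, e4]
    have hpos : 0 < 1 - c := by linarith
    have H : (1 - c) * dist (Rg t q) (Rg 0 q) ≤ dist (R t z₀) (R 0 z₀) := by
      rw [← e5]; nlinarith [e1, e2]
    calc dist (Rg t q) (Rg 0 q) = (1 - c)⁻¹ * ((1 - c) * dist (Rg t q) (Rg 0 q)) := by
          field_simp
      _ ≤ (1 - c)⁻¹ * dist (R t z₀) (R 0 z₀) :=
          mul_le_mul_of_nonneg_left H (by positivity)
  have hpos : 0 < 1 - c := by linarith
  have hIoc : Ioc (0:ℝ) t₁ ∈ 𝓝[>] (0:ℝ) := Ioc_mem_nhdsGT_of_mem ⟨le_refl 0, ht₁⟩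
  rw [tendsto_iff_dist_tendsto_zero]
  have hd : Tendsto (fun t => dist (R t z₀) (R 0 z₀)) (𝓝[>] (0:ℝ)) (𝓝 0) :=
    tendsto_iff_dist_tendsto_zero.1 (hRc z₀)
  have hd' : Tendsto (fun t => (1 - c)⁻¹ * dist (R t z₀) (R 0 z₀)) (𝓝[>] (0:ℝ)) (𝓝 0) := by
    simpa using hd.const_mul ((1 - c)⁻¹)
  apply squeeze_zero' (Eventually.of_forall fun t => dist_nonneg) _ hd'
  exact Filter.eventually_of_mem hIoc fun t ht => hkey t ⟨ht.1.le, ht.2⟩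



lemma cascade [CompleteSpace Y] (T : ℝ → Y → Set Y) (t₁ : ℝ) (ht₁ : 0 < t₁)
    (mono : ∀ t ∈ Icc (0:ℝ) t₁, ∀ ⦃y₁ y₂ ξ₁ ξ₂ : Y⦄,
      ξ₁ ∈ T t y₁ → ξ₂ ∈ T t y₂ → 0 ≤ ⟪ξ₂ - ξ₁, y₂ - y₁⟫)
    {R : ℝ → Y → Y} (hR : ResProp T t₁ 1 R) (hRc : ContProp R)
    {γ : ℝ} (hγ : 0 < γ) :
    ∃ Rg : ℝ → Y → Y, ResProp T t₁ γ Rg ∧ ContProp Rg := by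
  have key : ∀ n : ℕ, ∀ γ' : ℝ, ((3:ℝ)/5) ^ n ≤ γ' →
      ∃ Rg : ℝ → Y → Y, ResProp T t₁ γ' Rg ∧ ContProp Rg := by
    intro n
    induction n with
    | zero =>
      intro γ' hγ'
      simp only [pow_zero] at hγ'
      exact cascade_step T t₁ ht₁ mono one_pos (by linarith) (by linarith) hR hRc
    | succ n ih =>
      intro γ' hγ'
      by_cases hcase : ((3:ℝ)/5) ^ n ≤ γ'
      · exact ih γ' hcase
      · push_neg at hcase
        obtain ⟨R₀, hR₀, hR₀c⟩ := ih (((3:ℝ)/5) ^ n) le_rfl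
        have hp : (0:ℝ) < ((3:ℝ)/5) ^ n := by positivity
        have hp1 : (0:ℝ) < ((3:ℝ)/5) ^ (n+1) := by positivity
        have hhalf : ((3:ℝ)/5) ^ n / 2 < γ' := by
          have : ((3:ℝ)/5) ^ n / 2 < ((3:ℝ)/5) ^ (n+1) := by
            rw [pow_succ]; nlinarith
          linarith
        exact cascade_step T t₁ ht₁ mono hp (lt_of_lt_of_le hp1 hγ') hhalf hR₀ hR₀c
  obtain ⟨n, hn⟩ := exists_pow_lt_of_lt_one hγ (by norm_num : (3:ℝ)/5 < 1)
  exact key n γ hn.le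

/-- The main final estimate, pure inner-product algebra. -/
lemma aux_main_est {μ L σ ρ : ℝ} (hL : 0 ≤ L) {v g δ a b c' k : Y}
    (hk : k = δ - c')
    (hA : ‖v - g‖ ^ 2 ≤ ⟪v - a - k, v - g⟫)
    (hB : μ * ‖v - δ‖ ^ 2 ≤ ⟪a - b, v - δ⟫)
    (hC : ‖a - b‖ ≤ L * ‖v - δ‖)
    (hσ : ‖g - δ‖ ≤ σ) (hρ : ‖b - c'‖ ≤ ρ) :
    μ * ‖v - δ‖ ^ 2 ≤ (σ + ρ + L * σ) * ‖v - δ‖ + (σ + ρ) * σ := by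
  set w := v - g with hw
  have hσ0 : 0 ≤ σ := le_trans (norm_nonneg _) hσ
  have hρ0 : 0 ≤ ρ := le_trans (norm_nonneg _) hρ
  -- step 1 : ⟪a - c', w⟫ ≤ ⟪g - δ, w⟫
  have e1 : v - a - k = (v - δ) - (a - c') := by rw [hk]; abel
  have e2 : v - δ = w + (g - δ) := by rw [hw]; abel
  have s1 : ⟪a - c', w⟫ ≤ ⟪g - δ, w⟫ := by
    have h1 : ⟪v - a - k, w⟫ = ⟪w, w⟫ + ⟪g - δ, w⟫ - ⟪a - c', w⟫ := by
      rw [e1, e2, inner_sub_left, inner_add_left]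
    have h2 : ⟪w, w⟫ = ‖w‖ ^ 2 := real_inner_self_eq_norm_sq w
    have := hA
    rw [h1, h2] at this
    linarith
  -- step 2 : expand ⟪a - b, v - δ⟫
  have s2 : ⟪a - b, v - δ⟫ = ⟪a - c', w⟫ + ⟪c' - b, w⟫ + ⟪a - b, g - δ⟫ := by
    rw [e2, inner_add_right]
    have : ⟪a - b, w⟫ = ⟪a - c', w⟫ + ⟪c' - b, w⟫ := by
      rw [← inner_add_left]
      congr 1
      abel
    rw [this]
  have s3 : ⟪c' - b, w⟫ ≤ ρ * ‖w‖ := by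
    calc ⟪c' - b, w⟫ ≤ ‖c' - b‖ * ‖w‖ := real_inner_le_norm _ _
      _ ≤ ρ * ‖w‖ := by
          apply mul_le_mul_of_nonneg_right _ (norm_nonneg _)
          rw [← norm_neg]; simpa using hρ
  have s4 : ⟪a - b, g - δ⟫ ≤ (L * ‖v - δ‖) * σ := by
    calc ⟪a - b, g - δ⟫ ≤ ‖a - b‖ * ‖g - δ‖ := real_inner_le_norm _ _
      _ ≤ (L * ‖v - δ‖) * σ := by
          apply mul_le_mul hC hσ (norm_nonneg _) (by positivity)
  have s5 : ⟪g - δ, w⟫ ≤ σ * ‖w‖ := by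
    calc ⟪g - δ, w⟫ ≤ ‖g - δ‖ * ‖w‖ := real_inner_le_norm _ _
      _ ≤ σ * ‖w‖ := mul_le_mul_of_nonneg_right hσ (norm_nonneg _)
  have s6 : ‖w‖ ≤ ‖v - δ‖ + σ := by
    have : w = (v - δ) - (g - δ) := by rw [hw]; abel
    rw [this]
    exact le_trans (norm_sub_le _ _) (by linarith)
  have hw0 : (0:ℝ) ≤ ‖w‖ := norm_nonneg _
  nlinarith [hB, s1, s2, s3, s4, s5, s6]

end Cascade

lemma aux_tendsto_zero_of_sq_le {τ : Type*} {l : Filter τ} {x α β : τ → ℝ} {μ : ℝ} (hμ : 0 < μ)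
    (hx : ∀ᶠ t in l, 0 ≤ x t) (hineq : ∀ᶠ t in l, μ * x t ^ 2 ≤ α t * x t + β t)
    (hα : Tendsto α l (𝓝 0)) (hβ : Tendsto β l (𝓝 0)) : Tendsto x l (𝓝 0) := by
  rw [Metric.tendsto_nhds]
  intro η hη
  have hα' : ∀ᶠ t in l, α t < μ * η / 2 := hα.eventually_lt_const (by positivity)
  have hβ' : ∀ᶠ t in l, β t < μ * η ^ 2 / 2 := hβ.eventually_lt_const (by positivity)
  filter_upwards [hx, hineq, hα', hβ'] with t h1 h2 h3 h4
  rw [Real.dist_eq, sub_zero, abs_of_nonneg h1]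
  by_contra hcon
  push_neg at hcon
  have hx0 : 0 < x t := lt_of_lt_of_le hη hcon
  nlinarith [mul_lt_mul_of_pos_right h3 hx0,
    mul_le_mul_of_nonneg_left hcon (le_of_lt (half_pos hμ)), sq_nonneg (x t - η)]


/-- Theorem 3.9 / `thm:diff_S`.
Under the standing and differentiability assumptions, the local solution map of
`0 ∈ A(y,u) + B(y,u)` is directionally differentiable at `u*`; the derivative `δ` in
direction `h` is the unique solution of `0 ∈ A'(y*,u*;δ,h) + DB(δ,h)`. -/
theorem stmt_7
    {Y : Type*} [NormedAddCommGroup Y] [InnerProductSpace ℝ Y] [CompleteSpace Y]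
    {U : Type*} [NormedAddCommGroup U] [NormedSpace ℝ U] [CompleteSpace U]
    (A : Y → U → Y) (B : Y → U → Set Y) (𝒰 : Set U) (ystar : Y) (ustar : U)
    (h𝒰 : 𝒰 ∈ 𝓝 ustar) (hustar : ustar ∈ 𝒰)
    (ε μA LA : ℝ) (hε : 0 < ε) (hμA : 0 < μA) (hLA : 0 < LA)
    -- standing assumptions
    (hmonoA : ∀ u ∈ 𝒰, ∀ y₁ ∈ closedBall ystar ε, ∀ y₂ ∈ closedBall ystar ε,
      μA * ‖y₂ - y₁‖ ^ 2 ≤ ⟪A y₂ u - A y₁ u, y₂ - y₁⟫)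
    (hlipA : ∀ u ∈ 𝒰, ∀ y₁ ∈ closedBall ystar ε, ∀ y₂ ∈ closedBall ystar ε,
      ‖A y₂ u - A y₁ u‖ ≤ LA * ‖y₂ - y₁‖)
    (hB : ∀ u ∈ 𝒰, IsMaxMonotone (fun y => B y u))
    -- (y*, u*) solves the generalized equation
    (hsol : -A ystar ustar ∈ B ystar ustar)
    -- A is directionally differentiable at (y*, u*) with derivative A'
    (A' : Y → U → Y)
    (hA' : ∀ (δ : Y) (h : U),
      Tendsto (fun t : ℝ => t⁻¹ • (A (ystar + t • δ) (ustar + t • h) - A ystar ustar))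
        (𝓝[>] 0) (𝓝 (A' δ h)))
    -- the resolvent J_B
    (J : Y → U → Y)
    (hJ : ∀ q : Y, ∀ u ∈ 𝒰, q - J q u ∈ B (J q u) u)
    -- J_B is directionally differentiable at (q*, u*), q* = y* − A(y*,u*), with derivative J'
    (J' : Y → U → Y)
    (hJ' : ∀ (k : Y) (h : U),
      Tendsto (fun t : ℝ =>
          t⁻¹ • (J (ystar - A ystar ustar + t • k) (ustar + t • h)
            - J (ystar - A ystar ustar) ustar))
        (𝓝[>] 0) (𝓝 (J' k h)))
    -- right-continuity of the resolvent in the parameter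
    (hJrc : ∀ (v : Y) (h : U),
      Tendsto (fun t : ℝ => J v (ustar + t • h)) (𝓝[>] 0) (𝓝 (J v ustar))) :
    ∀ h : U, ∃ t₀ > (0 : ℝ), ∃ S : ℝ → Y,
      S 0 = ystar ∧
      (∀ t ∈ Set.Icc (0 : ℝ) t₀,
        (S t ∈ closedBall ystar ε ∧
          -A (S t) (ustar + t • h) ∈ B (S t) (ustar + t • h)) ∧
        (∀ y ∈ closedBall ystar ε,
          -A y (ustar + t • h) ∈ B y (ustar + t • h) → y = S t)) ∧
      ∃ δ : Y,
        ((∃ k : Y, -A' δ h = k - δ ∧ δ = J' k h) ∧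
          ∀ δ' : Y, (∃ k : Y, -A' δ' h = k - δ' ∧ δ' = J' k h) → δ' = δ) ∧
        Tendsto (fun t : ℝ => t⁻¹ • (S t - ystar)) (𝓝[>] 0) (𝓝 δ) := by
  intro h
  classical
  -- constants
  set LL : ℝ := LA + μA with hLLdef
  have hLL : 0 < LL := by rw [hLLdef]; linarith
  have hμLL : μA ≤ LL := by rw [hLLdef]; linarith
  set γ : ℝ := μA / LL ^ 2 with hγdef
  have hγpos : 0 < γ := by rw [hγdef]; positivity
  set c : ℝ := Real.sqrt (1 - μA ^ 2 / LL ^ 2) with hcdef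
  have hc0 : 0 ≤ c := Real.sqrt_nonneg _
  have hLL2 : (0:ℝ) < LL ^ 2 := by positivity
  have hx0 : 0 ≤ 1 - μA ^ 2 / LL ^ 2 := by
    rw [sub_nonneg, div_le_one hLL2]; nlinarith
  have hc1 : c < 1 := by
    rw [hcdef]
    have h1 : 1 - μA ^ 2 / LL ^ 2 < 1 := by
      have : 0 < μA ^ 2 / LL ^ 2 := by positivity
      linarith
    calc Real.sqrt (1 - μA ^ 2 / LL ^ 2) < Real.sqrt 1 := Real.sqrt_lt_sqrt hx0 h1
      _ = 1 := Real.sqrt_one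
  -- the neighborhood in the parameter
  obtain ⟨r, hr, hballr⟩ := Metric.mem_nhds_iff.1 h𝒰
  set t₁ : ℝ := r / (‖h‖ + 1) with ht₁def
  have hh1 : (0:ℝ) < ‖h‖ + 1 := by positivity
  have ht₁ : 0 < t₁ := by rw [ht₁def]; positivity
  have hu : ∀ t ∈ Icc (0:ℝ) t₁, ustar + t • h ∈ 𝒰 := by
    rintro t ⟨ht0, htt⟩
    apply hballr
    rw [mem_ball, dist_eq_norm, add_sub_cancel_left, norm_smul, Real.norm_eq_abs,
      abs_of_nonneg ht0]
    calc t * ‖h‖ ≤ t₁ * ‖h‖ := mul_le_mul_of_nonneg_right htt (norm_nonneg h)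
      _ < r := by
          rw [ht₁def, div_mul_eq_mul_div, div_lt_iff₀ hh1]
          nlinarith [norm_nonneg h]
  have hu0 : ustar + (0:ℝ) • h = ustar := by simp
  -- the parametrized operator family and the scaled resolvents
  have monoB : ∀ t ∈ Icc (0:ℝ) t₁, ∀ ⦃y₁ y₂ ξ₁ ξ₂ : Y⦄,
      ξ₁ ∈ B y₁ (ustar + t • h) → ξ₂ ∈ B y₂ (ustar + t • h) → 0 ≤ ⟪ξ₂ - ξ₁, y₂ - y₁⟫ :=
    fun t ht => (hB _ (hu t ht)).1
  have hRBres : ResProp (fun t y => B y (ustar + t • h)) t₁ 1 (fun t q => J q (ustar + t • h)) :=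
    fun t ht q => ⟨q - J q (ustar + t • h), hJ q _ (hu t ht), (one_smul ℝ _).symm⟩
  have hRBc : ContProp (fun t q => J q (ustar + t • h)) := by
    intro q
    have h1 := hJrc q h
    simp only [hu0]
    exact h1
  obtain ⟨Rγ, hRγres, hRγc⟩ := cascade (fun t y => B y (ustar + t • h)) t₁ ht₁ monoB hRBres hRBc hγpos
  have hRγnon : ∀ t ∈ Icc (0:ℝ) t₁, ∀ q q' : Y, ‖Rγ t q' - Rγ t q‖ ≤ ‖q' - q‖ :=
    fun t ht q q' => hRγres.nonexp hγpos.le monoB ht q q'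
  have h0t₁ : (0:ℝ) ∈ Icc (0:ℝ) t₁ := ⟨le_rfl, ht₁.le⟩
  -- ystar is the γ-resolvent at t = 0
  have hfix0 : Rγ 0 (ystar - γ • A ystar ustar) = ystar := by
    apply aux_res_unique (monoB 0 h0t₁) hγpos.le (hRγres 0 h0t₁ _)
    refine ⟨-A ystar ustar, ?_, ?_⟩
    · show -A ystar ustar ∈ B ystar (ustar + (0:ℝ) • h)
      rw [hu0]; exact hsol
    · rw [smul_neg]
      abel
  -- A(ystar, ·) is right-continuous along the direction h
  have hAy0 : Tendsto (fun t : ℝ => A ystar (ustar + t • h) - A ystar ustar) (𝓝[>] 0) (𝓝 0) := by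
    have hq := hA' 0 h
    have hq' : Tendsto (fun t : ℝ => t⁻¹ • (A ystar (ustar + t • h) - A ystar ustar))
        (𝓝[>] 0) (𝓝 (A' 0 h)) := by simpa using hq
    have hid : Tendsto (fun t : ℝ => t) (𝓝[>] (0:ℝ)) (𝓝 0) :=
      tendsto_id.mono_right nhdsWithin_le_nhds
    have h2 := hid.smul hq'
    rw [zero_smul] at h2
    apply h2.congr'
    filter_upwards [self_mem_nhdsWithin] with t ht
    rw [smul_inv_smul₀ (ne_of_gt ht)]
  -- the quantity β and its convergence to 0
  set β : ℝ → ℝ := fun t => ‖Rγ t (ystar - γ • A ystar (ustar + t • h)) - ystar‖ with hβdef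
  have hβ : Tendsto β (𝓝[>] 0) (𝓝 0) := by
    apply squeeze_zero' (Eventually.of_forall fun t => norm_nonneg _)
      (g := fun t => γ * ‖A ystar (ustar + t • h) - A ystar ustar‖
        + ‖Rγ t (ystar - γ • A ystar ustar) - Rγ 0 (ystar - γ • A ystar ustar)‖)
    · filter_upwards [Ioc_mem_nhdsGT_of_mem (⟨le_rfl, ht₁⟩ : (0:ℝ) ∈ Ico 0 t₁)] with t ht
      have htIcc : t ∈ Icc (0:ℝ) t₁ := ⟨ht.1.le, ht.2⟩
      have e1 : β t ≤ ‖Rγ t (ystar - γ • A ystar (ustar + t • h))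
            - Rγ t (ystar - γ • A ystar ustar)‖
          + ‖Rγ t (ystar - γ • A ystar ustar) - ystar‖ := by
        rw [hβdef]
        exact norm_sub_le_norm_sub_add_norm_sub _ _ _
      have e2 : ‖Rγ t (ystar - γ • A ystar (ustar + t • h))
            - Rγ t (ystar - γ • A ystar ustar)‖
          ≤ γ * ‖A ystar (ustar + t • h) - A ystar ustar‖ := by
        refine le_trans (hRγnon t htIcc _ _) ?_
        have e3 : (ystar - γ • A ystar (ustar + t • h)) - (ystar - γ • A ystar ustar)
            = -(γ • (A ystar (ustar + t • h) - A ystar ustar)) := by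
          rw [smul_sub]; abel
        rw [e3, norm_neg, norm_smul, Real.norm_eq_abs, abs_of_pos hγpos]
      have e4 : ‖Rγ t (ystar - γ • A ystar ustar) - ystar‖
          = ‖Rγ t (ystar - γ • A ystar ustar) - Rγ 0 (ystar - γ • A ystar ustar)‖ := by
        rw [hfix0]
      linarith [e1, e2, e4.le]
    · have hb1 : Tendsto (fun t : ℝ => γ * ‖A ystar (ustar + t • h) - A ystar ustar‖)
          (𝓝[>] 0) (𝓝 0) := by
        have := (tendsto_iff_norm_sub_tendsto_zero.1 hAy0)
        simp only [sub_zero] at this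
        simpa using this.const_mul γ
      have hb2 : Tendsto (fun t : ℝ => ‖Rγ t (ystar - γ • A ystar ustar)
          - Rγ 0 (ystar - γ • A ystar ustar)‖) (𝓝[>] 0) (𝓝 0) :=
        tendsto_iff_norm_sub_tendsto_zero.1 (hRγc (ystar - γ • A ystar ustar))
      simpa using hb1.add hb2
  -- choose t₀
  have hev : ∀ᶠ t in 𝓝[>] (0:ℝ), β t < (1 - c) * ε :=
    hβ.eventually_lt_const (by nlinarith)
  obtain ⟨t₂, ht₂, hsub⟩ := mem_nhdsGT_iff_exists_Ioc_subset.1 hev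
  set t₀ : ℝ := min t₂ t₁ with ht₀def
  have ht₀pos : 0 < t₀ := lt_min ht₂ ht₁
  have ht₀t₁ : t₀ ≤ t₁ := min_le_right _ _
  -- existence of solutions on [0, t₀]
  have hexε : ∀ t ∈ Icc (0:ℝ) t₀, ∃ y, y ∈ closedBall ystar ε ∧
      -A y (ustar + t • h) ∈ B y (ustar + t • h) := by
    rintro t ⟨ht0, htt0⟩
    rcases eq_or_lt_of_le ht0 with h0 | h0
    · refine ⟨ystar, mem_closedBall_self hε.le, ?_⟩
      rw [← h0, hu0]; exact hsol
    · have htIcc : t ∈ Icc (0:ℝ) t₁ := ⟨ht0, le_trans htt0 ht₀t₁⟩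
      have huT : ustar + t • h ∈ 𝒰 := hu t htIcc
      have hβt : β t < (1 - c) * ε := hsub ⟨h0, le_trans htt0 (min_le_left _ _)⟩
      set F : Y → Y := fun y => Rγ t (y - γ • A y (ustar + t • h)) with hFdef
      have hFc : ∀ x ∈ closedBall ystar ε, ∀ y ∈ closedBall ystar ε,
          ‖F x - F y‖ ≤ c * ‖x - y‖ := by
        intro x hx y hy
        have h1 : ‖F x - F y‖ ≤ ‖(x - γ • A x (ustar + t • h))
            - (y - γ • A y (ustar + t • h))‖ := hRγnon t htIcc _ _
        have h2 : (x - γ • A x (ustar + t • h)) - (y - γ • A y (ustar + t • h))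
            = (x - y) - γ • (A x (ustar + t • h) - A y (ustar + t • h)) := by
          rw [smul_sub]; abel
        rw [h2] at h1
        refine le_trans h1 ?_
        have hm := hmonoA _ huT y hy x hx
        have hl := hlipA _ huT y hy x hx
        have hl' : ‖A x (ustar + t • h) - A y (ustar + t • h)‖ ≤ LL * ‖x - y‖ := by
          refine le_trans hl ?_
          have : LA ≤ LL := by rw [hLLdef]; linarith
          nlinarith [norm_nonneg (x - y)]
        rw [hγdef, hcdef]
        exact aux_contraction_est hμA hμLL hm hl'
      have hmaps : MapsTo F (closedBall ystar ε) (closedBall ystar ε) := by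
        intro y hy
        rw [mem_closedBall, dist_eq_norm]
        have h1 : ‖F y - Rγ t (ystar - γ • A ystar (ustar + t • h))‖
            ≤ ‖(y - γ • A y (ustar + t • h)) - (ystar - γ • A ystar (ustar + t • h))‖ :=
          hRγnon t htIcc _ _
        have h2 : (y - γ • A y (ustar + t • h)) - (ystar - γ • A ystar (ustar + t • h))
            = (y - ystar) - γ • (A y (ustar + t • h) - A ystar (ustar + t • h)) := by
          rw [smul_sub]; abel
        rw [h2] at h1
        have hm := hmonoA _ huT ystar (mem_closedBall_self hε.le) y hy
        have hl := hlipA _ huT ystar (mem_closedBall_self hε.le) y hy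
        have hl' : ‖A y (ustar + t • h) - A ystar (ustar + t • h)‖ ≤ LL * ‖y - ystar‖ := by
          refine le_trans hl ?_
          have : LA ≤ LL := by rw [hLLdef]; linarith
          nlinarith [norm_nonneg (y - ystar)]
        have h3 : ‖(y - ystar) - γ • (A y (ustar + t • h) - A ystar (ustar + t • h))‖
            ≤ c * ‖y - ystar‖ := by
          rw [hγdef, hcdef]
          exact aux_contraction_est hμA hμLL hm hl'
        have h4 : ‖F y - ystar‖ ≤ ‖F y - Rγ t (ystar - γ • A ystar (ustar + t • h))‖
            + ‖Rγ t (ystar - γ • A ystar (ustar + t • h)) - ystar‖ :=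
          norm_sub_le_norm_sub_add_norm_sub _ _ _
        have h5 : ‖y - ystar‖ ≤ ε := by rwa [mem_closedBall, dist_eq_norm] at hy
        have h6 : ‖Rγ t (ystar - γ • A ystar (ustar + t • h)) - ystar‖ = β t := rfl
        nlinarith [h4, h1, h3, hβt, norm_nonneg (F y - Rγ t (ystar - γ • A ystar (ustar + t • h)))]
      obtain ⟨y, hymem, hyfix⟩ := aux_exists_fixedPt hc0 hc1 isClosed_closedBall
        (mem_closedBall_self hε.le) F hmaps
        (fun x hx y hy => by rw [dist_eq_norm, dist_eq_norm]; exact hFc x hx y hy)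
      refine ⟨y, hymem, ?_⟩
      obtain ⟨x, hxmem, hqx⟩ := hRγres t htIcc (y - γ • A y (ustar + t • h))
      have hRy : Rγ t (y - γ • A y (ustar + t • h)) = y := hyfix
      rw [hRy] at hqx hxmem
      have hx' : γ • x = γ • (-A y (ustar + t • h)) := by
        rw [smul_neg, ← hqx]; abel
      have hx'' : x = -A y (ustar + t • h) := smul_right_injective Y (ne_of_gt hγpos) hx'
      rw [← hx'']
      exact hxmem
  -- uniqueness of solutions in the ball
  have huniq : ∀ t ∈ Icc (0:ℝ) t₁, ∀ y ∈ closedBall ystar ε, ∀ y' ∈ closedBall ystar ε,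
      -A y (ustar + t • h) ∈ B y (ustar + t • h) →
      -A y' (ustar + t • h) ∈ B y' (ustar + t • h) → y = y' := by
    intro t ht y hy y' hy' hby hby'
    have hm := monoB t ht hby hby'
    have hmA := hmonoA _ (hu t ht) y hy y' hy'
    have hinner : ⟪(-A y' (ustar + t • h)) - (-A y (ustar + t • h)), y' - y⟫
        = -⟪A y' (ustar + t • h) - A y (ustar + t • h), y' - y⟫ := by
      rw [← inner_neg_left]
      congr 1
      abel
    rw [hinner] at hm
    have h0 : ‖y' - y‖ ^ 2 ≤ 0 := by nlinarith
    have h1 : ‖y' - y‖ ^ 2 = 0 := le_antisymm h0 (by positivity)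
    have h2 : y' - y = 0 := by
      rw [pow_eq_zero_iff (two_ne_zero)] at h1
      exact norm_eq_zero.1 h1
    exact (sub_eq_zero.1 h2).symm
  -- the solution map
  obtain ⟨S, hSmem⟩ : ∃ S : ℝ → Y, ∀ t ∈ Icc (0:ℝ) t₀, S t ∈ closedBall ystar ε ∧
      -A (S t) (ustar + t • h) ∈ B (S t) (ustar + t • h) := by
    choose f hf1 hf2 using hexε
    refine ⟨fun t => if ht : t ∈ Icc (0:ℝ) t₀ then f t ht else ystar, fun t ht => ?_⟩
    simp only [dif_pos ht]
    exact ⟨hf1 t ht, hf2 t ht⟩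
  have h0t₀ : (0:ℝ) ∈ Icc (0:ℝ) t₀ := ⟨le_rfl, ht₀pos.le⟩
  have hS0 : S 0 = ystar := by
    have hspec := hSmem 0 h0t₀
    apply huniq 0 h0t₁ (S 0) hspec.1 ystar (mem_closedBall_self hε.le) hspec.2
    rw [hu0]; exact hsol
  refine ⟨t₀, ht₀pos, S, hS0, ?_, ?_⟩
  · intro t ht
    refine ⟨hSmem t ht, ?_⟩
    intro y hy hin
    exact huniq t ⟨ht.1, le_trans ht.2 ht₀t₁⟩ y hy (S t) (hSmem t ht).1 hin (hSmem t ht).2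
  -- ================= derivative part =================
  set qstar : Y := ystar - A ystar ustar with hqstardef
  -- J at (qstar, ustar) is ystar
  have hJq : J qstar ustar = ystar := by
    apply aux_res_unique (T := fun y => B y ustar) (hB ustar hustar).1 zero_le_one
      ⟨qstar - J qstar ustar, hJ qstar ustar hustar, (one_smul ℝ _).symm⟩
    refine ⟨-A ystar ustar, hsol, ?_⟩
    rw [one_smul, hqstardef]; abel
  -- firm nonexpansiveness of J'
  have hfirmJ' : ∀ k₁ k₂ : Y, ‖J' k₂ h - J' k₁ h‖ ^ 2 ≤ ⟪k₂ - k₁, J' k₂ h - J' k₁ h⟫ := by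
    intro k₁ k₂
    have hQ₁ := hJ' k₁ h
    have hQ₂ := hJ' k₂ h
    apply le_of_tendsto_of_tendsto ((hQ₂.sub hQ₁).norm.pow 2)
      (Filter.Tendsto.inner tendsto_const_nhds (hQ₂.sub hQ₁))
    filter_upwards [Ioc_mem_nhdsGT_of_mem (⟨le_rfl, ht₁⟩ : (0:ℝ) ∈ Ico 0 t₁)] with t ht
    have htpos : 0 < t := ht.1
    have hne : t ≠ 0 := ne_of_gt htpos
    have hmem := hu t ⟨htpos.le, ht.2⟩
    have hf := aux_firm (γ := (1:ℝ)) zero_le_one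
      ((hB _ hmem).1 (hJ (qstar + t • k₁) _ hmem) (hJ (qstar + t • k₂) _ hmem))
      (one_smul ℝ _).symm (one_smul ℝ _).symm
    have hdiff : J (qstar + t • k₂) (ustar + t • h) - J (qstar + t • k₁) (ustar + t • h)
        = t • (t⁻¹ • (J (qstar + t • k₂) (ustar + t • h) - J qstar ustar)
             - t⁻¹ • (J (qstar + t • k₁) (ustar + t • h) - J qstar ustar)) := by
      rw [smul_sub, smul_inv_smul₀ hne, smul_inv_smul₀ hne]; abel
    have hqd : (qstar + t • k₂) - (qstar + t • k₁) = t • (k₂ - k₁) := by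
      rw [smul_sub]; abel
    rw [hdiff, hqd, real_inner_smul_left, real_inner_smul_right, norm_smul,
      Real.norm_eq_abs, abs_of_pos htpos, mul_pow] at hf
    nlinarith [hf, mul_pos htpos htpos]
  -- strong monotonicity and Lipschitz continuity of A'
  have hA'two : ∀ δ₁ δ₂ : Y, μA * ‖δ₂ - δ₁‖ ^ 2 ≤ ⟪A' δ₂ h - A' δ₁ h, δ₂ - δ₁⟫ ∧
      ‖A' δ₂ h - A' δ₁ h‖ ≤ LL * ‖δ₂ - δ₁‖ := by
    intro δ₁ δ₂
    have hMpos : (0:ℝ) < ‖δ₁‖ + ‖δ₂‖ + 1 := by positivity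
    set M : ℝ := ‖δ₁‖ + ‖δ₂‖ + 1 with hM
    set Tm : ℝ := min t₁ (ε / M) with hTm
    have hTmpos : 0 < Tm := lt_min ht₁ (by positivity)
    have hballδ : ∀ t ∈ Ioc (0:ℝ) Tm, ∀ (d : Y), ‖d‖ ≤ M →
        ystar + t • d ∈ closedBall ystar ε := by
      intro t ht d hd
      rw [mem_closedBall, dist_eq_norm, add_sub_cancel_left, norm_smul, Real.norm_eq_abs,
        abs_of_pos ht.1]
      have h1 : t ≤ ε / M := le_trans ht.2 (min_le_right _ _)
      calc t * ‖d‖ ≤ (ε / M) * M := by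
            apply mul_le_mul h1 hd (norm_nonneg d) (by positivity)
        _ = ε := by field_simp
    have hd₁ : ‖δ₁‖ ≤ M := by rw [hM]; linarith [norm_nonneg δ₂]
    have hd₂ : ‖δ₂‖ ≤ M := by rw [hM]; linarith [norm_nonneg δ₁]
    have hptwise : ∀ t ∈ Ioc (0:ℝ) Tm,
        (μA * ‖δ₂ - δ₁‖ ^ 2 ≤ ⟪t⁻¹ • (A (ystar + t • δ₂) (ustar + t • h) - A ystar ustar)
             - t⁻¹ • (A (ystar + t • δ₁) (ustar + t • h) - A ystar ustar), δ₂ - δ₁⟫)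
        ∧ ‖t⁻¹ • (A (ystar + t • δ₂) (ustar + t • h) - A ystar ustar)
             - t⁻¹ • (A (ystar + t • δ₁) (ustar + t • h) - A ystar ustar)‖
           ≤ LL * ‖δ₂ - δ₁‖ := by
      intro t ht
      have htpos : 0 < t := ht.1
      have hne : t ≠ 0 := ne_of_gt htpos
      have htIcc : t ∈ Icc (0:ℝ) t₁ := ⟨htpos.le, le_trans ht.2 (min_le_left _ _)⟩
      have huT := hu t htIcc
      have hb₁ := hballδ t ht δ₁ hd₁
      have hb₂ := hballδ t ht δ₂ hd₂
      have e2 : (ystar + t • δ₂) - (ystar + t • δ₁) = t • (δ₂ - δ₁) := by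
        rw [smul_sub]; abel
      have e3 : A (ystar + t • δ₂) (ustar + t • h) - A (ystar + t • δ₁) (ustar + t • h)
          = t • (t⁻¹ • (A (ystar + t • δ₂) (ustar + t • h) - A ystar ustar)
               - t⁻¹ • (A (ystar + t • δ₁) (ustar + t • h) - A ystar ustar)) := by
        rw [smul_sub, smul_inv_smul₀ hne, smul_inv_smul₀ hne]; abel
      constructor
      · have hm := hmonoA _ huT (ystar + t • δ₁) hb₁ (ystar + t • δ₂) hb₂
        rw [e2, e3, real_inner_smul_left, real_inner_smul_right, norm_smul,
          Real.norm_eq_abs, abs_of_pos htpos, mul_pow] at hm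
        nlinarith [hm, mul_pos htpos htpos]
      · have hl := hlipA _ huT (ystar + t • δ₁) hb₁ (ystar + t • δ₂) hb₂
        rw [e2, e3, norm_smul, norm_smul, Real.norm_eq_abs, abs_of_pos htpos] at hl
        have hLALL : LA ≤ LL := by rw [hLLdef]; linarith
        have h4 : ‖t⁻¹ • (A (ystar + t • δ₂) (ustar + t • h) - A ystar ustar)
             - t⁻¹ • (A (ystar + t • δ₁) (ustar + t • h) - A ystar ustar)‖
            ≤ LA * ‖δ₂ - δ₁‖ := by nlinarith [hl]
        nlinarith [h4, norm_nonneg (δ₂ - δ₁)]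
    constructor
    · apply le_of_tendsto_of_tendsto (tendsto_const_nhds (α := ℝ))
        (Filter.Tendsto.inner (((hA' δ₂ h).sub (hA' δ₁ h))) tendsto_const_nhds)
      filter_upwards [Ioc_mem_nhdsGT_of_mem (⟨le_rfl, hTmpos⟩ : (0:ℝ) ∈ Ico 0 Tm)] with t ht
      exact (hptwise t ht).1
    · apply le_of_tendsto_of_tendsto (((hA' δ₂ h).sub (hA' δ₁ h)).norm)
        (tendsto_const_nhds (α := ℝ))
      filter_upwards [Ioc_mem_nhdsGT_of_mem (⟨le_rfl, hTmpos⟩ : (0:ℝ) ∈ Ico 0 Tm)] with t ht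
      exact (hptwise t ht).2
  -- the derivative operator T' and its resolvents
  have monoT' : ∀ t' ∈ Icc (0:ℝ) 1, ∀ ⦃y₁ y₂ ξ₁ ξ₂ : Y⦄,
      ξ₁ ∈ {x : Y | y₁ = J' (y₁ + x) h} → ξ₂ ∈ {x : Y | y₂ = J' (y₂ + x) h} →
      0 ≤ ⟪ξ₂ - ξ₁, y₂ - y₁⟫ := by
    intro t' ht' y₁ y₂ x₁ x₂ h₁ h₂
    have h₁' : y₁ = J' (y₁ + x₁) h := h₁
    have h₂' : y₂ = J' (y₂ + x₂) h := h₂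
    have hf := hfirmJ' (y₁ + x₁) (y₂ + x₂)
    rw [← h₁', ← h₂'] at hf
    have hexp : ⟪(y₂ + x₂) - (y₁ + x₁), y₂ - y₁⟫ = ‖y₂ - y₁‖ ^ 2 + ⟪x₂ - x₁, y₂ - y₁⟫ := by
      have e : (y₂ + x₂) - (y₁ + x₁) = (y₂ - y₁) + (x₂ - x₁) := by abel
      rw [e, inner_add_left, real_inner_self_eq_norm_sq]
    rw [hexp] at hf
    linarith
  have hR'1 : ResProp (fun _ : ℝ => fun d : Y => {x : Y | d = J' (d + x) h}) 1 1
      (fun _ q => J' q h) := by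
    intro t' ht' q
    refine ⟨q - J' q h, ?_, (one_smul ℝ _).symm⟩
    show J' q h = J' (J' q h + (q - J' q h)) h
    rw [add_sub_cancel]
  obtain ⟨R', hR'res, -⟩ := cascade (fun _ : ℝ => fun d : Y => {x : Y | d = J' (d + x) h})
    1 one_pos monoT' hR'1 (fun q => tendsto_const_nhds) hγpos
  have h0t1' : (0:ℝ) ∈ Icc (0:ℝ) 1 := ⟨le_rfl, zero_le_one⟩
  have hR'non : ∀ q q' : Y, ‖R' 0 q' - R' 0 q‖ ≤ ‖q' - q‖ :=
    hR'res.nonexp hγpos.le monoT' h0t1'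
  -- Banach for the derivative equation
  have hF'c : ∀ x y : Y, dist (R' 0 (x - γ • A' x h)) (R' 0 (y - γ • A' y h)) ≤ c * dist x y := by
    intro x y
    rw [dist_eq_norm, dist_eq_norm]
    have h1 : ‖R' 0 (x - γ • A' x h) - R' 0 (y - γ • A' y h)‖
        ≤ ‖(x - γ • A' x h) - (y - γ • A' y h)‖ := hR'non _ _
    have h2 : (x - γ • A' x h) - (y - γ • A' y h) = (x - y) - γ • (A' x h - A' y h) := by
      rw [smul_sub]; abel
    rw [h2] at h1
    refine le_trans h1 ?_
    rw [hγdef, hcdef]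
    exact aux_contraction_est hμA hμLL (hA'two y x).1 (hA'two y x).2
  obtain ⟨δ, -, hδfix⟩ := aux_exists_fixedPt hc0 hc1 isClosed_univ (mem_univ (0:Y))
    (fun d => R' 0 (d - γ • A' d h)) (mapsTo_univ _ _) (fun x _ y _ => hF'c x y)
  have hδJ : δ = J' (δ - A' δ h) h := by
    obtain ⟨x, hxmem, hqx⟩ := hR'res 0 h0t1' (δ - γ • A' δ h)
    have hRδ : R' 0 (δ - γ • A' δ h) = δ := hδfix
    rw [hRδ] at hqx hxmem
    have hx' : γ • x = γ • (-A' δ h) := by rw [smul_neg, ← hqx]; abel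
    have hx'' : x = -A' δ h := smul_right_injective Y (ne_of_gt hγpos) hx'
    have hmem' : δ = J' (δ + x) h := hxmem
    rw [hx''] at hmem'
    have e : δ + -A' δ h = δ - A' δ h := by abel
    rw [e] at hmem'
    exact hmem'
  -- uniqueness of δ
  have huniqδ : ∀ δ' : Y, (∃ k : Y, -A' δ' h = k - δ' ∧ δ' = J' k h) → δ' = δ := by
    rintro δ' ⟨k', hk'1, hk'2⟩
    have hk'eq : k' = δ' - A' δ' h := by
      have h1 : k' - δ' = -A' δ' h := hk'1.symm
      have h2 : k' = -A' δ' h + δ' := by rw [← h1]; abel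
      rw [h2]; abel
    have hf := hfirmJ' (δ - A' δ h) k'
    rw [← hδJ, ← hk'2] at hf
    have hexp : ⟪k' - (δ - A' δ h), δ' - δ⟫ = ‖δ' - δ‖ ^ 2 + ⟪A' δ h - A' δ' h, δ' - δ⟫ := by
      have e : k' - (δ - A' δ h) = (δ' - δ) + (A' δ h - A' δ' h) := by rw [hk'eq]; abel
      rw [e, inner_add_left, real_inner_self_eq_norm_sq]
    rw [hexp] at hf
    have hm := (hA'two δ δ').1
    have hflip : ⟪A' δ h - A' δ' h, δ' - δ⟫ = -⟪A' δ' h - A' δ h, δ' - δ⟫ := by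
      rw [← inner_neg_left]; congr 1; abel
    rw [hflip] at hf
    have h0 : ‖δ' - δ‖ ^ 2 ≤ 0 := by nlinarith
    have h1 : ‖δ' - δ‖ ^ 2 = 0 := le_antisymm h0 (by positivity)
    have h2 : δ' - δ = 0 := by
      rw [pow_eq_zero_iff two_ne_zero] at h1
      exact norm_eq_zero.1 h1
    exact sub_eq_zero.1 h2
  -- convergence of the difference quotients
  have hg : Tendsto (fun t : ℝ => t⁻¹ • (J (qstar + t • (δ - A' δ h)) (ustar + t • h) - ystar))
      (𝓝[>] 0) (𝓝 δ) := by
    have h1 := hJ' (δ - A' δ h) h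
    rw [hJq] at h1
    rwa [← hδJ] at h1
  have hb : Tendsto (fun t : ℝ => t⁻¹ • (A (ystar + t • δ) (ustar + t • h) - A ystar ustar))
      (𝓝[>] 0) (𝓝 (A' δ h)) := hA' δ h
  have hσ0 : Tendsto (fun t : ℝ =>
      ‖t⁻¹ • (J (qstar + t • (δ - A' δ h)) (ustar + t • h) - ystar) - δ‖) (𝓝[>] 0) (𝓝 0) :=
    tendsto_iff_norm_sub_tendsto_zero.1 hg
  have hρ0 : Tendsto (fun t : ℝ =>
      ‖t⁻¹ • (A (ystar + t • δ) (ustar + t • h) - A ystar ustar) - A' δ h‖) (𝓝[>] 0) (𝓝 0) :=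
    tendsto_iff_norm_sub_tendsto_zero.1 hb
  set t₃ : ℝ := min t₀ (ε / (‖δ‖ + 1)) with ht₃def
  have ht₃pos : 0 < t₃ := lt_min ht₀pos (by positivity)
  have hkey : ∀ t ∈ Ioc (0:ℝ) t₃,
      μA * ‖t⁻¹ • (S t - ystar) - δ‖ ^ 2 ≤
        ((‖t⁻¹ • (J (qstar + t • (δ - A' δ h)) (ustar + t • h) - ystar) - δ‖
          + ‖t⁻¹ • (A (ystar + t • δ) (ustar + t • h) - A ystar ustar) - A' δ h‖
          + LL * ‖t⁻¹ • (J (qstar + t • (δ - A' δ h)) (ustar + t • h) - ystar) - δ‖)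
            * ‖t⁻¹ • (S t - ystar) - δ‖
        + (‖t⁻¹ • (J (qstar + t • (δ - A' δ h)) (ustar + t • h) - ystar) - δ‖
          + ‖t⁻¹ • (A (ystar + t • δ) (ustar + t • h) - A ystar ustar) - A' δ h‖)
            * ‖t⁻¹ • (J (qstar + t • (δ - A' δ h)) (ustar + t • h) - ystar) - δ‖) := by
    intro t ht
    have htpos : 0 < t := ht.1
    have hne : t ≠ 0 := ne_of_gt htpos
    have htt₀ : t ∈ Icc (0:ℝ) t₀ := ⟨htpos.le, le_trans ht.2 (min_le_left _ _)⟩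
    have htIcc : t ∈ Icc (0:ℝ) t₁ := ⟨htpos.le, le_trans htt₀.2 ht₀t₁⟩
    have huT := hu t htIcc
    have hSball := (hSmem t htt₀).1
    have hSin := (hSmem t htt₀).2
    have hδball : ystar + t • δ ∈ closedBall ystar ε := by
      rw [mem_closedBall, dist_eq_norm, add_sub_cancel_left, norm_smul, Real.norm_eq_abs,
        abs_of_pos htpos]
      have h1 : t ≤ ε / (‖δ‖ + 1) := le_trans ht.2 (min_le_right _ _)
      calc t * ‖δ‖ ≤ (ε / (‖δ‖ + 1)) * (‖δ‖ + 1) := by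
            apply mul_le_mul h1 (by linarith) (norm_nonneg δ) (by positivity)
        _ = ε := by field_simp
    apply aux_main_est (μ := μA) (L := LL) hLL.le (c' := A' δ h) rfl
    -- firm inequality (hA of aux_main_est)
    · have hf := aux_firm (γ := (1:ℝ)) zero_le_one
        ((hB _ huT).1 (hJ (qstar + t • (δ - A' δ h)) _ huT) hSin)
        (one_smul ℝ _).symm (by rw [one_smul]; abel :
          (S t - A (S t) (ustar + t • h)) - S t = (1:ℝ) • (-A (S t) (ustar + t • h)))
      have e1' : t • (t⁻¹ • (S t - ystar)
              - t⁻¹ • (J (qstar + t • (δ - A' δ h)) (ustar + t • h) - ystar))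
          = S t - J (qstar + t • (δ - A' δ h)) (ustar + t • h) := by
        rw [smul_sub, smul_inv_smul₀ hne, smul_inv_smul₀ hne]; abel
      have e4' : t • (t⁻¹ • (S t - ystar)
              - t⁻¹ • (A (S t) (ustar + t • h) - A ystar ustar) - (δ - A' δ h))
          = (S t - A (S t) (ustar + t • h)) - (qstar + t • (δ - A' δ h)) := by
        rw [smul_sub, smul_sub, smul_inv_smul₀ hne, smul_inv_smul₀ hne, hqstardef]
        abel
      exact aux_div_firm htpos e1'.symm e4'.symm hf
    -- strong monotonicity (hB of aux_main_est)
    · have hm := hmonoA _ huT (ystar + t • δ) hδball (S t) hSball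
      have e2 : S t - (ystar + t • δ) = t • (t⁻¹ • (S t - ystar) - δ) := by
        rw [smul_sub, smul_inv_smul₀ hne]; abel
      have e3 : A (S t) (ustar + t • h) - A (ystar + t • δ) (ustar + t • h)
          = t • (t⁻¹ • (A (S t) (ustar + t • h) - A ystar ustar)
              - t⁻¹ • (A (ystar + t • δ) (ustar + t • h) - A ystar ustar)) := by
        rw [smul_sub, smul_inv_smul₀ hne, smul_inv_smul₀ hne]; abel
      rw [e2, e3, real_inner_smul_left, real_inner_smul_right, norm_smul,
        Real.norm_eq_abs, abs_of_pos htpos, mul_pow] at hm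
      nlinarith [hm, mul_pos htpos htpos]
    -- Lipschitz (hC of aux_main_est)
    · have hl := hlipA _ huT (ystar + t • δ) hδball (S t) hSball
      have e2 : S t - (ystar + t • δ) = t • (t⁻¹ • (S t - ystar) - δ) := by
        rw [smul_sub, smul_inv_smul₀ hne]; abel
      have e3 : A (S t) (ustar + t • h) - A (ystar + t • δ) (ustar + t • h)
          = t • (t⁻¹ • (A (S t) (ustar + t • h) - A ystar ustar)
              - t⁻¹ • (A (ystar + t • δ) (ustar + t • h) - A ystar ustar)) := by
        rw [smul_sub, smul_inv_smul₀ hne, smul_inv_smul₀ hne]; abel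
      rw [e2, e3, norm_smul, norm_smul, Real.norm_eq_abs, abs_of_pos htpos] at hl
      have hLALL : LA ≤ LL := by rw [hLLdef]; linarith
      have h4 : ‖t⁻¹ • (A (S t) (ustar + t • h) - A ystar ustar)
          - t⁻¹ • (A (ystar + t • δ) (ustar + t • h) - A ystar ustar)‖
          ≤ LA * ‖t⁻¹ • (S t - ystar) - δ‖ := by nlinarith [hl]
      nlinarith [h4, norm_nonneg (t⁻¹ • (S t - ystar) - δ)]
    · exact le_refl _
    · exact le_refl _
  refine ⟨δ, ⟨⟨δ - A' δ h, by abel, hδJ⟩, huniqδ⟩, ?_⟩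
  rw [tendsto_iff_norm_sub_tendsto_zero]
  apply aux_tendsto_zero_of_sq_le hμA (Eventually.of_forall fun t => norm_nonneg _)
    _ (by simpa using (hσ0.add hρ0).add (hσ0.const_mul LL))
    (by simpa using (hσ0.add hρ0).mul hσ0)
  filter_upwards [Ioc_mem_nhdsGT_of_mem (⟨le_rfl, ht₃pos⟩ : (0:ℝ) ∈ Ico 0 t₃)] with t ht
  exact hkey t ht
end

section
/- Let B : Y × 𝒰 ⇉ Y be a parametrized maximally monotone operator (𝒰 ⊆ U a neighborhood of u*), fix (q*, u*) ∈ Y × 𝒰 and set y* := J_B(q*, u*). Then the following are equivalent: (i) there exists ρ₀ > 0 such that the resolvent J_{ρ₀B} is directionally differentiable at (y* + ρ₀(q* − y*), u*); (ii) for every ρ > 0, the resolvent J_{ρB} is directionally differentiable at (y* + ρ(q* − y*), u*). -/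
set_option maxHeartbeats 800000


open Filter Topology Metric Set
open scoped RealInnerProductSpace Pointwise

/-- A map `F : Y × U → Y` is directionally differentiable at `(q, u)`. -/
def DirDiffAt {Y : Type*} [NormedAddCommGroup Y] [InnerProductSpace ℝ Y]
    {U : Type*} [NormedAddCommGroup U] [NormedSpace ℝ U]
    (F : Y → U → Y) (q : Y) (u : U) : Prop :=
  ∀ (k : Y) (h : U), ∃ d : Y,
    Tendsto (fun t : ℝ => t⁻¹ • (F (q + t • k) (u + t • h) - F q u)) (𝓝[>] 0) (𝓝 d)

section Aux

variable {Y : Type*} [NormedAddCommGroup Y] [InnerProductSpace ℝ Y] [CompleteSpace Y]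
variable {U : Type*} [NormedAddCommGroup U] [NormedSpace ℝ U]

/-- Nonexpansiveness of the resolvent of a monotone operator. -/
lemma res_nonexp {B : Y → U → Set Y} {u : U}
    (hmono : ∀ ⦃y₁ y₂ ξ₁ ξ₂⦄, ξ₁ ∈ B y₁ u → ξ₂ ∈ B y₂ u → 0 ≤ ⟪ξ₂ - ξ₁, y₂ - y₁⟫)
    {ρ : ℝ} (hρ : 0 < ρ) {q q' y y' : Y}
    (hy : q - y ∈ ρ • B y u) (hy' : q' - y' ∈ ρ • B y' u) :
    ‖y' - y‖ ≤ ‖q' - q‖ := by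
  obtain ⟨ξ, hξ, hξe⟩ := hy
  obtain ⟨ξ', hξ', hξe'⟩ := hy'
  have hm := hmono hξ hξ'
  have h1 : (0:ℝ) ≤ ⟪(q' - y') - (q - y), y' - y⟫ := by
    have : ⟪(q' - y') - (q - y), y' - y⟫ = ρ * ⟪ξ' - ξ, y' - y⟫ := by
      rw [← hξe, ← hξe', ← smul_sub, real_inner_smul_left]
    rw [this]
    exact mul_nonneg hρ.le hm
  have h2 : ‖y' - y‖ ^ 2 ≤ ⟪q' - q, y' - y⟫ := by
    have he : (q' - y') - (q - y) = (q' - q) - (y' - y) := by abel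
    rw [he, inner_sub_left] at h1
    have := real_inner_self_eq_norm_sq (y' - y)
    linarith
  have h3 : ⟪q' - q, y' - y⟫ ≤ ‖q' - q‖ * ‖y' - y‖ := real_inner_le_norm _ _
  nlinarith [norm_nonneg (y' - y), norm_nonneg (q' - q)]

/-- The key step: directional differentiability of the resolvent at the reference point
transfers from parameter `ρ₀` to parameter `ρ` whenever `|1 - ρ₀/ρ| < 1`. -/
lemma stmt8_step {B : Y → U → Set Y} {𝒰 : Set U} {ustar : U}
    (h𝒰 : 𝒰 ∈ 𝓝 ustar) (hustar : ustar ∈ 𝒰)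
    (hB : ∀ u ∈ 𝒰, IsMaxMonotone (fun y => B y u))
    {J : ℝ → Y → U → Y}
    (hJ : ∀ ρ > (0:ℝ), ∀ q : Y, ∀ u ∈ 𝒰, q - J ρ q u ∈ ρ • B (J ρ q u) u)
    {ystar : Y} {w : Y} (hw : w ∈ B ystar ustar)
    {ρ₀ ρ : ℝ} (hρ₀ : 0 < ρ₀) (hρ : 0 < ρ) (hα : |1 - ρ₀ / ρ| < 1)
    (hdd : DirDiffAt (J ρ₀) (ystar + ρ₀ • w) ustar) :
    DirDiffAt (J ρ) (ystar + ρ • w) ustar := by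
  have hmono : ∀ u ∈ 𝒰, ∀ ⦃y₁ y₂ ξ₁ ξ₂ : Y⦄, ξ₁ ∈ B y₁ u → ξ₂ ∈ B y₂ u →
      0 ≤ ⟪ξ₂ - ξ₁, y₂ - y₁⟫ := fun u hu => (hB u hu).1
  -- uniqueness of the resolvent
  have heq : ∀ ρ' > (0:ℝ), ∀ u ∈ 𝒰, ∀ q y : Y, q - y ∈ ρ' • B y u → J ρ' q u = y := by
    intro ρ' hρ' u hu q y hy
    have h := res_nonexp (hmono u hu) hρ' (hJ ρ' hρ' q u hu) hy
    simp only [sub_self, norm_zero, norm_le_zero_iff, sub_eq_zero] at h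
    exact h.symm
  -- 1-Lipschitzness of the resolvent in `q`
  have hlip : ∀ ρ' > (0:ℝ), ∀ u ∈ 𝒰, ∀ p p' : Y,
      ‖J ρ' p u - J ρ' p' u‖ ≤ ‖p - p'‖ := fun ρ' hρ' u hu p p' =>
    res_nonexp (hmono u hu) hρ' (hJ ρ' hρ' p' u hu) (hJ ρ' hρ' p u hu)
  -- base point identity
  have hbase : ∀ ρ' > (0:ℝ), J ρ' (ystar + ρ' • w) ustar = ystar := by
    intro ρ' hρ'
    apply heq ρ' hρ' ustar hustar
    have he : ystar + ρ' • w - ystar = ρ' • w := by abel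
    rw [he]
    exact ⟨w, hw, rfl⟩
  intro k h
  set c : ℝ := ρ₀ / ρ with hc
  set α : ℝ := 1 - c with hαdef
  set a : ℝ := |α| with ha
  have ha1 : a < 1 := hα
  have ha0 : 0 ≤ a := abs_nonneg _
  set q₀ : Y := ystar + ρ₀ • w with hq₀
  set qρ : Y := ystar + ρ • w with hqρ
  -- eventually the parameter stays in 𝒰
  have hmem : ∀ᶠ t in 𝓝[>] (0:ℝ), ustar + t • h ∈ 𝒰 := by
    have hcont : Tendsto (fun t : ℝ => ustar + t • h) (𝓝[>] (0:ℝ)) (𝓝 ustar) := by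
      have : Tendsto (fun t : ℝ => ustar + t • h) (𝓝 (0:ℝ)) (𝓝 (ustar + (0:ℝ) • h)) := by
        exact (tendsto_const_nhds.add ((continuous_id.smul continuous_const).tendsto 0))
      simpa using this.mono_left nhdsWithin_le_nhds
    exact hcont.eventually_mem h𝒰
  -- the difference quotient family for the `ρ₀`-resolvent
  set Q : Y → ℝ → Y := fun d t =>
    t⁻¹ • (J ρ₀ (q₀ + t • (c • k + α • d)) (ustar + t • h) - ystar) with hQdef
  have hQ : ∀ d : Y, ∃ L : Y, Tendsto (Q d) (𝓝[>] (0:ℝ)) (𝓝 L) := by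
    intro d
    obtain ⟨L, hL⟩ := hdd (c • k + α • d) h
    refine ⟨L, ?_⟩
    simpa [hQdef, show J ρ₀ q₀ ustar = ystar from hbase ρ₀ hρ₀] using hL
  choose Φ hΦ using hQ
  -- Lipschitz bound on the quotients, uniform in t
  have hQlip : ∀ᶠ t in 𝓝[>] (0:ℝ), ∀ d d' : Y, ‖Q d t - Q d' t‖ ≤ a * ‖d - d'‖ := by
    filter_upwards [hmem, self_mem_nhdsWithin] with t htmem ht
    have ht0 : (0:ℝ) < t := ht
    intro d d'
    have h1 : Q d t - Q d' t = t⁻¹ • (J ρ₀ (q₀ + t • (c • k + α • d)) (ustar + t • h)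
        - J ρ₀ (q₀ + t • (c • k + α • d')) (ustar + t • h)) := by
      rw [hQdef]
      simp only [← smul_sub]
      congr 1
      abel
    have h2 := hlip ρ₀ hρ₀ _ htmem (q₀ + t • (c • k + α • d)) (q₀ + t • (c • k + α • d'))
    have h3 : (q₀ + t • (c • k + α • d)) - (q₀ + t • (c • k + α • d')) = t • (α • (d - d')) := by
      module
    rw [h3] at h2
    rw [h1, norm_smul]
    calc ‖t⁻¹‖ * ‖J ρ₀ (q₀ + t • (c • k + α • d)) (ustar + t • h)
          - J ρ₀ (q₀ + t • (c • k + α • d')) (ustar + t • h)‖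
        ≤ ‖t⁻¹‖ * ‖t • (α • (d - d'))‖ := by gcongr
      _ = a * ‖d - d'‖ := by
          rw [norm_smul, norm_smul]
          simp only [Real.norm_eq_abs, abs_inv, abs_of_pos ht0, ha]
          field_simp
  -- Φ is an a-contraction
  have hΦlip : ∀ d d' : Y, ‖Φ d - Φ d'‖ ≤ a * ‖d - d'‖ := by
    intro d d'
    refine le_of_tendsto (((hΦ d).sub (hΦ d')).norm) ?_
    filter_upwards [hQlip] with t hQl using hQl d d'
  have hcontr : ContractingWith ⟨a, ha0⟩ Φ := by
    constructor
    · exact_mod_cast ha1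
    · apply LipschitzWith.of_dist_le_mul
      intro d d'
      rw [dist_eq_norm, dist_eq_norm]
      exact hΦlip d d'
  have : Nonempty Y := ⟨0⟩
  set dbar : Y := hcontr.fixedPoint Φ with hdbar
  have hfix : Φ dbar = dbar := hcontr.fixedPoint_isFixedPt
  refine ⟨dbar, ?_⟩
  rw [hbase ρ hρ]
  set g : ℝ → Y := fun t => t⁻¹ • (J ρ (qρ + t • k) (ustar + t • h) - ystar) with hgdef
  show Tendsto g (𝓝[>] (0:ℝ)) (𝓝 dbar)
  -- the quotient of J ρ is a fixed point of Q · t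
  have hgfix : ∀ᶠ t in 𝓝[>] (0:ℝ), g t = Q (g t) t := by
    filter_upwards [hmem, self_mem_nhdsWithin] with t htmem ht
    have ht0 : (0:ℝ) < t := ht
    set u' := ustar + t • h with hu'
    set yt := J ρ (qρ + t • k) u' with hyt
    obtain ⟨ξ, hξ, hξe⟩ := hJ ρ hρ (qρ + t • k) u' htmem
    have hyts : yt = ystar + t • g t := by
      rw [hgdef]
      simp only [← hyt, ← hu', smul_smul, mul_inv_cancel₀ ht0.ne', one_smul]
      abel
    have hξ2 : ξ = ρ⁻¹ • (qρ + t • k - yt) := by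
      rw [← hξe, smul_smul, inv_mul_cancel₀ hρ.ne', one_smul]
    have harg : (q₀ + t • (c • k + α • (g t))) - yt = ρ₀ • ξ := by
      rw [hξ2, hyts, hq₀, hqρ, hαdef, hc]
      match_scalars <;> field_simp <;> ring
    have hJeq : J ρ₀ (q₀ + t • (c • k + α • (g t))) u' = yt :=
      heq ρ₀ hρ₀ u' htmem _ _ ⟨ξ, hξ, harg.symm⟩
    rw [hQdef]
    simp only [← hu', hJeq]
    rfl
  -- convergence of Q dbar to dbar
  have hQd : Tendsto (fun t => ‖Q dbar t - dbar‖) (𝓝[>] (0:ℝ)) (𝓝 0) := by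
    have h1 := hΦ dbar
    rw [hfix] at h1
    exact tendsto_iff_norm_sub_tendsto_zero.mp h1
  -- the final squeeze
  have hbound : ∀ᶠ t in 𝓝[>] (0:ℝ), ‖g t - dbar‖ ≤ (1 - a)⁻¹ * ‖Q dbar t - dbar‖ := by
    filter_upwards [hgfix, hQlip] with t h1 h2
    have h3 : ‖g t - dbar‖ ≤ a * ‖g t - dbar‖ + ‖Q dbar t - dbar‖ := by
      calc ‖g t - dbar‖ = ‖(Q (g t) t - Q dbar t) + (Q dbar t - dbar)‖ := by
            conv_lhs => rw [h1]
            congr 1; abel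
        _ ≤ ‖Q (g t) t - Q dbar t‖ + ‖Q dbar t - dbar‖ := norm_add_le _ _
        _ ≤ a * ‖g t - dbar‖ + ‖Q dbar t - dbar‖ := by
            have := h2 (g t) dbar
            linarith
    have h4 : (1 - a) * ‖g t - dbar‖ ≤ ‖Q dbar t - dbar‖ := by nlinarith
    rw [inv_mul_eq_div, le_div_iff₀ (by linarith : (0:ℝ) < 1 - a)]
    nlinarith
  rw [tendsto_iff_norm_sub_tendsto_zero]
  apply squeeze_zero' (Eventually.of_forall fun t => norm_nonneg _) hbound
  have h5 := hQd.const_mul ((1 - a)⁻¹)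
  rw [mul_zero] at h5
  exact h5

end Aux

/-- Corollary 3.11 / `cor:dir_dif_res`.
For a parametrized maximally monotone operator `B` with `y* = J_B(q*, u*)`, the resolvent
`J_{ρ₀B}` is directionally differentiable at `(y* + ρ₀(q* − y*), u*)` for some `ρ₀ > 0` if
and only if `J_{ρB}` is directionally differentiable at `(y* + ρ(q* − y*), u*)` for all `ρ > 0`. -/
theorem stmt_8
    {Y : Type*} [NormedAddCommGroup Y] [InnerProductSpace ℝ Y] [CompleteSpace Y]
    {U : Type*} [NormedAddCommGroup U] [NormedSpace ℝ U] [CompleteSpace U]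
    (B : Y → U → Set Y) (𝒰 : Set U) (ustar : U)
    (h𝒰 : 𝒰 ∈ 𝓝 ustar) (hustar : ustar ∈ 𝒰)
    (hB : ∀ u ∈ 𝒰, IsMaxMonotone (fun y => B y u))
    -- the resolvents: for each ρ > 0, `J ρ q u` is the unique `y` with `q − y ∈ ρ B(y,u)`
    (J : ℝ → Y → U → Y)
    (hJ : ∀ ρ > (0 : ℝ), ∀ q : Y, ∀ u ∈ 𝒰, q - J ρ q u ∈ ρ • B (J ρ q u) u)
    (qstar : Y) (ystar : Y) (hystar : ystar = J 1 qstar ustar) :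
    (∃ ρ₀ > (0 : ℝ), DirDiffAt (J ρ₀) (ystar + ρ₀ • (qstar - ystar)) ustar) ↔
    (∀ ρ > (0 : ℝ), DirDiffAt (J ρ) (ystar + ρ • (qstar - ystar)) ustar) := by
  have hw : qstar - ystar ∈ B ystar ustar := by
    have h := hJ 1 one_pos qstar ustar hustar
    rw [← hystar] at h
    simpa using h
  constructor
  · rintro ⟨ρ₀, hρ₀, hdd⟩ ρ hρ
    have key : ∀ n : ℕ, DirDiffAt (J ((3/4:ℝ)^n * ρ₀))
        (ystar + ((3/4:ℝ)^n * ρ₀) • (qstar - ystar)) ustar := by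
      intro n
      induction n with
      | zero => simpa using hdd
      | succ n ih =>
        refine stmt8_step h𝒰 hustar hB hJ hw (by positivity) (by positivity) ?_ ih
        have hr : ((3/4:ℝ)^n * ρ₀) / ((3/4:ℝ)^(n+1) * ρ₀) = 4/3 := by
          rw [pow_succ]
          field_simp
        rw [hr]
        norm_num [abs_lt]
    obtain ⟨n, hn⟩ := exists_pow_lt_of_lt_one (show (0:ℝ) < 2 * ρ / ρ₀ by positivity)
      (by norm_num : (3/4:ℝ) < 1)
    refine stmt8_step h𝒰 hustar hB hJ hw (by positivity) hρ ?_ (key n)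
    rw [lt_div_iff₀ hρ₀] at hn
    have h1 : ((3/4:ℝ)^n * ρ₀) / ρ < 2 := by
      rw [div_lt_iff₀ hρ]
      linarith
    have h2 : (0:ℝ) < ((3/4:ℝ)^n * ρ₀) / ρ := by positivity
    rw [abs_lt]
    constructor <;> linarith
  · intro hall
    exact ⟨1, one_pos, hall 1 one_pos⟩
end

section
/- Let B : Y × 𝒰 ⇉ Y be a parametrized maximally monotone operator (𝒰 ⊆ U a neighborhood of u*), let q* ∈ Y with y* := J_B(q*, u*), and set ξ* := q* − y* ∈ B(y*, u*). Then the following are equivalent: (i) the resolvent J_B is directionally differentiable at (q*, u*); (ii) B is proto-differentiable at (y*, u*) relative to ξ*, and for every h ∈ U the proto-derivative DB(y*, u* | ξ*)(·, h) : Y ⇉ Y is maximally monotone. -/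
open Filter Topology Metric Set
open scoped RealInnerProductSpace

/-- The difference-quotient operator `Δ_t B(y*, u* | ξ*)(δ, h) = (B(y* + tδ, u* + th) − ξ*)/t`. -/
def DiffQuot {Y : Type*} [NormedAddCommGroup Y] [InnerProductSpace ℝ Y]
    {U : Type*} [NormedAddCommGroup U] [NormedSpace ℝ U]
    (B : Y → U → Set Y) (ystar : Y) (ustar : U) (ξstar : Y) (t : ℝ) (δ : Y) (h : U) :
    Set Y :=
  (fun η => t⁻¹ • (η - ξstar)) '' B (ystar + t • δ) (ustar + t • h)

/-- `B` is proto-differentiable at `(y*, u*)` relative to `ξ*` with proto-derivative `DB`: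
for every `h`, the graphs of `Δ_t B(y*, u* | ξ*)(·, h)` converge to the graph of `DB(·, h)`
in the Painlevé–Kuratowski sense as `t ↓ 0`. -/
def IsProtoDerivative {Y : Type*} [NormedAddCommGroup Y] [InnerProductSpace ℝ Y]
    {U : Type*} [NormedAddCommGroup U] [NormedSpace ℝ U]
    (B : Y → U → Set Y) (ystar : Y) (ustar : U) (ξstar : Y) (DB : Y → U → Set Y) : Prop :=
  ∀ h : U,
    -- (a) every point of the limit graph is attained as a limit
    (∀ δ η : Y, η ∈ DB δ h → ∃ δf ηf : ℝ → Y,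
      (∀ᶠ t in 𝓝[>] (0 : ℝ), ηf t ∈ DiffQuot B ystar ustar ξstar t (δf t) h) ∧
      Tendsto δf (𝓝[>] (0 : ℝ)) (𝓝 δ) ∧ Tendsto ηf (𝓝[>] (0 : ℝ)) (𝓝 η)) ∧
    -- (b) limits of points of the graphs belong to the limit graph
    (∀ (δ η : Y) (tn : ℕ → ℝ) (δn ηn : ℕ → Y),
      (∀ n, 0 < tn n) → Tendsto tn atTop (𝓝 0) →
      (∀ n, ηn n ∈ DiffQuot B ystar ustar ξstar (tn n) (δn n) h) →
      Tendsto δn atTop (𝓝 δ) → Tendsto ηn atTop (𝓝 η) → η ∈ DB δ h)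

section Minty
variable {Y : Type*} [NormedAddCommGroup Y] [InnerProductSpace ℝ Y]

lemma minty0 [CompleteSpace Y] (S : Y → Set Y) (hS : IsMaxMonotone S) :
    ∃ δ : Y, -δ ∈ S δ := by
  obtain ⟨x₀, ξ₀, hx₀⟩ : ∃ u v : Y, v ∈ S u := by
    by_contra hc
    push_neg at hc
    exact hc 0 0 (hS.2 0 0 fun y' ξ' hξ' => absurd hξ' (hc y' ξ'))
  have hmono : ∀ {x y u v : Y}, y ∈ S x → v ∈ S u →
      ⟪x, v⟫ + ⟪u, y⟫ - ⟪u, v⟫ ≤ ⟪x, y⟫ := by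
    intro x y u v hy hv
    have h := hS.1 hv hy
    have e : ⟪y - v, x - u⟫ = ⟪x, y⟫ - (⟪x, v⟫ + ⟪u, y⟫ - ⟪u, v⟫) := by
      simp only [inner_sub_left, inner_sub_right]
      simp only [real_inner_comm]; ring
    rw [e] at h; linarith
  set A : Set ℝ := {r | ∃ x y : Y, ∀ u v : Y, v ∈ S u →
      ⟪x, v⟫ + ⟪u, y⟫ - ⟪u, v⟫ + (‖x‖ ^ 2 + ‖y‖ ^ 2) / 2 ≤ r} with hA
  have hAne : A.Nonempty := by
    refine ⟨⟪x₀, ξ₀⟫ + (‖x₀‖ ^ 2 + ‖ξ₀‖ ^ 2) / 2, x₀, ξ₀, fun u v hv => ?_⟩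
    have := hmono hx₀ hv; linarith
  have hbdd : BddBelow A := by
    refine ⟨-(‖x₀ + ξ₀‖ ^ 2) / 2, fun r hr => ?_⟩
    obtain ⟨x, y, hr⟩ := hr
    have h := hr x₀ ξ₀ hx₀
    have e1 : (0:ℝ) ≤ ‖x + ξ₀‖ ^ 2 := sq_nonneg _
    have e2 : (0:ℝ) ≤ ‖x₀ + y‖ ^ 2 := sq_nonneg _
    rw [norm_add_sq_real] at e1 e2
    have e3 : ‖x₀ + ξ₀‖ ^ 2 = ‖x₀‖^2 + 2*⟪x₀,ξ₀⟫ + ‖ξ₀‖^2 := norm_add_sq_real _ _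
    linarith
  set m : ℝ := sInf A with hm
  have hm_le : ∀ r ∈ A, m ≤ r := fun r hr => csInf_le hbdd hr
  -- minimizing sequence
  have hseq : ∀ n : ℕ, ∃ x y : Y, ∀ u v : Y, v ∈ S u →
      ⟪x, v⟫ + ⟪u, y⟫ - ⟪u, v⟫ + (‖x‖ ^ 2 + ‖y‖ ^ 2) / 2 ≤ m + 1/(n+1) := by
    intro n
    have hpos : (0:ℝ) < 1/(n+1) := by positivity
    obtain ⟨r, hrA, hrlt⟩ := exists_lt_of_csInf_lt hAne (lt_add_of_pos_right m hpos)
    obtain ⟨x, y, hxy⟩ := hrA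
    exact ⟨x, y, fun u v hv => (hxy u v hv).trans hrlt.le⟩
  choose xs ys hxys using hseq
  -- Cauchy estimate
  have hkey : ∀ n p : ℕ, ‖xs n - xs p‖^2 + ‖ys n - ys p‖^2 ≤ 4*(1/(n+1) + 1/(p+1)) := by
    intro n p
    have hmid : m ≤ (m + 1/(n+1))/2 + (m + 1/(p+1))/2
        - (‖xs n - xs p‖^2 + ‖ys n - ys p‖^2)/8 := by
      apply hm_le
      refine ⟨(1/2:ℝ) • (xs n + xs p), (1/2:ℝ) • (ys n + ys p), fun u v hv => ?_⟩
      have h1 := hxys n u v hv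
      have h2 := hxys p u v hv
      have hexp : ⟪(1/2:ℝ) • (xs n + xs p), v⟫ + ⟪u, (1/2:ℝ) • (ys n + ys p)⟫ - ⟪u, v⟫
          + (‖(1/2:ℝ) • (xs n + xs p)‖ ^ 2 + ‖(1/2:ℝ) • (ys n + ys p)‖ ^ 2) / 2
          = (⟪xs n, v⟫ + ⟪u, ys n⟫ - ⟪u, v⟫ + (‖xs n‖ ^ 2 + ‖ys n‖ ^ 2) / 2)/2
          + (⟪xs p, v⟫ + ⟪u, ys p⟫ - ⟪u, v⟫ + (‖xs p‖ ^ 2 + ‖ys p‖ ^ 2) / 2)/2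
          - (‖xs n - xs p‖^2 + ‖ys n - ys p‖^2)/8 := by
        simp only [← real_inner_self_eq_norm_sq, inner_add_left, inner_add_right,
          inner_sub_left, inner_sub_right, real_inner_smul_left, real_inner_smul_right]
        simp only [real_inner_comm]; ring
      rw [hexp]; linarith
    linarith
  -- Cauchy sequences
  have hc : ∀ zs : ℕ → Y, (∀ n p : ℕ, ‖zs n - zs p‖^2 ≤ 4*(1/(n+1) + 1/(p+1))) → CauchySeq zs := by
    intro zs hzs
    rw [Metric.cauchySeq_iff]
    intro ε hε
    obtain ⟨N, hN⟩ := exists_nat_gt (8/ε^2)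
    refine ⟨N, fun n hn p hp => ?_⟩
    have h8 : (0:ℝ) < 8/ε^2 := by positivity
    have hN0 : (0:ℝ) < N := lt_trans h8 hN
    have hle : 4*(1/((n:ℝ)+1) + 1/((p:ℝ)+1)) ≤ 8/((N:ℝ)+1) := by
      have h1 : 1/((n:ℝ)+1) ≤ 1/((N:ℝ)+1) := by
        apply one_div_le_one_div_of_le (by positivity)
        have : (N:ℝ) ≤ n := by exact_mod_cast hn
        linarith
      have h2 : 1/((p:ℝ)+1) ≤ 1/((N:ℝ)+1) := by
        apply one_div_le_one_div_of_le (by positivity)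
        have : (N:ℝ) ≤ p := by exact_mod_cast hp
        linarith
      calc 4*(1/((n:ℝ)+1) + 1/((p:ℝ)+1)) ≤ 4*(1/((N:ℝ)+1) + 1/((N:ℝ)+1)) := by linarith
        _ = 8/((N:ℝ)+1) := by ring
    have hlt : 8/((N:ℝ)+1) < ε^2 := by
      rw [div_lt_iff₀ (by positivity)]
      rw [div_lt_iff₀ (by positivity)] at hN
      nlinarith [sq_nonneg ε]
    have hd : dist (zs n) (zs p) ^ 2 < ε ^ 2 := by
      rw [dist_eq_norm]
      calc ‖zs n - zs p‖^2 ≤ 4*(1/((n:ℝ)+1) + 1/((p:ℝ)+1)) := hzs n p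
        _ ≤ 8/((N:ℝ)+1) := hle
        _ < ε^2 := hlt
    nlinarith [dist_nonneg (x := zs n) (y := zs p), hε]
  obtain ⟨xbar, hxbar⟩ := cauchySeq_tendsto_of_complete
    (hc xs (fun n p => by have := hkey n p; nlinarith [sq_nonneg ‖ys n - ys p‖]))
  obtain ⟨ybar, hybar⟩ := cauchySeq_tendsto_of_complete
    (hc ys (fun n p => by have := hkey n p; nlinarith [sq_nonneg ‖xs n - xs p‖]))
  -- (B): the limit is feasible with value m
  have hfeas : ∀ u v : Y, v ∈ S u →
      ⟪xbar, v⟫ + ⟪u, ybar⟫ - ⟪u, v⟫ + (‖xbar‖ ^ 2 + ‖ybar‖ ^ 2) / 2 ≤ m := by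
    intro u v hv
    have ht1 : Tendsto (fun n : ℕ => ⟪xs n, v⟫ + ⟪u, ys n⟫ - ⟪u, v⟫
        + (‖xs n‖ ^ 2 + ‖ys n‖ ^ 2) / 2) atTop
        (𝓝 (⟪xbar, v⟫ + ⟪u, ybar⟫ - ⟪u, v⟫ + (‖xbar‖ ^ 2 + ‖ybar‖ ^ 2) / 2)) := by
      exact (((hxbar.inner tendsto_const_nhds).add
        ((tendsto_const_nhds : Tendsto (fun _ : ℕ => u) atTop (𝓝 u)).inner hybar)).sub
        tendsto_const_nhds).add ((((hxbar.norm.pow 2)).add ((hybar.norm.pow 2))).div_const 2)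
    have ht2 : Tendsto (fun n : ℕ => m + 1/((n:ℝ)+1)) atTop (𝓝 m) := by
      have := tendsto_one_div_add_atTop_nhds_zero_nat (𝕜 := ℝ)
      simpa using (tendsto_const_nhds.add this)
    exact le_of_tendsto_of_tendsto' ht1 ht2 fun n => hxys n u v hv
  -- strong first-order condition
  have hA'' : ∀ x y : Y, y ∈ S x →
      m + (‖xbar‖^2 + ‖ybar‖^2)/2 ≤ ⟪x, y⟫ + ⟪x, xbar⟫ + ⟪y, ybar⟫ := by
    intro x y hy
    set D : ℝ := (‖x - xbar‖^2 + ‖y - ybar‖^2)/2 with hD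
    have hseg : ∀ t : ℝ, 0 < t → t < 1 →
        m ≤ (1-t)*m + t*(⟪x, y⟫ + (‖x‖^2 + ‖y‖^2)/2) - t*(1-t)*D := by
      intro t ht0 ht1
      apply hm_le
      refine ⟨xbar + t • (x - xbar), ybar + t • (y - ybar), fun u v hv => ?_⟩
      have h1 := hfeas u v hv
      have h2 := hmono hy hv
      have hexp : ⟪xbar + t • (x - xbar), v⟫ + ⟪u, ybar + t • (y - ybar)⟫ - ⟪u, v⟫
          + (‖xbar + t • (x - xbar)‖ ^ 2 + ‖ybar + t • (y - ybar)‖ ^ 2) / 2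
          = (1-t)*(⟪xbar, v⟫ + ⟪u, ybar⟫ - ⟪u, v⟫ + (‖xbar‖ ^ 2 + ‖ybar‖ ^ 2) / 2)
          + t*((⟪x, v⟫ + ⟪u, y⟫ - ⟪u, v⟫) + (‖x‖^2 + ‖y‖^2)/2) - t*(1-t)*D := by
        rw [hD]
        simp only [← real_inner_self_eq_norm_sq, inner_add_left, inner_add_right,
          inner_sub_left, inner_sub_right, real_inner_smul_left, real_inner_smul_right]
        simp only [real_inner_comm]; ring
      rw [hexp]
      nlinarith [mul_le_mul_of_nonneg_left h1 (by linarith : (0:ℝ) ≤ 1 - t),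
        mul_le_mul_of_nonneg_left h2 ht0.le]
    have hDle : D ≤ ⟪x, y⟫ + (‖x‖^2 + ‖y‖^2)/2 - m := by
      have hall : ∀ n : ℕ, (1 - 1/((n:ℝ)+2)) * D ≤ ⟪x, y⟫ + (‖x‖^2 + ‖y‖^2)/2 - m := by
        intro n
        have h0 : (0:ℝ) < 1/((n:ℝ)+2) := by positivity
        have h1 : 1/((n:ℝ)+2) < 1 := by
          rw [div_lt_one (by positivity)]; linarith [Nat.cast_nonneg (α := ℝ) n]
        have := hseg (1/((n:ℝ)+2)) h0 h1
        have h2 : (1/((n:ℝ)+2)) * ((1 - 1/((n:ℝ)+2)) * D)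
            ≤ (1/((n:ℝ)+2)) * (⟪x, y⟫ + (‖x‖^2 + ‖y‖^2)/2 - m) := by nlinarith
        exact le_of_mul_le_mul_left h2 h0
      have hten : Tendsto (fun n : ℕ => (1 - 1/((n:ℝ)+2)) * D) atTop (𝓝 D) := by
        have hz : Tendsto (fun n : ℕ => 1/((n:ℝ)+2)) atTop (𝓝 0) := by
          apply squeeze_zero (fun n => by positivity) (g := fun n : ℕ => 1/((n:ℝ)+1))
          · intro n
            apply one_div_le_one_div_of_le (by positivity)
            linarith
          · exact tendsto_one_div_add_atTop_nhds_zero_nat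
        have h' : Tendsto (fun n : ℕ => (1 - 1/((n:ℝ)+2)) * D) atTop (𝓝 ((1 - 0) * D)) :=
          (tendsto_const_nhds.sub hz).mul tendsto_const_nhds
        simpa using h'
      exact le_of_tendsto' hten hall
    have e1 : ‖x - xbar‖^2 = ‖x‖^2 - 2*⟪x,xbar⟫ + ‖xbar‖^2 := by
      rw [norm_sub_sq_real]
    have e2 : ‖y - ybar‖^2 = ‖y‖^2 - 2*⟪y,ybar⟫ + ‖ybar‖^2 := by
      rw [norm_sub_sq_real]
    rw [hD, e1, e2] at hDle
    linarith
  -- lower bound on m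
  have hlow : ⟪xbar, ybar⟫ + (‖xbar‖^2 + ‖ybar‖^2)/2 ≤ m := by
    obtain ⟨u, v, hv, hgeq⟩ : ∃ u v : Y, v ∈ S u ∧
        ⟪xbar, ybar⟫ ≤ ⟪xbar, v⟫ + ⟪u, ybar⟫ - ⟪u, v⟫ := by
      by_cases hmem : ybar ∈ S xbar
      · exact ⟨xbar, ybar, hmem, by simp⟩
      · have h := mt (hS.2 xbar ybar) hmem
        push_neg at h
        obtain ⟨u, v, hv, hlt⟩ := h
        refine ⟨u, v, hv, ?_⟩
        have e : ⟪ybar - v, xbar - u⟫ = ⟪xbar, ybar⟫ - (⟪xbar, v⟫ + ⟪u, ybar⟫ - ⟪u, v⟫) := by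
          simp only [inner_sub_left, inner_sub_right]
          simp only [real_inner_comm]; ring
        rw [e] at hlt; linarith
    have := hfeas u v hv; linarith
  -- key inequality
  have hkey2 : ∀ x y : Y, y ∈ S x → 0 ≤ ⟪-xbar - y, -ybar - x⟫ := by
    intro x y hy
    have h1 := hA'' x y hy
    have h2 := hlow
    have h3 : (0:ℝ) ≤ ‖xbar + ybar‖^2 := sq_nonneg _
    rw [norm_add_sq_real] at h3
    have e : ⟪-xbar - y, -ybar - x⟫
        = ⟪xbar, ybar⟫ + ⟪x, xbar⟫ + ⟪y, ybar⟫ + ⟪x, y⟫ := by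
      simp only [inner_sub_left, inner_sub_right, inner_neg_left, inner_neg_right]
      simp only [real_inner_comm]; ring
    rw [e]
    have e4 : ‖xbar + ybar‖^2 = ‖xbar‖^2 + 2*⟪xbar,ybar⟫ + ‖ybar‖^2 := norm_add_sq_real _ _
    nlinarith [sq_nonneg ‖xbar + ybar‖, e4]
  have hmem2 : -xbar ∈ S (-ybar) := hS.2 _ _ (fun y' ξ' hξ' => hkey2 y' ξ' hξ')
  have h4 := hA'' (-ybar) (-xbar) hmem2
  have e5 : ‖xbar + ybar‖^2 = ‖xbar‖^2 + 2*⟪xbar,ybar⟫ + ‖ybar‖^2 := norm_add_sq_real _ _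
  have e6 : ⟪-ybar, -xbar⟫ + ⟪-ybar, xbar⟫ + ⟪-xbar, ybar⟫ = -⟪xbar, ybar⟫ := by
    simp only [inner_neg_left, inner_neg_right]
    simp only [real_inner_comm]; ring
  rw [e6] at h4
  have hz : ‖xbar + ybar‖^2 ≤ 0 := by linarith
  have hz2 : ‖xbar + ybar‖ = 0 := by nlinarith [norm_nonneg (xbar + ybar)]
  have hz3 : xbar = -ybar := by
    have h := norm_eq_zero.mp hz2
    exact eq_neg_of_add_eq_zero_left h
  refine ⟨xbar, ?_⟩
  rw [← hz3] at hmem2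
  exact hmem2

lemma minty [CompleteSpace Y] (T : Y → Set Y) (hT : IsMaxMonotone T) (k : Y) :
    ∃ δ, k - δ ∈ T δ := by
  have hS : IsMaxMonotone (fun y => (fun ξ => ξ - k) '' T y) := by
    constructor
    · intro y₁ y₂ ξ₁ ξ₂ h1 h2
      obtain ⟨a₁, ha₁, rfl⟩ := h1
      obtain ⟨a₂, ha₂, rfl⟩ := h2
      have e : a₂ - k - (a₁ - k) = a₂ - a₁ := by abel
      rw [e]; exact hT.1 ha₁ ha₂
    · intro y ξ hy
      refine ⟨ξ + k, hT.2 y (ξ + k) fun y' ξ' hξ' => ?_, by simp⟩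
      have h := hy y' (ξ' - k) ⟨ξ', hξ', rfl⟩
      have e : ξ - (ξ' - k) = ξ + k - ξ' := by abel
      rwa [e] at h
  obtain ⟨δ, ξ, hξ, hξ2⟩ := minty0 _ hS
  have h3 : ξ = k - δ := by
    have h := eq_add_of_sub_eq hξ2; rw [h]; abel
  exact ⟨δ, h3 ▸ hξ⟩

lemma res_uniq {T : Y → Set Y}
    (hT : ∀ ⦃y₁ y₂ ξ₁ ξ₂ : Y⦄, ξ₁ ∈ T y₁ → ξ₂ ∈ T y₂ → 0 ≤ ⟪ξ₂ - ξ₁, y₂ - y₁⟫)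
    {q y₁ y₂ : Y} (h₁ : q - y₁ ∈ T y₁) (h₂ : q - y₂ ∈ T y₂) : y₁ = y₂ := by
  have h := hT h₁ h₂
  have e : ⟪q - y₂ - (q - y₁), y₂ - y₁⟫ = -‖y₂ - y₁‖ ^ 2 := by
    have e2 : q - y₂ - (q - y₁) = -(y₂ - y₁) := by abel
    rw [e2, inner_neg_left, real_inner_self_eq_norm_sq]
  rw [e] at h
  have h2 : ‖y₂ - y₁‖ = 0 := by nlinarith [norm_nonneg (y₂ - y₁)]
  have h3 := norm_eq_zero.mp h2
  have h4 : y₂ = y₁ := by rwa [sub_eq_zero] at h3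
  exact h4.symm

lemma res_firm {T : Y → Set Y}
    (hT : ∀ ⦃y₁ y₂ ξ₁ ξ₂ : Y⦄, ξ₁ ∈ T y₁ → ξ₂ ∈ T y₂ → 0 ≤ ⟪ξ₂ - ξ₁, y₂ - y₁⟫)
    {q₁ q₂ y₁ y₂ : Y} (h₁ : q₁ - y₁ ∈ T y₁) (h₂ : q₂ - y₂ ∈ T y₂) :
    ‖y₂ - y₁‖ ^ 2 ≤ ⟪q₂ - q₁, y₂ - y₁⟫ := by
  have h := hT h₁ h₂
  have e : q₂ - y₂ - (q₁ - y₁) = (q₂ - q₁) - (y₂ - y₁) := by abel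
  rw [e, inner_sub_left, real_inner_self_eq_norm_sq] at h
  linarith

lemma res_lip {T : Y → Set Y}
    (hT : ∀ ⦃y₁ y₂ ξ₁ ξ₂ : Y⦄, ξ₁ ∈ T y₁ → ξ₂ ∈ T y₂ → 0 ≤ ⟪ξ₂ - ξ₁, y₂ - y₁⟫)
    {q₁ q₂ y₁ y₂ : Y} (h₁ : q₁ - y₁ ∈ T y₁) (h₂ : q₂ - y₂ ∈ T y₂) :
    ‖y₂ - y₁‖ ≤ ‖q₂ - q₁‖ := by
  have h := res_firm hT h₁ h₂
  have h2 := real_inner_le_norm (q₂ - q₁) (y₂ - y₁)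
  rcases eq_or_lt_of_le (norm_nonneg (y₂ - y₁)) with h3 | h3
  · rw [← h3]; exact norm_nonneg _
  · nlinarith

end Minty

section Aux

variable {Y : Type*} [NormedAddCommGroup Y] [InnerProductSpace ℝ Y]
  {U : Type*} [NormedAddCommGroup U] [NormedSpace ℝ U]

-- resolvent lemmas assumed available: res_uniq res_firm res_lip (from t3)
lemma res_uniq' {T : Y → Set Y}
    (hT : ∀ ⦃y₁ y₂ ξ₁ ξ₂ : Y⦄, ξ₁ ∈ T y₁ → ξ₂ ∈ T y₂ → 0 ≤ ⟪ξ₂ - ξ₁, y₂ - y₁⟫)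
    {q y₁ y₂ : Y} (h₁ : q - y₁ ∈ T y₁) (h₂ : q - y₂ ∈ T y₂) : y₁ = y₂ := by
  have h := hT h₁ h₂
  have e : ⟪q - y₂ - (q - y₁), y₂ - y₁⟫ = -‖y₂ - y₁‖ ^ 2 := by
    have e2 : q - y₂ - (q - y₁) = -(y₂ - y₁) := by abel
    rw [e2, inner_neg_left, real_inner_self_eq_norm_sq]
  rw [e] at h
  have h2 : ‖y₂ - y₁‖ = 0 := by nlinarith [norm_nonneg (y₂ - y₁)]
  have h3 := norm_eq_zero.mp h2
  have h4 : y₂ = y₁ := by rwa [sub_eq_zero] at h3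
  exact h4.symm

lemma res_firm' {T : Y → Set Y}
    (hT : ∀ ⦃y₁ y₂ ξ₁ ξ₂ : Y⦄, ξ₁ ∈ T y₁ → ξ₂ ∈ T y₂ → 0 ≤ ⟪ξ₂ - ξ₁, y₂ - y₁⟫)
    {q₁ q₂ y₁ y₂ : Y} (h₁ : q₁ - y₁ ∈ T y₁) (h₂ : q₂ - y₂ ∈ T y₂) :
    ‖y₂ - y₁‖ ^ 2 ≤ ⟪q₂ - q₁, y₂ - y₁⟫ := by
  have h := hT h₁ h₂
  have e : q₂ - y₂ - (q₁ - y₁) = (q₂ - q₁) - (y₂ - y₁) := by abel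
  rw [e, inner_sub_left, real_inner_self_eq_norm_sq] at h
  linarith

lemma res_lip' {T : Y → Set Y}
    (hT : ∀ ⦃y₁ y₂ ξ₁ ξ₂ : Y⦄, ξ₁ ∈ T y₁ → ξ₂ ∈ T y₂ → 0 ≤ ⟪ξ₂ - ξ₁, y₂ - y₁⟫)
    {q₁ q₂ y₁ y₂ : Y} (h₁ : q₁ - y₁ ∈ T y₁) (h₂ : q₂ - y₂ ∈ T y₂) :
    ‖y₂ - y₁‖ ≤ ‖q₂ - q₁‖ := by
  have h := res_firm' hT h₁ h₂
  have h2 := real_inner_le_norm (q₂ - q₁) (y₂ - y₁)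
  rcases eq_or_lt_of_le (norm_nonneg (y₂ - y₁)) with h3 | h3
  · rw [← h3]; exact norm_nonneg _
  · nlinarith

/-- Difference quotient of the resolvent. -/
noncomputable def Dres (J : Y → U → Y) (qstar ystar : Y) (ustar : U) (t : ℝ) (k : Y) (hh : U) : Y :=
  t⁻¹ • (J (qstar + t • k) (ustar + t • hh) - ystar)

variable {B : Y → U → Set Y} {𝒰 : Set U} {ustar : U} {J : Y → U → Y} {qstar ystar ξstar : Y}

lemma mem_diffquot_iff {t : ℝ} (ht : t ≠ 0) {δ η : Y} {hh : U} :
    η ∈ DiffQuot B ystar ustar ξstar t δ hh ↔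
      ξstar + t • η ∈ B (ystar + t • δ) (ustar + t • hh) := by
  constructor
  · rintro ⟨b, hb, rfl⟩
    have e : ξstar + t • (t⁻¹ • (b - ξstar)) = b := by
      rw [smul_inv_smul₀ ht]; abel
    rwa [e]
  · intro hb
    refine ⟨ξstar + t • η, hb, ?_⟩
    show t⁻¹ • (ξstar + t • η - ξstar) = η
    rw [add_sub_cancel_left, inv_smul_smul₀ ht]

lemma Dres_mem (hJ : ∀ q : Y, ∀ u ∈ 𝒰, q - J q u ∈ B (J q u) u)
    (hξstar : ξstar = qstar - ystar) {t : ℝ} (ht : 0 < t) (k : Y) (hh : U)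
    (hu : ustar + t • hh ∈ 𝒰) :
    (k - Dres J qstar ystar ustar t k hh) ∈
      DiffQuot B ystar ustar ξstar t (Dres J qstar ystar ustar t k hh) hh := by
  rw [mem_diffquot_iff ht.ne']
  have e1 : ystar + t • Dres J qstar ystar ustar t k hh
      = J (qstar + t • k) (ustar + t • hh) := by
    unfold Dres
    rw [smul_inv_smul₀ ht.ne']; abel
  have e2 : ξstar + t • (k - Dres J qstar ystar ustar t k hh)
      = (qstar + t • k) - J (qstar + t • k) (ustar + t • hh) := by
    unfold Dres
    rw [hξstar, smul_sub, smul_inv_smul₀ ht.ne']; abel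
  rw [e1, e2]
  exact hJ (qstar + t • k) (ustar + t • hh) hu

lemma Dres_uniq (hB : ∀ u ∈ 𝒰, IsMaxMonotone (fun y => B y u))
    (hJ : ∀ q : Y, ∀ u ∈ 𝒰, q - J q u ∈ B (J q u) u)
    (hξstar : ξstar = qstar - ystar) {t : ℝ} (ht : 0 < t) {δ η : Y} {hh : U}
    (hu : ustar + t • hh ∈ 𝒰)
    (hmem : η ∈ DiffQuot B ystar ustar ξstar t δ hh) :
    δ = Dres J qstar ystar ustar t (δ + η) hh := by
  rw [mem_diffquot_iff ht.ne'] at hmem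
  have h1 : (qstar + t • (δ + η)) - (ystar + t • δ) ∈ B (ystar + t • δ) (ustar + t • hh) := by
    have e : (qstar + t • (δ + η)) - (ystar + t • δ) = ξstar + t • η := by
      rw [hξstar, smul_add]; abel
    rw [e]; exact hmem
  have h2 := hJ (qstar + t • (δ + η)) (ustar + t • hh) hu
  have h3 : ystar + t • δ = J (qstar + t • (δ + η)) (ustar + t • hh) :=
    res_uniq' (hB _ hu).1 h1 h2
  unfold Dres
  rw [← h3, add_sub_cancel_left, inv_smul_smul₀ ht.ne']

lemma Dres_firm (hB : ∀ u ∈ 𝒰, IsMaxMonotone (fun y => B y u))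
    (hJ : ∀ q : Y, ∀ u ∈ 𝒰, q - J q u ∈ B (J q u) u)
    {t : ℝ} (ht : 0 < t) (k₁ k₂ : Y) (hh : U) (hu : ustar + t • hh ∈ 𝒰) :
    ‖Dres J qstar ystar ustar t k₂ hh - Dres J qstar ystar ustar t k₁ hh‖ ^ 2
      ≤ ⟪k₂ - k₁, Dres J qstar ystar ustar t k₂ hh - Dres J qstar ystar ustar t k₁ hh⟫ := by
  have hf := res_firm' (hB _ hu).1 (hJ (qstar + t • k₁) (ustar + t • hh) hu)
    (hJ (qstar + t • k₂) (ustar + t • hh) hu)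
  set J₁ := J (qstar + t • k₁) (ustar + t • hh)
  set J₂ := J (qstar + t • k₂) (ustar + t • hh)
  have e0 : qstar + t • k₂ - (qstar + t • k₁) = t • (k₂ - k₁) := by
    rw [smul_sub]; abel
  rw [e0, real_inner_smul_left] at hf
  have e1 : Dres J qstar ystar ustar t k₂ hh - Dres J qstar ystar ustar t k₁ hh
      = t⁻¹ • (J₂ - J₁) := by
    unfold Dres
    rw [← smul_sub]
    congr 1
    abel
  rw [e1, norm_smul, real_inner_smul_right, Real.norm_eq_abs, abs_of_pos (inv_pos.mpr ht),
    mul_pow]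
  have ht2 : (0:ℝ) < t⁻¹ ^ 2 := by positivity
  have := mul_le_mul_of_nonneg_left hf ht2.le
  have e2 : t⁻¹ ^ 2 * (t * ⟪k₂ - k₁, J₂ - J₁⟫) = t⁻¹ * ⟪k₂ - k₁, J₂ - J₁⟫ := by
    field_simp
  nlinarith [this]

lemma Dres_lip (hB : ∀ u ∈ 𝒰, IsMaxMonotone (fun y => B y u))
    (hJ : ∀ q : Y, ∀ u ∈ 𝒰, q - J q u ∈ B (J q u) u)
    {t : ℝ} (ht : 0 < t) (k₁ k₂ : Y) (hh : U) (hu : ustar + t • hh ∈ 𝒰) :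
    ‖Dres J qstar ystar ustar t k₂ hh - Dres J qstar ystar ustar t k₁ hh‖ ≤ ‖k₂ - k₁‖ := by
  have hf := res_lip' (hB _ hu).1 (hJ (qstar + t • k₁) (ustar + t • hh) hu)
    (hJ (qstar + t • k₂) (ustar + t • hh) hu)
  set J₁ := J (qstar + t • k₁) (ustar + t • hh)
  set J₂ := J (qstar + t • k₂) (ustar + t • hh)
  have e0 : qstar + t • k₂ - (qstar + t • k₁) = t • (k₂ - k₁) := by
    rw [smul_sub]; abel
  rw [e0, norm_smul, Real.norm_eq_abs, abs_of_pos ht] at hf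
  have e1 : Dres J qstar ystar ustar t k₂ hh - Dres J qstar ystar ustar t k₁ hh
      = t⁻¹ • (J₂ - J₁) := by
    unfold Dres
    rw [← smul_sub]
    congr 1
    abel
  rw [e1, norm_smul, Real.norm_eq_abs, abs_of_pos (inv_pos.mpr ht)]
  rw [← mul_le_mul_iff_right₀ ht]
  calc t * (t⁻¹ * ‖J₂ - J₁‖) = ‖J₂ - J₁‖ := by field_simp
    _ ≤ t * ‖k₂ - k₁‖ := hf

end Aux

/-- Lemma 3.13 / `lem:proto_vs_resolvent`.
The resolvent `J_B` is directionally differentiable at `(q*, u*)` if and only if `B` is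
proto-differentiable at `(y*, u*)` relative to `ξ* = q* − y*` with a maximally monotone
proto-derivative `DB(y*, u* | ξ*)(·, h)` for every `h ∈ U`. -/
theorem stmt_9
    {Y : Type*} [NormedAddCommGroup Y] [InnerProductSpace ℝ Y] [CompleteSpace Y]
    {U : Type*} [NormedAddCommGroup U] [NormedSpace ℝ U] [CompleteSpace U]
    (B : Y → U → Set Y) (𝒰 : Set U) (ustar : U)
    (h𝒰 : 𝒰 ∈ 𝓝 ustar) (hustar : ustar ∈ 𝒰)
    (hB : ∀ u ∈ 𝒰, IsMaxMonotone (fun y => B y u))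
    -- the resolvent J_B : `J q u` is the unique `y` with `q − y ∈ B(y,u)`
    (J : Y → U → Y)
    (hJ : ∀ q : Y, ∀ u ∈ 𝒰, q - J q u ∈ B (J q u) u)
    (qstar : Y) (ystar : Y) (hystar : ystar = J qstar ustar)
    (ξstar : Y) (hξstar : ξstar = qstar - ystar) :
    (∀ (k : Y) (h : U), ∃ d : Y,
        Tendsto (fun t : ℝ => t⁻¹ • (J (qstar + t • k) (ustar + t • h) - J qstar ustar))
          (𝓝[>] (0 : ℝ)) (𝓝 d)) ↔
    (∃ DB : Y → U → Set Y, IsProtoDerivative B ystar ustar ξstar DB ∧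
        ∀ h : U, IsMaxMonotone (fun δ => DB δ h)) := by
  have evU : ∀ hh : U, ∀ᶠ t in 𝓝[>] (0:ℝ), ustar + t • hh ∈ 𝒰 := by
    intro hh
    have hcont : Tendsto (fun t : ℝ => ustar + t • hh) (𝓝 0) (𝓝 ustar) := by
      have hc : Continuous fun t : ℝ => ustar + t • hh := by continuity
      have h0 := hc.tendsto 0
      simpa using h0
    exact (hcont.eventually_mem h𝒰).filter_mono nhdsWithin_le_nhds
  have evpos : ∀ᶠ t in 𝓝[>] (0:ℝ), 0 < t := by
    filter_upwards [self_mem_nhdsWithin] with t ht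
    exact ht
  constructor
  · intro hL
    choose d hd using hL
    have hd' : ∀ (k : Y) (hh : U),
        Tendsto (fun t : ℝ => Dres J qstar ystar ustar t k hh) (𝓝[>] (0:ℝ)) (𝓝 (d k hh)) := by
      intro k hh
      have h0 := hd k hh
      rw [← hystar] at h0
      exact h0
    have dfirm : ∀ (hh : U) (k₁ k₂ : Y),
        ‖d k₂ hh - d k₁ hh‖ ^ 2 ≤ ⟪k₂ - k₁, d k₂ hh - d k₁ hh⟫ := by
      intro hh k₁ k₂
      have hev : ∀ᶠ t in 𝓝[>] (0:ℝ),
          ‖Dres J qstar ystar ustar t k₂ hh - Dres J qstar ystar ustar t k₁ hh‖ ^ 2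
            ≤ ⟪k₂ - k₁, Dres J qstar ystar ustar t k₂ hh - Dres J qstar ystar ustar t k₁ hh⟫ := by
        filter_upwards [evU hh, evpos] with t hu ht
        exact Dres_firm hB hJ ht k₁ k₂ hh hu
      have h1 : Tendsto (fun t : ℝ =>
          ‖Dres J qstar ystar ustar t k₂ hh - Dres J qstar ystar ustar t k₁ hh‖ ^ 2)
          (𝓝[>] (0:ℝ)) (𝓝 (‖d k₂ hh - d k₁ hh‖ ^ 2)) :=
        (((hd' k₂ hh).sub (hd' k₁ hh)).norm).pow 2
      have h2 : Tendsto (fun t : ℝ =>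
          ⟪k₂ - k₁, Dres J qstar ystar ustar t k₂ hh - Dres J qstar ystar ustar t k₁ hh⟫)
          (𝓝[>] (0:ℝ)) (𝓝 ⟪k₂ - k₁, d k₂ hh - d k₁ hh⟫) :=
        tendsto_const_nhds.inner ((hd' k₂ hh).sub (hd' k₁ hh))
      exact le_of_tendsto_of_tendsto h1 h2 hev
    refine ⟨fun δ hh => {η | ∃ k : Y, d k hh = δ ∧ η = k - δ}, ?_, ?_⟩
    · intro hh
      constructor
      · rintro δ η ⟨k, hk1, rfl⟩
        refine ⟨fun t => Dres J qstar ystar ustar t k hh,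
          fun t => k - Dres J qstar ystar ustar t k hh, ?_, ?_, ?_⟩
        · filter_upwards [evU hh, evpos] with t hu ht
          exact Dres_mem hJ hξstar ht k hh hu
        · rw [← hk1]; exact hd' k hh
        · rw [← hk1]; exact tendsto_const_nhds.sub (hd' k hh)
      · intro δ η tn δn ηn htn htn0 hmem hδn hηn
        have htn' : Tendsto tn atTop (𝓝[>] (0:ℝ)) :=
          tendsto_nhdsWithin_of_tendsto_nhds_of_eventually_within _ htn0
            (Eventually.of_forall htn)
        have hevU : ∀ᶠ n in atTop, ustar + tn n • hh ∈ 𝒰 := htn'.eventually (evU hh)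
        have heq : ∀ᶠ n in atTop,
            δn n = Dres J qstar ystar ustar (tn n) (δn n + ηn n) hh := by
          filter_upwards [hevU] with n hu
          exact Dres_uniq hB hJ hξstar (htn n) hu (hmem n)
        have hkn : Tendsto (fun n => δn n + ηn n) atTop (𝓝 (δ + η)) := hδn.add hηn
        have hlim : Tendsto δn atTop (𝓝 (d (δ + η) hh)) := by
          rw [tendsto_iff_dist_tendsto_zero]
          have hbnd : ∀ᶠ n in atTop, dist (δn n) (d (δ + η) hh) ≤
              ‖(δn n + ηn n) - (δ + η)‖
                + dist (Dres J qstar ystar ustar (tn n) (δ + η) hh) (d (δ + η) hh) := by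
            filter_upwards [hevU, heq] with n hu he
            have h1 : dist (δn n) (Dres J qstar ystar ustar (tn n) (δ + η) hh)
                ≤ ‖(δn n + ηn n) - (δ + η)‖ := by
              rw [dist_eq_norm]
              conv_lhs => rw [he]
              exact Dres_lip hB hJ (htn n) (δ + η) (δn n + ηn n) hh hu
            calc dist (δn n) (d (δ + η) hh)
                ≤ dist (δn n) (Dres J qstar ystar ustar (tn n) (δ + η) hh)
                  + dist (Dres J qstar ystar ustar (tn n) (δ + η) hh) (d (δ + η) hh) :=
                  dist_triangle _ _ _
              _ ≤ _ := by linarith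
          have hg : Tendsto (fun n => ‖(δn n + ηn n) - (δ + η)‖
              + dist (Dres J qstar ystar ustar (tn n) (δ + η) hh) (d (δ + η) hh))
              atTop (𝓝 0) := by
            have g1 : Tendsto (fun n => ‖(δn n + ηn n) - (δ + η)‖) atTop (𝓝 0) := by
              have h0 : Tendsto (fun n => (δn n + ηn n) - (δ + η)) atTop
                  (𝓝 ((δ + η) - (δ + η))) := hkn.sub tendsto_const_nhds
              simpa using h0.norm
            have g2 : Tendsto (fun n =>
                dist (Dres J qstar ystar ustar (tn n) (δ + η) hh) (d (δ + η) hh))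
                atTop (𝓝 0) := by
              have h0 := (hd' (δ + η) hh).comp htn'
              rwa [tendsto_iff_dist_tendsto_zero] at h0
            simpa using g1.add g2
          exact squeeze_zero' (Eventually.of_forall fun n => dist_nonneg) hbnd hg
        have hδeq : d (δ + η) hh = δ := tendsto_nhds_unique hlim hδn
        exact ⟨δ + η, hδeq, by abel⟩
    · intro hh
      constructor
      · rintro δ₁ δ₂ η₁ η₂ ⟨k₁, hk₁, rfl⟩ ⟨k₂, hk₂, rfl⟩
        subst hk₁
        subst hk₂
        have hf := dfirm hh k₁ k₂
        have e : k₂ - d k₂ hh - (k₁ - d k₁ hh) = (k₂ - k₁) - (d k₂ hh - d k₁ hh) := by abel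
        rw [e, inner_sub_left, real_inner_self_eq_norm_sq]
        linarith
      · intro δ ξ hy
        have h1 := hy (d (δ + ξ) hh) ((δ + ξ) - d (δ + ξ) hh) ⟨δ + ξ, rfl, rfl⟩
        have e : ξ - ((δ + ξ) - d (δ + ξ) hh) = -(δ - d (δ + ξ) hh) := by abel
        rw [e, inner_neg_left, real_inner_self_eq_norm_sq] at h1
        have h2 : ‖δ - d (δ + ξ) hh‖ = 0 := by nlinarith [norm_nonneg (δ - d (δ + ξ) hh)]
        have h3 : δ = d (δ + ξ) hh := by
          have h4 := norm_eq_zero.mp h2; rwa [sub_eq_zero] at h4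
        exact ⟨δ + ξ, h3.symm, by abel⟩
  · rintro ⟨DB, hproto, hmax⟩ k hh
    obtain ⟨δbar, hδbar⟩ := minty (fun δ => DB δ hh) (hmax hh) k
    obtain ⟨δf, ηf, hev, hδf, hηf⟩ := (hproto hh).1 δbar (k - δbar) hδbar
    refine ⟨δbar, ?_⟩
    rw [← hystar]
    show Tendsto (fun t : ℝ => Dres J qstar ystar ustar t k hh) (𝓝[>] (0:ℝ)) (𝓝 δbar)
    rw [tendsto_iff_dist_tendsto_zero]
    have hbnd : ∀ᶠ t in 𝓝[>] (0:ℝ), dist (Dres J qstar ystar ustar t k hh) δbar ≤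
        ‖k - (δf t + ηf t)‖ + dist (δf t) δbar := by
      filter_upwards [hev, evU hh, evpos] with t hmem hu ht
      have heq : δf t = Dres J qstar ystar ustar t (δf t + ηf t) hh :=
        Dres_uniq hB hJ hξstar ht hu hmem
      have h1 : dist (Dres J qstar ystar ustar t k hh) (δf t) ≤ ‖k - (δf t + ηf t)‖ := by
        rw [dist_eq_norm]
        conv_lhs => rw [heq]
        exact Dres_lip hB hJ ht (δf t + ηf t) k hh hu
      calc dist (Dres J qstar ystar ustar t k hh) δbar
          ≤ dist (Dres J qstar ystar ustar t k hh) (δf t) + dist (δf t) δbar :=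
            dist_triangle _ _ _
        _ ≤ _ := by linarith
    have hg : Tendsto (fun t => ‖k - (δf t + ηf t)‖ + dist (δf t) δbar)
        (𝓝[>] (0:ℝ)) (𝓝 0) := by
      have g1 : Tendsto (fun t => ‖k - (δf t + ηf t)‖) (𝓝[>] (0:ℝ)) (𝓝 0) := by
        have h0 : Tendsto (fun t => k - (δf t + ηf t)) (𝓝[>] (0:ℝ))
            (𝓝 (k - (δbar + (k - δbar)))) := tendsto_const_nhds.sub (hδf.add hηf)
        have h1 := h0.norm
        rw [show k - (δbar + (k - δbar)) = 0 from by abel, norm_zero] at h1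
        exact h1
      have g2 : Tendsto (fun t => dist (δf t) δbar) (𝓝[>] (0:ℝ)) (𝓝 0) := by
        rwa [tendsto_iff_dist_tendsto_zero] at hδf
      simpa using g1.add g2
    exact squeeze_zero' (Eventually.of_forall fun t => dist_nonneg) hbnd hg
end

section
/- Let Y be a real Hilbert space, U a real Banach space, y* ∈ Y, 𝒰 ⊆ U, and ε, μ_A, L_A > 0 such that A : Y × U → Y satisfies ⟨A(y₂,u) − A(y₁,u), y₂ − y₁⟩ ≥ μ_A‖y₂ − y₁‖² and ‖A(y₂,u) − A(y₁,u)‖ ≤ L_A‖y₂ − y₁‖ for all y₁, y₂ ∈ B_ε(y*) and u ∈ 𝒰, and let Φ : Y × U → Y satisfy ‖Φ(y₂,u) − Φ(y₁,u)‖ ≤ L_Φ‖y₂ − y₁‖ for all y₁, y₂ ∈ B_ε(y*), u ∈ 𝒰, with L_Φ ∈ [0,1). If L_Φ < μ_A/L_A, then there exist constants C > 0 and c̃ ∈ (0,1) (one may take C = μ_A/2 and c̃ = L_A L_Φ/μ_A) such that for all u ∈ 𝒰 and all y₁, y₂, z₁, z₂ ∈ B_ε(y*): ⟨A(z₂,u)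 − A(z₁,u), z₂ − Φ(y₂,u) − z₁ + Φ(y₁,u)⟩ ≥ C·(‖z₂ − z₁‖² − c̃²‖y₂ − y₁‖²). -/
open Filter Topology Metric Set
open scoped RealInnerProductSpace

/-- Lemma 4.4 / `lem:qge_small`, case (a).
If `A` is locally uniformly `μ_A`-strongly monotone and `L_A`-Lipschitz, `Φ` is uniformly
`L_Φ`-Lipschitz in its first variable and `L_Φ < μ_A/L_A`, then there are `C > 0` and
`c̃ ∈ (0,1)` (e.g. `C = μ_A/2`, `c̃ = L_A L_Φ/μ_A`) with
`⟪A(z₂,u) − A(z₁,u), z₂ − Φ(y₂,u) − z₁ + Φ(y₁,u)⟫ ≥ C(‖z₂ − z₁‖² − c̃²‖y₂ − y₁‖²)`. -/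
theorem stmt_10
    {Y : Type*} [NormedAddCommGroup Y] [InnerProductSpace ℝ Y] [CompleteSpace Y]
    {U : Type*} [NormedAddCommGroup U] [NormedSpace ℝ U] [CompleteSpace U]
    (A : Y → U → Y) (Φ : Y → U → Y) (𝒰 : Set U) (ystar : Y)
    (ε μA LA LΦ : ℝ) (hε : 0 < ε) (hμA : 0 < μA) (hLA : 0 < LA)
    (hmonoA : ∀ u ∈ 𝒰, ∀ y₁ ∈ closedBall ystar ε, ∀ y₂ ∈ closedBall ystar ε,
      μA * ‖y₂ - y₁‖ ^ 2 ≤ ⟪A y₂ u - A y₁ u, y₂ - y₁⟫)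
    (hlipA : ∀ u ∈ 𝒰, ∀ y₁ ∈ closedBall ystar ε, ∀ y₂ ∈ closedBall ystar ε,
      ‖A y₂ u - A y₁ u‖ ≤ LA * ‖y₂ - y₁‖)
    (hLΦ : LΦ ∈ Set.Ico (0 : ℝ) 1)
    (hlipΦ : ∀ u ∈ 𝒰, ∀ y₁ ∈ closedBall ystar ε, ∀ y₂ ∈ closedBall ystar ε,
      ‖Φ y₂ u - Φ y₁ u‖ ≤ LΦ * ‖y₂ - y₁‖)
    (hsmall : LΦ < μA / LA) :
    ∃ C > (0 : ℝ), ∃ ctilde ∈ Set.Ioo (0 : ℝ) 1,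
      ∀ u ∈ 𝒰, ∀ y₁ ∈ closedBall ystar ε, ∀ y₂ ∈ closedBall ystar ε,
        ∀ z₁ ∈ closedBall ystar ε, ∀ z₂ ∈ closedBall ystar ε,
          C * (‖z₂ - z₁‖ ^ 2 - ctilde ^ 2 * ‖y₂ - y₁‖ ^ 2)
            ≤ ⟪A z₂ u - A z₁ u, z₂ - Φ y₂ u - z₁ + Φ y₁ u⟫ := by

  have hc1 : LA * LΦ / μA < 1 := by
    rw [div_lt_one hμA]
    calc LA * LΦ < LA * (μA / LA) := by
          exact mul_lt_mul_of_pos_left hsmall hLA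
      _ = μA := by field_simp
  set c : ℝ := max (LA * LΦ / μA) (1/2) with hc
  refine ⟨μA / 2, by positivity, c, ⟨lt_of_lt_of_le (by norm_num) (le_max_right _ _),
    max_lt hc1 (by norm_num)⟩, ?_⟩
  intro u hu y₁ hy₁ y₂ hy₂ z₁ hz₁ z₂ hz₂
  have hmono := hmonoA u hu z₁ hz₁ z₂ hz₂
  have hlip := hlipA u hu z₁ hz₁ z₂ hz₂
  have hlipP := hlipΦ u hu y₁ hy₁ y₂ hy₂
  have hsplit : (z₂ - Φ y₂ u - z₁ + Φ y₁ u) = (z₂ - z₁) - (Φ y₂ u - Φ y₁ u) := by abel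
  rw [hsplit, inner_sub_right]
  have hCS : ⟪A z₂ u - A z₁ u, Φ y₂ u - Φ y₁ u⟫ ≤ (LA * ‖z₂ - z₁‖) * (LΦ * ‖y₂ - y₁‖) := by
    calc ⟪A z₂ u - A z₁ u, Φ y₂ u - Φ y₁ u⟫ ≤ ‖A z₂ u - A z₁ u‖ * ‖Φ y₂ u - Φ y₁ u‖ :=
          real_inner_le_norm _ _
      _ ≤ (LA * ‖z₂ - z₁‖) * (LΦ * ‖y₂ - y₁‖) := by
          apply mul_le_mul hlip hlipP (norm_nonneg _) (by positivity)
  have hcge : LA * LΦ ≤ μA * c := by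
    have : LA * LΦ / μA ≤ c := le_max_left _ _
    calc LA * LΦ = μA * (LA * LΦ / μA) := by field_simp
      _ ≤ μA * c := by exact mul_le_mul_of_nonneg_left this hμA.le
  have ha : (0:ℝ) ≤ ‖z₂ - z₁‖ := norm_nonneg _
  have hb : (0:ℝ) ≤ ‖y₂ - y₁‖ := norm_nonneg _
  nlinarith [sq_nonneg (‖z₂ - z₁‖ - c * ‖y₂ - y₁‖), mul_nonneg ha hb,
    mul_le_mul_of_nonneg_right hcge (mul_nonneg ha hb)]
end
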